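/- arXiv:1512.02381 — 6 statements merged into one kernel-verified Lean document; each statement's English description precedes it below -/
import Mathlib

section
/- Let G be a finite graph whose vertex set is partitioned into three sets C, N, R such that G has no edge between a vertex of C and a vertex of R. If the subgraph of G induced by N ∪ R has boxicity at most a and the subgraph of G induced by C ∪ N has boxicity at most b, then G has boxicity at most a + b + 1. -/
/-- `lo, hi : V → Fin d → ℝ` give a `d`-box representation of `G`. -/
def IsBoxRep {V : Type*} {d : ℕ} (G : SimpleGraph V) (lo hi : V → Fin d → ℝ) : Prop :=
  (∀ v, lo v ≤ hi v) ∧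
    ∀ u v : V, u ≠ v →
      (G.Adj u v ↔ (Set.Icc (lo u) (hi u) ∩ Set.Icc (lo v) (hi v)).Nonempty)

/-- `G` has a `d`-box representation. -/
def HasBoxRep {V : Type*} (G : SimpleGraph V) (d : ℕ) : Prop :=
  ∃ lo hi : V → Fin d → ℝ, IsBoxRep G lo hi

/-- The boxicity of `G`: the least `d` such that `G` has a `d`-box representation. -/
noncomputable def boxicity {V : Type*} (G : SimpleGraph V) : ℕ :=
  sInf {d | HasBoxRep G d}

lemma icc_inter_nonempty {d : ℕ} (l1 h1 l2 h2 : Fin d → ℝ) :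
    (Set.Icc l1 h1 ∩ Set.Icc l2 h2).Nonempty ↔ ∀ i, l1 i ⊔ l2 i ≤ h1 i ⊓ h2 i := by
  rw [Set.Icc_inter_Icc, Set.nonempty_Icc, Pi.le_def]
  simp

lemma hasBoxRep_mono {V : Type*} {G : SimpleGraph V} {d e : ℕ}
    (h : HasBoxRep G d) (hde : d ≤ e) : HasBoxRep G e := by
  obtain ⟨lo, hi, hle, hadj⟩ := h
  refine ⟨fun v i => if hi' : (i : ℕ) < d then lo v ⟨i, hi'⟩ else 0,
          fun v i => if hi' : (i : ℕ) < d then hi v ⟨i, hi'⟩ else 0, ?_, ?_⟩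
  · intro v
    rw [Pi.le_def]
    intro i
    by_cases hid : (i : ℕ) < d
    · simpa [hid] using hle v ⟨i, hid⟩
    · simp [hid]
  · intro u v huv
    rw [hadj u v huv, icc_inter_nonempty, icc_inter_nonempty]
    constructor
    · intro h i
      by_cases hid : (i : ℕ) < d
      · simpa [hid] using h ⟨i, hid⟩
      · simp [hid]
    · intro h j
      have := h (Fin.castLE hde j)
      simpa [j.2] using this

lemma exists_hasBoxRep {V : Type*} [Finite V] (G : SimpleGraph V) : ∃ d, HasBoxRep G d := by
  classical
  have := Fintype.ofFinite V
  set e := Fintype.equivFin (V × V) with he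
  refine ⟨Fintype.card (V × V),
    fun v i => if v = (e.symm i).2 ∧ ¬ G.Adj (e.symm i).1 (e.symm i).2 ∧ (e.symm i).1 ≠ (e.symm i).2
      then 1 else 0,
    fun v i => if v = (e.symm i).1 ∧ ¬ G.Adj (e.symm i).1 (e.symm i).2 ∧ (e.symm i).1 ≠ (e.symm i).2
      then 0 else 1, ?_, ?_⟩
  · intro v
    rw [Pi.le_def]
    intro i
    dsimp only
    split_ifs <;> norm_num <;> simp_all
  · intro u v huv
    rw [icc_inter_nonempty]
    constructor
    · intro hadj i
      have hadj' := hadj.symm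
      have hne := hadj.ne
      dsimp only
      split_ifs <;> norm_num <;> simp_all
    · intro h
      by_contra hnadj
      have := h (e (u, v))
      simp [huv, hnadj] at this
      linarith

lemma hasBoxRep_of_boxicity_le {V : Type*} [Finite V] {G : SimpleGraph V} {d : ℕ}
    (h : boxicity G ≤ d) : HasBoxRep G d := by
  have hne : {k | HasBoxRep G k}.Nonempty := exists_hasBoxRep G
  exact hasBoxRep_mono (Nat.sInf_mem hne) h

lemma forall_fin_add {m n : ℕ} (P : Fin (m + n) → Prop) :
    (∀ i, P i) ↔ (∀ i : Fin m, P (Fin.castAdd n i)) ∧ ∀ i : Fin n, P (Fin.natAdd m i) :=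
  ⟨fun h => ⟨fun i => h _, fun i => h _⟩, fun h i => Fin.addCases h.1 h.2 i⟩

lemma forall_fin_succ' {n : ℕ} (P : Fin (n + 1) → Prop) :
    (∀ i, P i) ↔ (∀ i : Fin n, P i.castSucc) ∧ P (Fin.last n) :=
  ⟨fun h => ⟨fun i => h _, h _⟩, fun h i => Fin.lastCases h.2 h.1 i⟩

/-- If the vertex set of `G` is partitioned into `C`, `N`, `R` with no edge between `C`
and `R`, the subgraph induced by `N ∪ R` has boxicity at most `a` and the subgraph
induced by `C ∪ N` has boxicity at most `b`, then `G` has boxicity at most `a + b + 1`. -/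
theorem boxicity_of_partition {V : Type*} [Fintype V] (G : SimpleGraph V)
    (C N R : Set V) (a b : ℕ)
    (hunion : C ∪ N ∪ R = Set.univ)
    (hCN : Disjoint C N) (hCR : Disjoint C R) (hNR : Disjoint N R)
    (hedge : ∀ u ∈ C, ∀ v ∈ R, ¬ G.Adj u v)
    (ha : boxicity (G.induce (N ∪ R)) ≤ a)
    (hb : boxicity (G.induce (C ∪ N)) ≤ b) :
    boxicity G ≤ a + b + 1 := by
  classical
  obtain ⟨lo1, hi1, h1le, h1adj⟩ := hasBoxRep_of_boxicity_le ha
  obtain ⟨lo2, hi2, h2le, h2adj⟩ := hasBoxRep_of_boxicity_le hb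
  obtain ⟨M1, hM1⟩ := Finite.exists_le
    (fun p : (↥(N ∪ R)) × Fin a => |lo1 p.1 p.2| ⊔ |hi1 p.1 p.2|)
  obtain ⟨M2, hM2⟩ := Finite.exists_le
    (fun p : (↥(C ∪ N)) × Fin b => |lo2 p.1 p.2| ⊔ |hi2 p.1 p.2|)
  set M : ℝ := M1 ⊔ M2 ⊔ 0 with hMdef
  have hM0 : (0:ℝ) ≤ M := le_sup_right
  have hb1 : ∀ (v : ↥(N ∪ R)) (i : Fin a), -M ≤ lo1 v i ∧ hi1 v i ≤ M := by
    intro v i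
    have h := hM1 (v, i)
    simp only at h
    have hl : |lo1 v i| ≤ M := le_trans (le_trans le_sup_left h) (le_trans le_sup_left le_sup_left)
    have hh : |hi1 v i| ≤ M := le_trans (le_trans le_sup_right h) (le_trans le_sup_left le_sup_left)
    exact ⟨(abs_le.mp hl).1, (abs_le.mp hh).2⟩
  have hb2 : ∀ (v : ↥(C ∪ N)) (i : Fin b), -M ≤ lo2 v i ∧ hi2 v i ≤ M := by
    intro v i
    have h := hM2 (v, i)
    simp only at h
    have hl : |lo2 v i| ≤ M := le_trans (le_trans le_sup_left h) (le_trans le_sup_right le_sup_left)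
    have hh : |hi2 v i| ≤ M := le_trans (le_trans le_sup_right h) (le_trans le_sup_right le_sup_left)
    exact ⟨(abs_le.mp hl).1, (abs_le.mp hh).2⟩
  -- membership facts
  have hCnN : ∀ v ∈ C, v ∉ N := fun v h => Set.disjoint_left.mp hCN h
  have hCnR : ∀ v ∈ C, v ∉ R := fun v h => Set.disjoint_left.mp hCR h
  have hNnC : ∀ v ∈ N, v ∉ C := fun v h => Set.disjoint_right.mp hCN h
  have hNnR : ∀ v ∈ N, v ∉ R := fun v h => Set.disjoint_left.mp hNR h
  have hRnC : ∀ v ∈ R, v ∉ C := fun v h => Set.disjoint_right.mp hCR h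
  have hRnN : ∀ v ∈ R, v ∉ N := fun v h => Set.disjoint_right.mp hNR h
  have hCnNR : ∀ v ∈ C, v ∉ N ∪ R := fun v h hm => hm.elim (hCnN v h) (hCnR v h)
  have hRnCN : ∀ v ∈ R, v ∉ C ∪ N := fun v h hm => hm.elim (hRnC v h) (hRnN v h)
  have hcases : ∀ v : V, v ∈ C ∨ v ∈ N ∨ v ∈ R := by
    intro v
    have : v ∈ C ∪ N ∪ R := hunion.symm ▸ Set.mem_univ v
    rcases this with (h | h) | h
    exacts [Or.inl h, Or.inr (Or.inl h), Or.inr (Or.inr h)]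
  -- box pieces
  set loA : V → Fin a → ℝ := fun v => if h : v ∈ N ∪ R then lo1 ⟨v, h⟩ else fun _ => -M with hloA
  set hiA : V → Fin a → ℝ := fun v => if h : v ∈ N ∪ R then hi1 ⟨v, h⟩ else fun _ => M with hhiA
  set loB : V → Fin b → ℝ := fun v => if h : v ∈ C ∪ N then lo2 ⟨v, h⟩ else fun _ => -M with hloB
  set hiB : V → Fin b → ℝ := fun v => if h : v ∈ C ∪ N then hi2 ⟨v, h⟩ else fun _ => M with hhiB
  set loL : V → ℝ := fun v => if v ∈ R then 1 else 0 with hloL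
  set hiL : V → ℝ := fun v => if v ∈ C then 0 else 1 with hhiL
  -- block conditions
  have condA_iff : ∀ u v : V, ∀ (hu : u ∈ N ∪ R) (hv : v ∈ N ∪ R), u ≠ v →
      ((∀ i, loA u i ⊔ loA v i ≤ hiA u i ⊓ hiA v i) ↔ G.Adj u v) := by
    intro u v hu hv hne
    have hne' : (⟨u, hu⟩ : ↥(N ∪ R)) ≠ ⟨v, hv⟩ := fun h => hne (congrArg Subtype.val h)
    have key := h1adj ⟨u, hu⟩ ⟨v, hv⟩ hne'
    rw [icc_inter_nonempty] at key
    simp only [hloA, hhiA, dif_pos hu, dif_pos hv]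
    rw [← key]
    simp [SimpleGraph.comap_adj]
  have condA_big : ∀ u v : V, (u ∉ N ∪ R ∨ v ∉ N ∪ R) →
      ∀ i, loA u i ⊔ loA v i ≤ hiA u i ⊓ hiA v i := by
    intro u v hor i
    by_cases hu : u ∈ N ∪ R
    · by_cases hv : v ∈ N ∪ R
      · tauto
      · obtain ⟨h1, h2⟩ := hb1 ⟨u, hu⟩ i
        have h3 := h1le ⟨u, hu⟩ i
        simp only [hloA, hhiA, dif_pos hu, dif_neg hv]
        refine sup_le (le_inf h3 ?_) (le_inf ?_ ?_) <;> linarith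
    · by_cases hv : v ∈ N ∪ R
      · obtain ⟨h1, h2⟩ := hb1 ⟨v, hv⟩ i
        have h3 := h1le ⟨v, hv⟩ i
        simp only [hloA, hhiA, dif_neg hu, dif_pos hv]
        refine sup_le (le_inf ?_ ?_) (le_inf ?_ h3) <;> linarith
      · simp only [hloA, hhiA, dif_neg hu, dif_neg hv]
        rw [sup_idem, inf_idem]
        linarith
  have condB_iff : ∀ u v : V, ∀ (hu : u ∈ C ∪ N) (hv : v ∈ C ∪ N), u ≠ v →
      ((∀ i, loB u i ⊔ loB v i ≤ hiB u i ⊓ hiB v i) ↔ G.Adj u v) := by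
    intro u v hu hv hne
    have hne' : (⟨u, hu⟩ : ↥(C ∪ N)) ≠ ⟨v, hv⟩ := fun h => hne (congrArg Subtype.val h)
    have key := h2adj ⟨u, hu⟩ ⟨v, hv⟩ hne'
    rw [icc_inter_nonempty] at key
    simp only [hloB, hhiB, dif_pos hu, dif_pos hv]
    rw [← key]
    simp [SimpleGraph.comap_adj]
  have condB_big : ∀ u v : V, (u ∉ C ∪ N ∨ v ∉ C ∪ N) →
      ∀ i, loB u i ⊔ loB v i ≤ hiB u i ⊓ hiB v i := by
    intro u v hor i
    by_cases hu : u ∈ C ∪ N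
    · by_cases hv : v ∈ C ∪ N
      · tauto
      · obtain ⟨h1, h2⟩ := hb2 ⟨u, hu⟩ i
        have h3 := h2le ⟨u, hu⟩ i
        simp only [hloB, hhiB, dif_pos hu, dif_neg hv]
        refine sup_le (le_inf h3 ?_) (le_inf ?_ ?_) <;> linarith
    · by_cases hv : v ∈ C ∪ N
      · obtain ⟨h1, h2⟩ := hb2 ⟨v, hv⟩ i
        have h3 := h2le ⟨v, hv⟩ i
        simp only [hloB, hhiB, dif_neg hu, dif_pos hv]
        refine sup_le (le_inf ?_ ?_) (le_inf ?_ h3) <;> linarith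
      · simp only [hloB, hhiB, dif_neg hu, dif_neg hv]
        rw [sup_idem, inf_idem]
        linarith
  -- index-splitting helper
  have hsplit : ∀ P : Fin (a + (b + 1)) → Prop, (∀ i, P i) ↔
      ((∀ i : Fin a, P (Fin.castAdd (b + 1) i)) ∧ (∀ i : Fin b, P (Fin.natAdd a i.castSucc)) ∧
        P (Fin.natAdd a (Fin.last b))) := by
    intro P
    rw [forall_fin_add (P := P), forall_fin_succ' (P := fun j => P (Fin.natAdd a j))]
  apply Nat.sInf_le
  show HasBoxRep G (a + (b + 1))
  refine ⟨fun v => Fin.append (loA v) (Fin.snoc (loB v) (loL v)),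
          fun v => Fin.append (hiA v) (Fin.snoc (hiB v) (hiL v)), ?_, ?_⟩
  · intro v
    rw [Pi.le_def, hsplit]
    refine ⟨?_, ?_, ?_⟩
    · intro i
      simp only [Fin.append_left]
      by_cases h : v ∈ N ∪ R
      · simp only [hloA, hhiA, dif_pos h]
        exact h1le ⟨v, h⟩ i
      · simp only [hloA, hhiA, dif_neg h]
        linarith
    · intro i
      simp only [Fin.append_right, Fin.snoc_castSucc]
      by_cases h : v ∈ C ∪ N
      · simp only [hloB, hhiB, dif_pos h]
        exact h2le ⟨v, h⟩ i
      · simp only [hloB, hhiB, dif_neg h]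
        linarith
    · simp only [Fin.append_right, Fin.snoc_last]
      simp only [hloL, hhiL]
      split_ifs <;> norm_num <;> tauto
  · intro u v hne
    rw [icc_inter_nonempty, hsplit]
    simp only [Fin.append_left, Fin.append_right, Fin.snoc_castSucc, Fin.snoc_last,
      Pi.sup_apply, Pi.inf_apply]
    have hLok : ∀ x y : V, x ∉ C ∨ y ∉ R → (y ∉ C ∨ x ∉ R) → loL x ⊔ loL y ≤ hiL x ⊓ hiL y := by
      intro x y h1 h2
      simp only [hloL, hhiL]
      split_ifs <;> norm_num <;> tauto
    rcases hcases u with hu | hu | hu <;> rcases hcases v with hv | hv | hv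
    · -- C C
      have hu' : u ∈ C ∪ N := Or.inl hu
      have hv' : v ∈ C ∪ N := Or.inl hv
      constructor
      · intro hadj
        exact ⟨condA_big u v (Or.inl (hCnNR u hu)), fun i => ((condB_iff u v hu' hv' hne).mpr hadj) i,
          hLok u v (Or.inr (hCnR v hv)) (Or.inr (hCnR u hu))⟩
      · rintro ⟨-, hB, -⟩
        exact (condB_iff u v hu' hv' hne).mp hB
    · -- C N
      have hu' : u ∈ C ∪ N := Or.inl hu
      have hv' : v ∈ C ∪ N := Or.inr hv
      constructor
      · intro hadj
        exact ⟨condA_big u v (Or.inl (hCnNR u hu)), fun i => ((condB_iff u v hu' hv' hne).mpr hadj) i,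
          hLok u v (Or.inr (hNnR v hv)) (Or.inr (hCnR u hu))⟩
      · rintro ⟨-, hB, -⟩
        exact (condB_iff u v hu' hv' hne).mp hB
    · -- C R
      constructor
      · intro hadj
        exact absurd hadj (hedge u hu v hv)
      · rintro ⟨-, -, hL⟩
        exfalso
        simp only [hloL, hhiL] at hL
        rw [if_pos hv, if_pos hu] at hL
        have h1 : (1:ℝ) ≤ loL u ⊔ 1 := le_sup_right
        have := le_trans le_sup_right (le_trans hL inf_le_left)
        linarith
    · -- N C
      have hu' : u ∈ C ∪ N := Or.inr hu
      have hv' : v ∈ C ∪ N := Or.inl hv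
      constructor
      · intro hadj
        exact ⟨condA_big u v (Or.inr (hCnNR v hv)), fun i => ((condB_iff u v hu' hv' hne).mpr hadj) i,
          hLok u v (Or.inl (hNnC u hu)) (Or.inr (hNnR u hu))⟩
      · rintro ⟨-, hB, -⟩
        exact (condB_iff u v hu' hv' hne).mp hB
    · -- N N
      have hu' : u ∈ N ∪ R := Or.inl hu
      have hv' : v ∈ N ∪ R := Or.inl hv
      have hu'' : u ∈ C ∪ N := Or.inr hu
      have hv'' : v ∈ C ∪ N := Or.inr hv
      constructor
      · intro hadj
        exact ⟨fun i => ((condA_iff u v hu' hv' hne).mpr hadj) i,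
          fun i => ((condB_iff u v hu'' hv'' hne).mpr hadj) i,
          hLok u v (Or.inl (hNnC u hu)) (Or.inl (hNnC v hv))⟩
      · rintro ⟨hA, -, -⟩
        exact (condA_iff u v hu' hv' hne).mp hA
    · -- N R
      have hu' : u ∈ N ∪ R := Or.inl hu
      have hv' : v ∈ N ∪ R := Or.inr hv
      constructor
      · intro hadj
        exact ⟨fun i => ((condA_iff u v hu' hv' hne).mpr hadj) i,
          condB_big u v (Or.inr (hRnCN v hv)),
          hLok u v (Or.inl (hNnC u hu)) (Or.inl (hRnC v hv))⟩
      · rintro ⟨hA, -, -⟩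
        exact (condA_iff u v hu' hv' hne).mp hA
    · -- R C
      constructor
      · intro hadj
        exact absurd hadj.symm (hedge v hv u hu)
      · rintro ⟨-, -, hL⟩
        exfalso
        simp only [hloL, hhiL] at hL
        rw [if_pos hu, if_pos hv] at hL
        have := le_trans le_sup_left (le_trans hL inf_le_right)
        linarith
    · -- R N
      have hu' : u ∈ N ∪ R := Or.inr hu
      have hv' : v ∈ N ∪ R := Or.inl hv
      constructor
      · intro hadj
        exact ⟨fun i => ((condA_iff u v hu' hv' hne).mpr hadj) i,
          condB_big u v (Or.inl (hRnCN u hu)),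
          hLok u v (Or.inl (hRnC u hu)) (Or.inl (hNnC v hv))⟩
      · rintro ⟨hA, -, -⟩
        exact (condA_iff u v hu' hv' hne).mp hA
    · -- R R
      have hu' : u ∈ N ∪ R := Or.inr hu
      have hv' : v ∈ N ∪ R := Or.inr hv
      constructor
      · intro hadj
        exact ⟨fun i => ((condA_iff u v hu' hv' hne).mpr hadj) i,
          condB_big u v (Or.inl (hRnCN u hu)),
          hLok u v (Or.inl (hRnC u hu)) (Or.inl (hRnC v hv))⟩
      · rintro ⟨hA, -, -⟩
        exact (condA_iff u v hu' hv' hne).mp hA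
end

section
/- Let G be a finite graph and let (ℐ₁, ℐ₂, ℐ₃) be a strict 3-box representation of G (each vertex v being mapped to the 3-box whose i-th side is its interval in ℐᵢ) such that the family of rectangles (ℐ₁, ℐ₂) obtained by projecting to the first two coordinates is a strict 2-box representation of G. Then every triangle uvw of G such that the intervals of u, v, w in ℐ₃ are strictly overlapping has an empty inner corner in (ℐ₁, ℐ₂, ℐ₃). -/
/-- The open box with corners `a` and `b` in `ℝ^d` (the interior of the closed box
`Set.Icc a b` when the box is non-degenerate). -/
def openBox {d : ℕ} (a b : Fin d → ℝ) : Set (Fin d → ℝ) :=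
  Set.univ.pi fun i => Set.Ioo (a i) (b i)

/-- `lo, hi : V → Fin d → ℝ` give a strict `d`-box representation of `G`:
(1) every box is non-degenerate, (2) the interiors of the boxes are pairwise disjoint,
(3) two distinct vertices are adjacent iff their boxes intersect, and (4) the
intersection of the boxes of two adjacent vertices is a non-degenerate `(d-1)`-box,
i.e. it is a single point in exactly one coordinate and has positive length in the
remaining coordinates. -/
def IsStrictBoxRep {V : Type*} {d : ℕ} (G : SimpleGraph V) (lo hi : V → Fin d → ℝ) :
    Prop :=
  (∀ v i, lo v i < hi v i) ∧
  (∀ u v : V, u ≠ v → Disjoint (openBox (lo u) (hi u)) (openBox (lo v) (hi v))) ∧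
  (∀ u v : V, u ≠ v →
    (G.Adj u v ↔ (Set.Icc (lo u) (hi u) ∩ Set.Icc (lo v) (hi v)).Nonempty)) ∧
  (∀ u v : V, G.Adj u v →
    ∃ i, max (lo u i) (lo v i) = min (hi u i) (hi v i) ∧
      ∀ j, j ≠ i → max (lo u j) (lo v j) < min (hi u j) (hi v j))

/-- The intervals `[a₁,b₁]`, `[a₂,b₂]`, `[a₃,b₃]` are strictly overlapping: their common
intersection is an interval of positive length and none of them is contained in another
one. -/
def StrictlyOverlapping (a₁ b₁ a₂ b₂ a₃ b₃ : ℝ) : Prop :=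
  max (max a₁ a₂) a₃ < min (min b₁ b₂) b₃ ∧
  ¬ Set.Icc a₁ b₁ ⊆ Set.Icc a₂ b₂ ∧ ¬ Set.Icc a₂ b₂ ⊆ Set.Icc a₁ b₁ ∧
  ¬ Set.Icc a₁ b₁ ⊆ Set.Icc a₃ b₃ ∧ ¬ Set.Icc a₃ b₃ ⊆ Set.Icc a₁ b₁ ∧
  ¬ Set.Icc a₂ b₂ ⊆ Set.Icc a₃ b₃ ∧ ¬ Set.Icc a₃ b₃ ⊆ Set.Icc a₂ b₂

/-- The triangle `uvw` has an empty inner corner in the strict `3`-box representation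
given by `lo, hi`: there is a non-degenerate `3`-box `C = Icc ca cb` whose interior is
disjoint from the interiors of all boxes of the representation, a corner `c` of `C`, and
three `2`-dimensional faces of `C` containing `c` (each obtained by freezing one
coordinate of `C` at the corresponding value of `c`) that are exactly the intersections
of `C` with the boxes of `u`, `v` and `w` respectively. -/
def EmptyInnerCorner {V : Type*} (lo hi : V → Fin 3 → ℝ) (u v w : V) : Prop :=
  ∃ ca cb : Fin 3 → ℝ, (∀ i, ca i < cb i) ∧
    (∀ x : V, Disjoint (openBox ca cb) (openBox (lo x) (hi x))) ∧
    ∃ c : Fin 3 → ℝ, (∀ i, c i = ca i ∨ c i = cb i) ∧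
      ∃ iu iv iw : Fin 3,
        (Set.Icc ca cb ∩ Set.Icc (lo u) (hi u) =
          {x ∈ Set.Icc ca cb | x iu = c iu}) ∧
        (Set.Icc ca cb ∩ Set.Icc (lo v) (hi v) =
          {x ∈ Set.Icc ca cb | x iv = c iv}) ∧
        (Set.Icc ca cb ∩ Set.Icc (lo w) (hi w) =
          {x ∈ Set.Icc ca cb | x iw = c iw})

lemma helperA {a b s e' : ℝ} (hab : a ≤ b)
    (h : (s = b ∧ b < e') ∨ (s = a ∧ e' < a)) :
    Set.Icc (min s e') (max s e') ∩ Set.Icc a b = {s} := by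
  rcases h with ⟨rfl, h⟩ | ⟨rfl, h⟩
  · rw [min_eq_left h.le, max_eq_right h.le]
    ext x
    simp only [Set.mem_inter_iff, Set.mem_Icc, Set.mem_singleton_iff]
    constructor
    · rintro ⟨⟨h1, _⟩, _, h4⟩; exact le_antisymm h4 h1
    · rintro rfl; exact ⟨⟨le_refl _, h.le⟩, hab, le_refl _⟩
  · rw [min_eq_right h.le, max_eq_left h.le]
    ext x
    simp only [Set.mem_inter_iff, Set.mem_Icc, Set.mem_singleton_iff]
    constructor
    · rintro ⟨⟨_, h2⟩, h3, _⟩; exact le_antisymm h2 h3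
    · rintro rfl; exact ⟨⟨h.le, le_refl _⟩, le_refl _, hab⟩

lemma helperB {a b s e' : ℝ} (h1 : s ∈ Set.Icc a b) (h2 : e' ∈ Set.Icc a b) :
    Set.Icc (min s e') (max s e') ⊆ Set.Icc a b :=
  Set.Icc_subset_Icc (le_min h1.1 h2.1) (max_le h1.2 h2.2)

lemma helperC {a b s e' : ℝ} (h1 : s ∈ Set.Icc a b) (h2 : e' ∈ Set.Icc a b) :
    Set.Ioo (min s e') (max s e') ⊆ Set.Ioo a b :=
  Set.Ioo_subset_Ioo (le_min h1.1 h2.1) (max_le h1.2 h2.2)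

lemma helperD {a b s e' : ℝ}
    (h : (s = b ∧ b < e') ∨ (s = a ∧ e' < a)) :
    Disjoint (Set.Ioo (min s e') (max s e')) (Set.Ioo a b) := by
  rw [Set.disjoint_left]
  rintro x hx hx'
  rcases h with ⟨rfl, h⟩ | ⟨rfl, h⟩
  · rw [min_eq_left h.le] at hx; exact absurd hx'.2 (not_lt.2 hx.1.le)
  · rw [max_eq_left h.le] at hx; exact absurd hx'.1 (not_lt.2 hx.2.le)

lemma faceLemma (c e A B : Fin 3 → ℝ) (hAB : ∀ k, A k < B k) (i : Fin 3)
    (h1 : ∀ k, k ≠ i → c k ∈ Set.Icc (A k) (B k) ∧ e k ∈ Set.Icc (A k) (B k))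
    (h2 : (c i = B i ∧ B i < e i) ∨ (c i = A i ∧ e i < A i)) :
    Set.Icc (fun k => min (c k) (e k)) (fun k => max (c k) (e k)) ∩ Set.Icc A B
      = {x ∈ Set.Icc (fun k => min (c k) (e k)) (fun k => max (c k) (e k)) | x i = c i} := by
  ext P
  simp only [Set.mem_inter_iff, Set.mem_Icc, Set.mem_setOf_eq, Pi.le_def]
  constructor
  · rintro ⟨⟨hl, hr⟩, hA, hB⟩
    refine ⟨⟨hl, hr⟩, ?_⟩
    have hmem : P i ∈ Set.Icc (min (c i) (e i)) (max (c i) (e i)) ∩ Set.Icc (A i) (B i) :=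
      ⟨⟨hl i, hr i⟩, hA i, hB i⟩
    rw [helperA (hAB i).le h2] at hmem
    exact hmem
  · rintro ⟨⟨hl, hr⟩, hPi⟩
    refine ⟨⟨hl, hr⟩, fun k => ?_, fun k => ?_⟩
    · by_cases hk : k = i
      · subst hk; rw [hPi]
        rcases h2 with ⟨hc, _⟩ | ⟨hc, _⟩ <;> rw [hc] <;> exact (hAB k).le
      · exact (helperB (h1 k hk).1 (h1 k hk).2 ⟨hl k, hr k⟩).1
    · by_cases hk : k = i
      · subst hk; rw [hPi]
        rcases h2 with ⟨hc, _⟩ | ⟨hc, _⟩ <;> rw [hc] <;> exact (hAB k).le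
      · exact (helperB (h1 k hk).1 (h1 k hk).2 ⟨hl k, hr k⟩).2

lemma castSucc_ne_two : ∀ m : Fin 2, (m.castSucc : Fin 3) ≠ 2 := by decide

lemma mid {V : Type*} (lo hi : V → Fin 3 → ℝ)
    (hndg : ∀ v k, lo v k < hi v k)
    (hdisj : ∀ a b : V, a ≠ b →
      Disjoint (openBox (fun m : Fin 2 => lo a m.castSucc) (fun m : Fin 2 => hi a m.castSucc))
        (openBox (fun m : Fin 2 => lo b m.castSucc) (fun m : Fin 2 => hi b m.castSucc)))
    (u v w q : V) (c e : Fin 3 → ℝ) (hne : ∀ k, c k ≠ e k)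
    (iu iv iw : Fin 3)
    (hu1 : ∀ k, k ≠ iu → c k ∈ Set.Icc (lo u k) (hi u k) ∧ e k ∈ Set.Icc (lo u k) (hi u k))
    (hu2 : (c iu = hi u iu ∧ hi u iu < e iu) ∨ (c iu = lo u iu ∧ e iu < lo u iu))
    (hv1 : ∀ k, k ≠ iv → c k ∈ Set.Icc (lo v k) (hi v k) ∧ e k ∈ Set.Icc (lo v k) (hi v k))
    (hv2 : (c iv = hi v iv ∧ hi v iv < e iv) ∨ (c iv = lo v iv ∧ e iv < lo v iv))
    (hw1 : ∀ k, k ≠ iw → c k ∈ Set.Icc (lo w k) (hi w k) ∧ e k ∈ Set.Icc (lo w k) (hi w k))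
    (hw2 : (c iw = hi w iw ∧ hi w iw < e iw) ∨ (c iw = lo w iw ∧ e iw < lo w iw))
    (hq1 : ∀ k : Fin 3, k ≠ 2 → c k ∈ Set.Icc (lo q k) (hi q k) ∧ e k ∈ Set.Icc (lo q k) (hi q k))
    (hq2 : (c 2 = hi q 2 ∧ hi q 2 < e 2) ∨ (c 2 = lo q 2 ∧ e 2 < lo q 2)) :
    EmptyInnerCorner lo hi u v w := by
  refine ⟨fun k => min (c k) (e k), fun k => max (c k) (e k),
    fun k => min_lt_max.2 (hne k), ?_, c, fun k => ?_, iu, iv, iw,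
    faceLemma c e (lo u) (hi u) (hndg u) iu hu1 hu2,
    faceLemma c e (lo v) (hi v) (hndg v) iv hv1 hv2,
    faceLemma c e (lo w) (hi w) (hndg w) iw hw1 hw2⟩
  · intro xv
    by_cases hxq : xv = q
    · subst hxq
      rw [Set.disjoint_left]
      intro P hP hP'
      have h1 : P 2 ∈ Set.Ioo (min (c 2) (e 2)) (max (c 2) (e 2)) := Set.mem_univ_pi.1 hP 2
      have h2 : P 2 ∈ Set.Ioo (lo xv 2) (hi xv 2) := Set.mem_univ_pi.1 hP' 2
      exact Set.disjoint_left.1 (helperD hq2) h1 h2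
    · have hd := hdisj q xv (Ne.symm hxq)
      rw [Set.disjoint_left]
      intro P hP hP'
      have hPq : (fun m : Fin 2 => P m.castSucc) ∈
          openBox (fun m : Fin 2 => lo q m.castSucc) (fun m : Fin 2 => hi q m.castSucc) := by
        rw [openBox, Set.mem_univ_pi]
        intro m
        exact helperC (hq1 _ (castSucc_ne_two m)).1 (hq1 _ (castSucc_ne_two m)).2
          (Set.mem_univ_pi.1 hP m.castSucc)
      have hPx : (fun m : Fin 2 => P m.castSucc) ∈
          openBox (fun m : Fin 2 => lo xv m.castSucc) (fun m : Fin 2 => hi xv m.castSucc) := by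
        rw [openBox, Set.mem_univ_pi]
        intro m
        exact Set.mem_univ_pi.1 hP' m.castSucc
      exact Set.disjoint_left.1 hd hPq hPx
  · rcases le_total (c k) (e k) with h | h
    · exact Or.inl (min_eq_left h).symm
    · exact Or.inr (max_eq_left h).symm

lemma fin3_tri : ∀ i j k : Fin 3, i ≠ j → i ≠ 2 → j ≠ 2 → (k = i ∨ k = j ∨ k = 2) := by
  decide

lemma final {V : Type*} (lo hi : V → Fin 3 → ℝ)
    (hndg : ∀ v k, lo v k < hi v k)
    (hdisj : ∀ a b : V, a ≠ b →
      Disjoint (openBox (fun m : Fin 2 => lo a m.castSucc) (fun m : Fin 2 => hi a m.castSucc))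
        (openBox (fun m : Fin 2 => lo b m.castSucc) (fun m : Fin 2 => hi b m.castSucc)))
    (p x y : V) (i j : Fin 3) (hij : i ≠ j) (hi2 : i ≠ 2) (hj2 : j ≠ 2)
    (s t z0 : ℝ)
    (Ci : (s = hi p i ∧ lo x i ≤ s ∧ s < hi x i ∧ lo y i ≤ s ∧ s < hi y i) ∨
          (s = lo p i ∧ lo x i < s ∧ s ≤ hi x i ∧ lo y i < s ∧ s ≤ hi y i))
    (Cj : (t = hi y j ∧ lo p j ≤ t ∧ t < hi p j ∧ lo x j ≤ t ∧ t < hi x j) ∨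
          (t = lo y j ∧ lo p j < t ∧ t ≤ hi p j ∧ lo x j < t ∧ t ≤ hi x j))
    (Cz : (z0 = hi x 2 ∧ lo p 2 ≤ z0 ∧ z0 < hi p 2 ∧ lo y 2 ≤ z0 ∧ z0 < hi y 2) ∨
          (z0 = lo x 2 ∧ lo p 2 < z0 ∧ z0 ≤ hi p 2 ∧ lo y 2 < z0 ∧ z0 ≤ hi y 2)) :
    EmptyInnerCorner lo hi p y x := by
  obtain ⟨ri, hri, Fi⟩ : ∃ r, 0 < r ∧ ∀ ε : ℝ, 0 < ε → ε ≤ r → ∃ δ,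
      ((s = hi p i ∧ hi p i < s + δ) ∨ (s = lo p i ∧ s + δ < lo p i)) ∧
      (lo x i ≤ s ∧ s ≤ hi x i) ∧ (lo x i ≤ s + δ ∧ s + δ ≤ hi x i) ∧
      (lo y i ≤ s ∧ s ≤ hi y i) ∧ (lo y i ≤ s + δ ∧ s + δ ≤ hi y i) := by
    rcases Ci with ⟨h1, h2, h3, h4, h5⟩ | ⟨h1, h2, h3, h4, h5⟩
    · refine ⟨min (hi x i - s) (hi y i - s), by simp only [lt_min_iff]; constructor <;> linarith,
        fun ε hε hεr => ⟨ε, Or.inl ⟨h1, by linarith⟩, ⟨h2, h3.le⟩,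
          ⟨by linarith, by have := min_le_left (hi x i - s) (hi y i - s); linarith⟩,
          ⟨h4, h5.le⟩, ⟨by linarith, by have := min_le_right (hi x i - s) (hi y i - s); linarith⟩⟩⟩
    · refine ⟨min (s - lo x i) (s - lo y i), by simp only [lt_min_iff]; constructor <;> linarith,
        fun ε hε hεr => ⟨-ε, Or.inr ⟨h1, by linarith⟩, ⟨h2.le, h3⟩,
          ⟨by have := min_le_left (s - lo x i) (s - lo y i); linarith, by linarith⟩,
          ⟨h4.le, h5⟩, ⟨by have := min_le_right (s - lo x i) (s - lo y i); linarith, by linarith⟩⟩⟩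
  obtain ⟨rj, hrj, Fj⟩ : ∃ r, 0 < r ∧ ∀ ε : ℝ, 0 < ε → ε ≤ r → ∃ δ,
      ((t = hi y j ∧ hi y j < t + δ) ∨ (t = lo y j ∧ t + δ < lo y j)) ∧
      (lo p j ≤ t ∧ t ≤ hi p j) ∧ (lo p j ≤ t + δ ∧ t + δ ≤ hi p j) ∧
      (lo x j ≤ t ∧ t ≤ hi x j) ∧ (lo x j ≤ t + δ ∧ t + δ ≤ hi x j) := by
    rcases Cj with ⟨h1, h2, h3, h4, h5⟩ | ⟨h1, h2, h3, h4, h5⟩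
    · refine ⟨min (hi p j - t) (hi x j - t), by simp only [lt_min_iff]; constructor <;> linarith,
        fun ε hε hεr => ⟨ε, Or.inl ⟨h1, by linarith⟩, ⟨h2, h3.le⟩,
          ⟨by linarith, by have := min_le_left (hi p j - t) (hi x j - t); linarith⟩,
          ⟨h4, h5.le⟩, ⟨by linarith, by have := min_le_right (hi p j - t) (hi x j - t); linarith⟩⟩⟩
    · refine ⟨min (t - lo p j) (t - lo x j), by simp only [lt_min_iff]; constructor <;> linarith,
        fun ε hε hεr => ⟨-ε, Or.inr ⟨h1, by linarith⟩, ⟨h2.le, h3⟩,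
          ⟨by have := min_le_left (t - lo p j) (t - lo x j); linarith, by linarith⟩,
          ⟨h4.le, h5⟩, ⟨by have := min_le_right (t - lo p j) (t - lo x j); linarith, by linarith⟩⟩⟩
  obtain ⟨rz, hrz, Fz⟩ : ∃ r, 0 < r ∧ ∀ ε : ℝ, 0 < ε → ε ≤ r → ∃ δ,
      ((z0 = hi x 2 ∧ hi x 2 < z0 + δ) ∨ (z0 = lo x 2 ∧ z0 + δ < lo x 2)) ∧
      (lo p 2 ≤ z0 ∧ z0 ≤ hi p 2) ∧ (lo p 2 ≤ z0 + δ ∧ z0 + δ ≤ hi p 2) ∧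
      (lo y 2 ≤ z0 ∧ z0 ≤ hi y 2) ∧ (lo y 2 ≤ z0 + δ ∧ z0 + δ ≤ hi y 2) := by
    rcases Cz with ⟨h1, h2, h3, h4, h5⟩ | ⟨h1, h2, h3, h4, h5⟩
    · refine ⟨min (hi p 2 - z0) (hi y 2 - z0), by simp only [lt_min_iff]; constructor <;> linarith,
        fun ε hε hεr => ⟨ε, Or.inl ⟨h1, by linarith⟩, ⟨h2, h3.le⟩,
          ⟨by linarith, by have := min_le_left (hi p 2 - z0) (hi y 2 - z0); linarith⟩,
          ⟨h4, h5.le⟩, ⟨by linarith, by have := min_le_right (hi p 2 - z0) (hi y 2 - z0); linarith⟩⟩⟩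
    · refine ⟨min (z0 - lo p 2) (z0 - lo y 2), by simp only [lt_min_iff]; constructor <;> linarith,
        fun ε hε hεr => ⟨-ε, Or.inr ⟨h1, by linarith⟩, ⟨h2.le, h3⟩,
          ⟨by have := min_le_left (z0 - lo p 2) (z0 - lo y 2); linarith, by linarith⟩,
          ⟨h4.le, h5⟩, ⟨by have := min_le_right (z0 - lo p 2) (z0 - lo y 2); linarith, by linarith⟩⟩⟩
  set ε := min ri (min rj rz) with hεdef
  have hε0 : 0 < ε := lt_min hri (lt_min hrj hrz)
  obtain ⟨δi, Wi, Mxi, Mxi', Myi, Myi'⟩ := Fi ε hε0 (min_le_left _ _)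
  obtain ⟨δj, Wj, Mpj, Mpj', Mxj, Mxj'⟩ := Fj ε hε0 ((min_le_right _ _).trans (min_le_left _ _))
  obtain ⟨δz, Wz, Mpz, Mpz', Myz, Myz'⟩ := Fz ε hε0 ((min_le_right _ _).trans (min_le_right _ _))
  classical
  set c : Fin 3 → ℝ := fun k => if k = i then s else if k = j then t else z0 with hc
  set e : Fin 3 → ℝ := fun k => if k = i then s + δi else if k = j then t + δj else z0 + δz with he
  have hci : c i = s := by rw [hc]; simp
  have hcj : c j = t := by rw [hc]; simp [Ne.symm hij]
  have hc2 : c (2 : Fin 3) = z0 := by rw [hc]; simp [Ne.symm hi2, Ne.symm hj2]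
  have hei : e i = s + δi := by rw [he]; simp
  have hej : e j = t + δj := by rw [he]; simp [Ne.symm hij]
  have he2 : e (2 : Fin 3) = z0 + δz := by rw [he]; simp [Ne.symm hi2, Ne.symm hj2]
  have hδi : δi ≠ 0 := by
    rcases Wi with ⟨h1, h⟩ | ⟨h1, h⟩ <;> intro h0 <;> rw [h0, add_zero] at h <;> linarith
  have hδj : δj ≠ 0 := by
    rcases Wj with ⟨h1, h⟩ | ⟨h1, h⟩ <;> intro h0 <;> rw [h0, add_zero] at h <;> linarith
  have hδz : δz ≠ 0 := by
    rcases Wz with ⟨h1, h⟩ | ⟨h1, h⟩ <;> intro h0 <;> rw [h0, add_zero] at h <;> linarith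
  have hne : ∀ k, c k ≠ e k := by
    intro k
    rcases fin3_tri i j k hij hi2 hj2 with rfl | rfl | rfl
    · rw [hci, hei]; intro hcon; apply hδi; linarith
    · rw [hcj, hej]; intro hcon; apply hδj; linarith
    · rw [hc2, he2]; intro hcon; apply hδz; linarith
  refine mid lo hi hndg hdisj p y x x c e hne i j 2 ?_ ?_ ?_ ?_ ?_ ?_ ?_ ?_
  · intro k hk
    rcases fin3_tri i j k hij hi2 hj2 with rfl | rfl | rfl
    · exact absurd rfl hk
    · rw [hcj, hej]; exact ⟨Set.mem_Icc.2 Mpj, Set.mem_Icc.2 Mpj'⟩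
    · rw [hc2, he2]; exact ⟨Set.mem_Icc.2 Mpz, Set.mem_Icc.2 Mpz'⟩
  · rw [hci, hei]; exact Wi
  · intro k hk
    rcases fin3_tri i j k hij hi2 hj2 with rfl | rfl | rfl
    · rw [hci, hei]; exact ⟨Set.mem_Icc.2 Myi, Set.mem_Icc.2 Myi'⟩
    · exact absurd rfl hk
    · rw [hc2, he2]; exact ⟨Set.mem_Icc.2 Myz, Set.mem_Icc.2 Myz'⟩
  · rw [hcj, hej]; exact Wj
  · intro k hk
    rcases fin3_tri i j k hij hi2 hj2 with rfl | rfl | rfl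
    · rw [hci, hei]; exact ⟨Set.mem_Icc.2 Mxi, Set.mem_Icc.2 Mxi'⟩
    · rw [hcj, hej]; exact ⟨Set.mem_Icc.2 Mxj, Set.mem_Icc.2 Mxj'⟩
    · exact absurd rfl hk
  · rw [hc2, he2]; exact Wz
  · intro k hk
    rcases fin3_tri i j k hij hi2 hj2 with rfl | rfl | rfl
    · rw [hci, hei]; exact ⟨Set.mem_Icc.2 Mxi, Set.mem_Icc.2 Mxi'⟩
    · rw [hcj, hej]; exact ⟨Set.mem_Icc.2 Mxj, Set.mem_Icc.2 Mxj'⟩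
    · exact absurd rfl hk
  · rw [hc2, he2]; exact Wz

lemma eic_swap12 {V : Type*} {lo hi : V → Fin 3 → ℝ} {a b c : V}
    (h : EmptyInnerCorner lo hi a b c) : EmptyInnerCorner lo hi b a c := by
  obtain ⟨ca, cb, h1, h2, cc, h3, iu, iv, iw, hu, hv, hw⟩ := h
  exact ⟨ca, cb, h1, h2, cc, h3, iv, iu, iw, hv, hu, hw⟩

lemma eic_swap23 {V : Type*} {lo hi : V → Fin 3 → ℝ} {a b c : V}
    (h : EmptyInnerCorner lo hi a b c) : EmptyInnerCorner lo hi a c b := by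
  obtain ⟨ca, cb, h1, h2, cc, h3, iu, iv, iw, hu, hv, hw⟩ := h
  exact ⟨ca, cb, h1, h2, cc, h3, iu, iw, iv, hu, hw, hv⟩

lemma pivotCase {V : Type*} (lo hi : V → Fin 3 → ℝ)
    (hndg : ∀ v k, lo v k < hi v k)
    (hdisj : ∀ a b : V, a ≠ b →
      Disjoint (openBox (fun m : Fin 2 => lo a m.castSucc) (fun m : Fin 2 => hi a m.castSucc))
        (openBox (fun m : Fin 2 => lo b m.castSucc) (fun m : Fin 2 => hi b m.castSucc)))
    (p q r : V) (i j : Fin 3) (hij : i ≠ j) (hi2 : i ≠ 2) (hj2 : j ≠ 2)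
    (Wpq : hi p i = lo q i ∨ hi q i = lo p i)
    (Wpr : hi p i = lo r i ∨ hi r i = lo p i)
    (Wqr : hi q j = lo r j ∨ hi r j = lo q j)
    (Opq : ∀ m, m ≠ i → lo p m < hi q m ∧ lo q m < hi p m)
    (Opr : ∀ m, m ≠ i → lo p m < hi r m ∧ lo r m < hi p m)
    (Oqr : ∀ m, m ≠ j → lo q m < hi r m ∧ lo r m < hi q m)
    (Zpq : (lo p 2 < lo q 2 ∧ hi p 2 < hi q 2) ∨ (lo q 2 < lo p 2 ∧ hi q 2 < hi p 2))
    (Zpr : (lo p 2 < lo r 2 ∧ hi p 2 < hi r 2) ∨ (lo r 2 < lo p 2 ∧ hi r 2 < hi p 2))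
    (Zqr : (lo q 2 < lo r 2 ∧ hi q 2 < hi r 2) ∨ (lo r 2 < lo q 2 ∧ hi r 2 < hi q 2))
    (Hcross : ∀ a b : V, (a = p ∨ a = q ∨ a = r) → (b = p ∨ b = q ∨ b = r) →
      lo a 2 < hi b 2) :
    EmptyInnerCorner lo hi p q r := by
  -- symmetric wall data in coordinate i
  have CiSym : ∃ s, (s = hi p i ∧ lo q i ≤ s ∧ s < hi q i ∧ lo r i ≤ s ∧ s < hi r i) ∨
      (s = lo p i ∧ lo q i < s ∧ s ≤ hi q i ∧ lo r i < s ∧ s ≤ hi r i) := by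
    rcases Wpq with hw1 | hw1
    · rcases Wpr with hw2 | hw2
      · refine ⟨hi p i, Or.inl ⟨rfl, le_of_eq hw1.symm, ?_, le_of_eq hw2.symm, ?_⟩⟩
        · rw [hw1]; exact hndg q i
        · rw [hw2]; exact hndg r i
      · exfalso
        have h1 := (Oqr i hij).1
        rw [hw2] at h1
        rw [← hw1] at h1
        linarith [hndg p i]
    · rcases Wpr with hw2 | hw2
      · exfalso
        have h1 := (Oqr i hij).2
        rw [hw1] at h1
        rw [← hw2] at h1
        linarith [hndg p i]
      · refine ⟨lo p i, Or.inr ⟨rfl, ?_, le_of_eq hw1.symm, ?_, le_of_eq hw2.symm⟩⟩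
        · rw [← hw1]; exact hndg q i
        · rw [← hw2]; exact hndg r i
  obtain ⟨s, hs⟩ := CiSym
  -- choose x (z-extremal among q, r) and y
  obtain ⟨x, y, hxy, z0, Cz⟩ : ∃ x y, ((x = q ∧ y = r) ∨ (x = r ∧ y = q)) ∧ ∃ z0,
      ((z0 = hi x 2 ∧ lo p 2 ≤ z0 ∧ z0 < hi p 2 ∧ lo y 2 ≤ z0 ∧ z0 < hi y 2) ∨
       (z0 = lo x 2 ∧ lo p 2 < z0 ∧ z0 ≤ hi p 2 ∧ lo y 2 < z0 ∧ z0 ≤ hi y 2)) := by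
    rcases Zqr with ⟨hz1, hz2⟩ | ⟨hz1, hz2⟩
    · rcases Zpq with ⟨hp1, hp2⟩ | ⟨hp1, hp2⟩
      · -- p below q below r : r is z-max
        exact ⟨r, q, Or.inr ⟨rfl, rfl⟩, lo r 2, Or.inr ⟨rfl, hp1.trans hz1,
          (Hcross r p (by simp) (by simp)).le, hz1, (Hcross r q (by simp) (by simp)).le⟩⟩
      · -- q is z-min
        exact ⟨q, r, Or.inl ⟨rfl, rfl⟩, hi q 2, Or.inl ⟨rfl,
          (Hcross p q (by simp) (by simp)).le, hp2,
          (Hcross r q (by simp) (by simp)).le, hz2⟩⟩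
    · rcases Zpr with ⟨hp1, hp2⟩ | ⟨hp1, hp2⟩
      · -- p below r below q : q is z-max
        exact ⟨q, r, Or.inl ⟨rfl, rfl⟩, lo q 2, Or.inr ⟨rfl, hp1.trans hz1,
          (Hcross q p (by simp) (by simp)).le, hz1, (Hcross q r (by simp) (by simp)).le⟩⟩
      · -- r is z-min
        exact ⟨r, q, Or.inr ⟨rfl, rfl⟩, hi r 2, Or.inl ⟨rfl,
          (Hcross p r (by simp) (by simp)).le, hp2,
          (Hcross q r (by simp) (by simp)).le, hz2⟩⟩
  rcases hxy with ⟨rfl, rfl⟩ | ⟨rfl, rfl⟩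
  · -- x = q, y = r; final gives EIC p r q
    have Ci : (s = hi p i ∧ lo x i ≤ s ∧ s < hi x i ∧ lo y i ≤ s ∧ s < hi y i) ∨
        (s = lo p i ∧ lo x i < s ∧ s ≤ hi x i ∧ lo y i < s ∧ s ≤ hi y i) := by
      rcases hs with ⟨h1, h2, h3, h4, h5⟩ | ⟨h1, h2, h3, h4, h5⟩
      · exact Or.inl ⟨h1, h2, h3, h4, h5⟩
      · exact Or.inr ⟨h1, h2, h3, h4, h5⟩
    have Cj : (∃ t, (t = hi y j ∧ lo p j ≤ t ∧ t < hi p j ∧ lo x j ≤ t ∧ t < hi x j) ∨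
        (t = lo y j ∧ lo p j < t ∧ t ≤ hi p j ∧ lo x j < t ∧ t ≤ hi x j)) := by
      rcases Wqr with hw | hw
      · -- hi x j = lo y j : wall t = lo y j, box points down into x
        refine ⟨lo y j, Or.inr ⟨rfl, ?_, ?_, ?_, le_of_eq hw.symm⟩⟩
        · have := (Opq j (Ne.symm hij)).1; rw [hw] at this; exact this
        · exact ((Opr j (Ne.symm hij)).2).le
        · rw [← hw]; exact hndg x j
      · -- hi y j = lo x j : wall t = hi y j, box points up into x
        refine ⟨hi y j, Or.inl ⟨rfl, ((Opr j (Ne.symm hij)).1).le, ?_, le_of_eq hw.symm, ?_⟩⟩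
        · have := (Opq j (Ne.symm hij)).2; rw [← hw] at this; exact this
        · rw [hw]; exact hndg x j
    obtain ⟨t, Cj⟩ := Cj
    exact eic_swap23 (final lo hi hndg hdisj p x y i j hij hi2 hj2 s t z0 Ci Cj Cz)
  · -- x = r, y = q; final gives EIC p q r directly
    have Ci : (s = hi p i ∧ lo x i ≤ s ∧ s < hi x i ∧ lo y i ≤ s ∧ s < hi y i) ∨
        (s = lo p i ∧ lo x i < s ∧ s ≤ hi x i ∧ lo y i < s ∧ s ≤ hi y i) := by
      rcases hs with ⟨h1, h2, h3, h4, h5⟩ | ⟨h1, h2, h3, h4, h5⟩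
      · exact Or.inl ⟨h1, h4, h5, h2, h3⟩
      · exact Or.inr ⟨h1, h4, h5, h2, h3⟩
    have Cj : (∃ t, (t = hi y j ∧ lo p j ≤ t ∧ t < hi p j ∧ lo x j ≤ t ∧ t < hi x j) ∨
        (t = lo y j ∧ lo p j < t ∧ t ≤ hi p j ∧ lo x j < t ∧ t ≤ hi x j)) := by
      rcases Wqr with hw | hw
      · -- hi y j = lo x j : wall t = hi y j, box points up into x
        refine ⟨hi y j, Or.inl ⟨rfl, ((Opq j (Ne.symm hij)).1).le, ?_, le_of_eq hw.symm, ?_⟩⟩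
        · have := (Opr j (Ne.symm hij)).2; rw [← hw] at this; exact this
        · rw [hw]; exact hndg x j
      · -- hi x j = lo y j : wall t = lo y j, box points down into x
        refine ⟨lo y j, Or.inr ⟨rfl, ?_, ?_, ?_, le_of_eq hw.symm⟩⟩
        · have := (Opr j (Ne.symm hij)).1; rw [hw] at this; exact this
        · exact ((Opq j (Ne.symm hij)).2).le
        · rw [← hw]; exact hndg x j
    obtain ⟨t, Cj⟩ := Cj
    exact final lo hi hndg hdisj p x y i j hij hi2 hj2 s t z0 Ci Cj Cz

lemma nonNest {a1 b1 a2 b2 : ℝ} (h1 : a1 ≤ b1) (h2 : a2 ≤ b2)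
    (n1 : ¬ Set.Icc a1 b1 ⊆ Set.Icc a2 b2) (n2 : ¬ Set.Icc a2 b2 ⊆ Set.Icc a1 b1) :
    (a1 < a2 ∧ b1 < b2) ∨ (a2 < a1 ∧ b2 < b1) := by
  rw [Set.Icc_subset_Icc_iff h1] at n1
  rw [Set.Icc_subset_Icc_iff h2] at n2
  push_neg at n1 n2
  rcases lt_trichotomy a1 a2 with h | h | h
  · exact Or.inl ⟨h, n2 h.le⟩
  · exact absurd (n2 h.le) (not_lt.2 (n1 h.ge).le)
  · exact Or.inr ⟨h, n1 h.le⟩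

lemma notAllEq {a b c d e f : ℝ} (hab : a < b) (hcd : c < d) (hef : e < f)
    (w1 : b = c ∨ d = a) (w2 : d = e ∨ f = c) (w3 : b = e ∨ f = a) : False := by
  rcases w1 with w1 | w1 <;> rcases w2 with w2 | w2 <;> rcases w3 with w3 | w3 <;> linarith

lemma fin3ne2 : ∀ k : Fin 3, k ≠ 2 → k = 0 ∨ k = 1 := by decide

lemma pairData {V : Type*} (lo hi : V → Fin 3 → ℝ)
    (hndg : ∀ v k, lo v k < hi v k) (x y : V)
    (hf : ∃ i, max (lo x i) (lo y i) = min (hi x i) (hi y i) ∧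
      ∀ j, j ≠ i → max (lo x j) (lo y j) < min (hi x j) (hi y j))
    (hz1 : lo x 2 < hi y 2) (hz2 : lo y 2 < hi x 2) :
    ∃ k : Fin 3, k ≠ 2 ∧ (hi x k = lo y k ∨ hi y k = lo x k) ∧
      ∀ m, m ≠ k → lo x m < hi y m ∧ lo y m < hi x m := by
  obtain ⟨k, hk, hrest⟩ := hf
  have hk2 : k ≠ 2 := by
    rintro rfl
    have hlt : max (lo x 2) (lo y 2) < min (hi x 2) (hi y 2) := by
      rw [max_lt_iff, lt_min_iff, lt_min_iff]
      exact ⟨⟨hndg x 2, hz1⟩, hz2, hndg y 2⟩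
    exact absurd hk (ne_of_lt hlt)
  refine ⟨k, hk2, ?_, ?_⟩
  · rcases max_cases (lo x k) (lo y k) with ⟨e1, _⟩ | ⟨e1, _⟩ <;>
      rcases min_cases (hi x k) (hi y k) with ⟨e2, _⟩ | ⟨e2, _⟩ <;>
      rw [e1, e2] at hk
    · exact absurd hk (ne_of_lt (hndg x k))
    · exact Or.inr hk.symm
    · exact Or.inl hk.symm
    · exact absurd hk (ne_of_lt (hndg y k))
  · intro m hm
    have := hrest m hm
    constructor <;>
      linarith [le_max_left (lo x m) (lo y m), le_max_right (lo x m) (lo y m),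
        min_le_left (hi x m) (hi y m), min_le_right (hi x m) (hi y m)]


/-- If `(ℐ₁, ℐ₂, ℐ₃)` is a strict `3`-box representation of `G` whose projection on the
first two coordinates is a strict `2`-box representation of `G`, then every triangle
`uvw` of `G` whose intervals in `ℐ₃` are strictly overlapping has an empty inner corner
in `(ℐ₁, ℐ₂, ℐ₃)`. -/
theorem triangle_emptyInnerCorner {V : Type*} [Fintype V] (G : SimpleGraph V)
    (lo hi : V → Fin 3 → ℝ)
    (h3 : IsStrictBoxRep G lo hi)
    (h2 : IsStrictBoxRep G (fun v (i : Fin 2) => lo v i.castSucc)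
      (fun v (i : Fin 2) => hi v i.castSucc))
    (u v w : V) (huv : G.Adj u v) (hvw : G.Adj v w) (huw : G.Adj u w)
    (hov : StrictlyOverlapping (lo u 2) (hi u 2) (lo v 2) (hi v 2) (lo w 2) (hi w 2)) :
    EmptyInnerCorner lo hi u v w := by
  obtain ⟨hndg, -, -, hface⟩ := h3
  have hdisj : ∀ a b : V, a ≠ b →
      Disjoint (openBox (fun m : Fin 2 => lo a m.castSucc) (fun m : Fin 2 => hi a m.castSucc))
        (openBox (fun m : Fin 2 => lo b m.castSucc) (fun m : Fin 2 => hi b m.castSucc)) :=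
    h2.2.1
  obtain ⟨hov1, n12, n21, n13, n31, n23, n32⟩ := hov
  rw [max_lt_iff, max_lt_iff, lt_min_iff, lt_min_iff, lt_min_iff, lt_min_iff,
    lt_min_iff, lt_min_iff] at hov1
  obtain ⟨⟨⟨⟨l11, l12⟩, l13⟩, ⟨⟨l21, l22⟩, l23⟩⟩, ⟨⟨l31, l32⟩, l33⟩⟩ := hov1
  have Hcross3 : ∀ a b : V, (a = u ∨ a = v ∨ a = w) → (b = u ∨ b = v ∨ b = w) →
      lo a 2 < hi b 2 := by
    rintro a b (rfl | rfl | rfl) (rfl | rfl | rfl) <;> assumption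
  have Zuv := nonNest (hndg u 2).le (hndg v 2).le n12 n21
  have Zuw := nonNest (hndg u 2).le (hndg w 2).le n13 n31
  have Zvw := nonNest (hndg v 2).le (hndg w 2).le n23 n32
  obtain ⟨kuv, kuv2, Wuv, Ouv⟩ := pairData lo hi hndg u v (hface u v huv) l12 l21
  obtain ⟨kvw, kvw2, Wvw, Ovw⟩ := pairData lo hi hndg v w (hface v w hvw) l23 l32
  obtain ⟨kuw, kuw2, Wuw, Ouw⟩ := pairData lo hi hndg u w (hface u w huw) l13 l31
  have hpermv : ∀ a : V, (a = v ∨ a = u ∨ a = w) → (a = u ∨ a = v ∨ a = w) := by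
    intro a h
    rcases h with h | h | h
    · exact Or.inr (Or.inl h)
    · exact Or.inl h
    · exact Or.inr (Or.inr h)
  have hpermw : ∀ a : V, (a = w ∨ a = u ∨ a = v) → (a = u ∨ a = v ∨ a = w) := by
    intro a h
    rcases h with h | h | h
    · exact Or.inr (Or.inr h)
    · exact Or.inl h
    · exact Or.inr (Or.inl h)
  rcases fin3ne2 kuv kuv2 with h1 | h1 <;> subst h1 <;>
    rcases fin3ne2 kvw kvw2 with h2' | h2' <;> subst h2' <;>
    rcases fin3ne2 kuw kuw2 with h3' | h3' <;> subst h3'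
  · exact (notAllEq (hndg u 0) (hndg v 0) (hndg w 0) Wuv Wvw Wuw).elim
  · -- kuv = kvw = 0, kuw = 1 : pivot v, i = 0, j = 1
    exact eic_swap12 (pivotCase lo hi hndg hdisj v u w 0 1 (by decide) (by decide) (by decide)
      (Or.symm Wuv) Wvw Wuw (fun m hm => (Ouv m hm).symm) Ovw Ouw
      (Or.symm Zuv) Zvw Zuw
      (fun a b ha hb => Hcross3 a b (hpermv a ha) (hpermv b hb)))
  · -- kuv = 0, kvw = 1, kuw = 0 : pivot u, i = 0, j = 1
    exact pivotCase lo hi hndg hdisj u v w 0 1 (by decide) (by decide) (by decide)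
      Wuv Wuw Wvw Ouv Ouw Ovw Zuv Zuw Zvw Hcross3
  · -- kuv = 0, kvw = 1, kuw = 1 : pivot w, i = 1, j = 0
    exact eic_swap23 (eic_swap12 (pivotCase lo hi hndg hdisj w u v 1 0 (by decide) (by decide)
      (by decide) (Or.symm Wuw) (Or.symm Wvw) Wuv
      (fun m hm => (Ouw m hm).symm) (fun m hm => (Ovw m hm).symm) Ouv
      (Or.symm Zuw) (Or.symm Zvw) Zuv
      (fun a b ha hb => Hcross3 a b (hpermw a ha) (hpermw b hb))))
  · -- kuv = 1, kvw = 0, kuw = 0 : pivot w, i = 0, j = 1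
    exact eic_swap23 (eic_swap12 (pivotCase lo hi hndg hdisj w u v 0 1 (by decide) (by decide)
      (by decide) (Or.symm Wuw) (Or.symm Wvw) Wuv
      (fun m hm => (Ouw m hm).symm) (fun m hm => (Ovw m hm).symm) Ouv
      (Or.symm Zuw) (Or.symm Zvw) Zuv
      (fun a b ha hb => Hcross3 a b (hpermw a ha) (hpermw b hb))))
  · -- kuv = 1, kvw = 0, kuw = 1 : pivot u, i = 1, j = 0
    exact pivotCase lo hi hndg hdisj u v w 1 0 (by decide) (by decide) (by decide)
      Wuv Wuw Wvw Ouv Ouw Ovw Zuv Zuw Zvw Hcross3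
  · -- kuv = 1, kvw = 1, kuw = 0 : pivot v, i = 1, j = 0
    exact eic_swap12 (pivotCase lo hi hndg hdisj v u w 1 0 (by decide) (by decide) (by decide)
      (Or.symm Wuv) Wvw Wuw (fun m hm => (Ouv m hm).symm) Ovw Ouw
      (Or.symm Zuv) Zvw Zuw
      (fun a b ha hb => Hcross3 a b (hpermv a ha) (hpermv b hb)))
  · exact (notAllEq (hndg u 1) (hndg v 1) (hndg w 1) Wuv Wvw Wuw).elim
end

section
/- Every finite 5-path-degenerate graph G has a 3-segment representation. -/
/-- The relative interior of the axis-parallel segment `Set.Icc a b` in `ℝ³`: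
the points of the segment that are strictly between the endpoints in the (unique)
coordinate where the segment has positive length. -/
def segRelInt (a b : Fin 3 → ℝ) : Set (Fin 3 → ℝ) :=
  Set.Icc a b ∩ {x | ∀ i, a i < b i → a i < x i ∧ x i < b i}

/-- `lo, hi : V → Fin 3 → ℝ` give a `3`-segment representation of `G`: every vertex is
mapped to an axis-parallel segment of positive length (a product of three closed
intervals, exactly two of which are single points), two distinct vertices are adjacent
iff the corresponding segments intersect, the relative interiors of any two distinct
segments are disjoint, and no two distinct segments lie on a common line. -/
def IsSegRep {V : Type*} (G : SimpleGraph V) (lo hi : V → Fin 3 → ℝ) : Prop :=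
  (∀ v, ∃ i, lo v i < hi v i ∧ ∀ j, j ≠ i → lo v j = hi v j) ∧
  (∀ u v : V, u ≠ v →
    (G.Adj u v ↔ (Set.Icc (lo u) (hi u) ∩ Set.Icc (lo v) (hi v)).Nonempty)) ∧
  (∀ u v : V, u ≠ v → Disjoint (segRelInt (lo u) (hi u)) (segRelInt (lo v) (hi v))) ∧
  (∀ u v : V, u ≠ v → ¬ Collinear ℝ (Set.Icc (lo u) (hi u) ∪ Set.Icc (lo v) (hi v)))

/-- `G` is `p`-path-degenerate: every subgraph with at least one vertex contains a
vertex of degree at most 1, or a path with `p` internal vertices each of degree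
exactly 2 in the subgraph. -/
def PPathDegenerate {V : Type*} (p : ℕ) (G : SimpleGraph V) : Prop :=
  ∀ H : G.Subgraph, H.verts.Nonempty →
    (∃ v ∈ H.verts, (H.neighborSet v).ncard ≤ 1) ∨
    (∃ x : Fin (p + 2) → V, Function.Injective x ∧ (∀ i, x i ∈ H.verts) ∧
      (∀ i : Fin (p + 1), H.Adj (x i.castSucc) (x i.succ)) ∧
      (∀ i : Fin (p + 2), 0 < (i : ℕ) → (i : ℕ) < p + 1 →
        (H.neighborSet (x i)).ncard = 2))

/-!
Induction on the vertex set. A nonempty set of vertices contains a vertex with at most one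
neighbour in it, or the five internal vertices of a path with no further neighbours in it;
represent the rest and extend. An isolated vertex gets a segment whose fixed coordinates are
values not used so far; a leaf gets a short segment attached at a generic point of its
neighbour's segment; the internal vertices of the path get two such attached segments at the two
ends of the path, joined by a staircase of three segments whose corners are in general position.
Nonadjacent segments are then separated by a common fixed coordinate in which they differ, except
for a segment lying in the plane of the host of an attached one, which the attached segment
misses because it is short.
-/

namespace SegRep

open Set Function

local notation "ℝ³" => Fin 3 → ℝ

lemma exists_ne_ne (a b : Fin 3) : ∃ c, c ≠ a ∧ c ≠ b := by
  revert a b; decide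

lemma eq_or_eq_or_eq {a b c : Fin 3} (hab : a ≠ b) (hac : a ≠ c) (hbc : b ≠ c) (j : Fin 3) :
    j = a ∨ j = b ∨ j = c := by
  revert a b c j; decide

def IsAxisSeg {ι : Type*} (l h : ι → ℝ) (d : ι) : Prop :=
  l d < h d ∧ ∀ j, j ≠ d → l j = h j

namespace IsAxisSeg

variable {ι : Type*} {l h l' h' x : ι → ℝ} {d d' j : ι}

lemma le (hs : IsAxisSeg l h d) : l ≤ h := by
  intro j
  by_cases hj : j = d
  · exact hj ▸ hs.1.le
  · exact (hs.2 j hj).le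

lemma apply_eq (hs : IsAxisSeg l h d) (hj : j ≠ d) (hx : x ∈ Icc l h) : x j = l j :=
  le_antisymm ((hx.2 j).trans (hs.2 j hj).ge) (hx.1 j)

lemma unique (hs : IsAxisSeg l h d) (hs' : IsAxisSeg l h d') : d = d' := by
  by_contra hne
  exact hs.1.ne (hs'.2 d hne)

lemma disjoint (hs : IsAxisSeg l h d) (hs' : IsAxisSeg l' h' d') (hj : j ≠ d) (hj' : j ≠ d')
    (hne : l j ≠ l' j) : Disjoint (Icc l h) (Icc l' h') :=
  Set.disjoint_left.2 fun _ hx hx' => hne ((hs.apply_eq hj hx).symm.trans (hs'.apply_eq hj' hx'))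

lemma inter_eq_singleton (hs : IsAxisSeg l h d) (hs' : IsAxisSeg l' h' d') (hd : d ≠ d')
    (hx : x ∈ Icc l h) (hx' : x ∈ Icc l' h') : Icc l h ∩ Icc l' h' = {x} := by
  refine eq_singleton_iff_unique_mem.2 ⟨⟨hx, hx'⟩, fun y ⟨hy, hy'⟩ => funext fun j => ?_⟩
  by_cases hj : j = d'
  · subst hj
    rw [hs.apply_eq hd.symm hy, hs.apply_eq hd.symm hx]
  · rw [hs'.apply_eq hj hy', hs'.apply_eq hj hx']

lemma apply_eq_of_collinear {T : Set (ι → ℝ)} (hs : IsAxisSeg l h d)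
    (hc : Collinear ℝ (Icc l h ∪ T)) (hx : x ∈ T) (hj : j ≠ d) : x j = l j := by
  have hmem := hc.mem_affineSpan_of_mem_of_ne (Or.inl ⟨le_rfl, hs.le⟩)
    (Or.inl ⟨hs.le, le_rfl⟩) (Or.inr hx) (fun e => hs.1.ne (congrFun e d))
  obtain ⟨r, rfl⟩ := mem_affineSpan_pair_iff_exists_lineMap_eq.1 hmem
  simp [AffineMap.lineMap_apply, hs.2 j hj]

lemma not_collinear_of_ne (hs : IsAxisSeg l h d) (hs' : IsAxisSeg l' h' d') (hd : d ≠ d') :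
    ¬ Collinear ℝ (Icc l h ∪ Icc l' h') := fun hc => hs'.1.ne <|
  (hs.apply_eq_of_collinear hc ⟨le_rfl, hs'.le⟩ hd.symm).trans
    (hs.apply_eq_of_collinear hc ⟨hs'.le, le_rfl⟩ hd.symm).symm

lemma not_collinear_of_apply_ne (hs : IsAxisSeg l h d) (hs' : IsAxisSeg l' h' d') (hj : j ≠ d)
    (hne : l j ≠ l' j) : ¬ Collinear ℝ (Icc l h ∪ Icc l' h') := fun hc =>
  hne (hs.apply_eq_of_collinear hc ⟨le_rfl, hs'.le⟩ hj).symm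

lemma collinear [DecidableEq ι] (hs : IsAxisSeg l h d) (hs' : IsAxisSeg l' h' d)
    (heq : ∀ j, j ≠ d → l j = l' j) : Collinear ℝ (Icc l h ∪ Icc l' h') := by
  refine (collinear_iff_of_mem (s := Icc l h ∪ Icc l' h') (Or.inl ⟨le_rfl, hs.le⟩)).2
    ⟨Pi.single d 1, fun x hx => ⟨x d - l d, ?_⟩⟩
  funext j
  by_cases hj : j = d
  · subst hj; simp
  · have : x j = l j := by
      rcases hx with hx | hx
      · exact hs.apply_eq hj hx
      · exact (hs'.apply_eq hj hx).trans (heq j hj).symm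
    simp [hj, this]

lemma of_inf_sup {P Q : ι → ℝ} (hPQ : P d ≠ Q d) (heq : ∀ j, j ≠ d → P j = Q j) :
    IsAxisSeg (P ⊓ Q) (P ⊔ Q) d :=
  ⟨inf_lt_sup.2 hPQ, fun j hj => by simp [heq j hj]⟩

lemma of_update [DecidableEq ι] {P : ι → ℝ} {r : ℝ} (hr : P d < r) :
    IsAxisSeg P (update P d r) d :=
  ⟨by simpa using hr, fun j hj => by simp [hj]⟩

end IsAxisSeg

lemma IsAxisSeg.notMem_segRelInt {l h x : ℝ³} {d : Fin 3} (hs : IsAxisSeg l h d)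
    (hx : x d = l d ∨ x d = h d) : x ∉ segRelInt l h := fun hmem => by
  have := hmem.2 d hs.1
  rcases hx with e | e <;> rw [e] at this <;> linarith [this.1, this.2]

lemma apply_eq_inf_or_sup {ι : Type*} (P Q : ι → ℝ) (d : ι) :
    P d = (P ⊓ Q) d ∨ P d = (P ⊔ Q) d := by
  rcases le_total (P d) (Q d) with h | h
  · exact Or.inl (min_eq_left h).symm
  · exact Or.inr (max_eq_left h).symm

def Compatible (adj : Prop) (l h l' h' : ℝ³) : Prop :=
  (adj ↔ (Icc l h ∩ Icc l' h').Nonempty) ∧ Disjoint (segRelInt l h) (segRelInt l' h') ∧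
    ¬ Collinear ℝ (Icc l h ∪ Icc l' h')

namespace Compatible

variable {adj : Prop} {l h l' h' x : ℝ³} {d d' j : Fin 3}

lemma symm (hc : Compatible adj l h l' h') : Compatible adj l' h' l h :=
  ⟨by rw [inter_comm]; exact hc.1, hc.2.1.symm, by rw [union_comm]; exact hc.2.2⟩

lemma of_disjoint (hadj : ¬ adj) (hd : Disjoint (Icc l h) (Icc l' h'))
    (hnc : ¬ Collinear ℝ (Icc l h ∪ Icc l' h')) : Compatible adj l h l' h' :=
  ⟨iff_of_false hadj (not_nonempty_iff_eq_empty.2 hd.inter_eq),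
    hd.mono inter_subset_left inter_subset_left, hnc⟩

lemma of_apply_ne (hadj : ¬ adj) (hs : IsAxisSeg l h d) (hs' : IsAxisSeg l' h' d') (hj : j ≠ d)
    (hj' : j ≠ d') (hne : l j ≠ l' j) : Compatible adj l h l' h' :=
  of_disjoint hadj (hs.disjoint hs' hj hj' hne) (hs.not_collinear_of_apply_ne hs' hj hne)

lemma of_touch (hadj : adj) (hs : IsAxisSeg l h d) (hs' : IsAxisSeg l' h' d') (hd : d ≠ d')
    (hx : x ∈ Icc l h) (hx' : x ∈ Icc l' h') (hxr : x ∉ segRelInt l h) :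
    Compatible adj l h l' h' := by
  have hI := hs.inter_eq_singleton hs' hd hx hx'
  refine ⟨iff_of_true hadj (hI ▸ singleton_nonempty x), Set.disjoint_left.2 fun y hy hy' => ?_,
    hs.not_collinear_of_ne hs' hd⟩
  have hyx : y ∈ Icc l h ∩ Icc l' h' := ⟨hy.1, hy'.1⟩
  rw [hI, mem_singleton_iff] at hyx
  exact hxr (hyx ▸ hy)

end Compatible

variable {V : Type*} {G : SimpleGraph V}

def IsSegRepOn (G : SimpleGraph V) (s : Finset V) (lo hi : V → ℝ³) : Prop :=
  (∀ v ∈ s, ∃ d, IsAxisSeg (lo v) (hi v) d) ∧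
    ∀ u ∈ s, ∀ v ∈ s, u ≠ v → Compatible (G.Adj u v) (lo u) (hi u) (lo v) (hi v)

lemma isSegRepOn_empty (lo hi : V → ℝ³) : IsSegRepOn G ∅ lo hi := by
  simp [IsSegRepOn]

namespace IsSegRepOn

variable {s : Finset V} {lo hi : V → ℝ³}

lemma isSegRep [Fintype V] (hrep : IsSegRepOn G Finset.univ lo hi) : IsSegRep G lo hi :=
  ⟨fun v => hrep.1 v (Finset.mem_univ v),
    fun u v huv => (hrep.2 u (Finset.mem_univ u) v (Finset.mem_univ v) huv).1,
    fun u v huv => (hrep.2 u (Finset.mem_univ u) v (Finset.mem_univ v) huv).2.1,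
    fun u v huv => (hrep.2 u (Finset.mem_univ u) v (Finset.mem_univ v) huv).2.2⟩

variable [DecidableEq V]

lemma insert_of_compatible (hrep : IsSegRepOn G s lo hi) {v : V} (hv : v ∉ s) {l h : ℝ³}
    {d : Fin 3} (hseg : IsAxisSeg l h d)
    (hcomp : ∀ w ∈ s, Compatible (G.Adj v w) l h (lo w) (hi w)) :
    IsSegRepOn G (insert v s) (update lo v l) (update hi v h) := by
  have hne : ∀ w ∈ s, w ≠ v := fun w hw => ne_of_mem_of_not_mem hw hv
  refine ⟨fun w hw => ?_, fun a ha b hb hab => ?_⟩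
  · rcases Finset.mem_insert.1 hw with rfl | hw
    · exact ⟨d, by simpa using hseg⟩
    · simpa [hne w hw] using hrep.1 w hw
  rcases Finset.mem_insert.1 ha with rfl | ha' <;> rcases Finset.mem_insert.1 hb with rfl | hb'
  · exact absurd rfl hab
  · simpa [hne b hb'] using hcomp b hb'
  · rw [G.adj_comm]
    simpa [hne a ha'] using (hcomp a ha').symm
  · simpa [hne a ha', hne b hb'] using hrep.2 a ha' b hb' hab

lemma insert_inf_sup (hrep : IsSegRepOn G s lo hi) {y : V} (hy : y ∉ s) {P Q : ℝ³} {d : Fin 3}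
    (hPQ : P d ≠ Q d) (heq : ∀ j, j ≠ d → P j = Q j)
    (hadj : ∀ w ∈ s, G.Adj y w → ∃ e, IsAxisSeg (lo w) (hi w) e ∧ e ≠ d ∧
      (P ∈ Icc (lo w) (hi w) ∨ Q ∈ Icc (lo w) (hi w)))
    (hsep : ∀ w ∈ s, ¬ G.Adj y w → ∃ e, IsAxisSeg (lo w) (hi w) e ∧
      ∃ j, j ≠ d ∧ j ≠ e ∧ P j ≠ lo w j) :
    IsSegRepOn G (insert y s) (update lo y (P ⊓ Q)) (update hi y (P ⊔ Q)) := by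
  have hseg := IsAxisSeg.of_inf_sup hPQ heq
  refine hrep.insert_of_compatible hy hseg fun w hw => ?_
  by_cases hyw : G.Adj y w
  · obtain ⟨e, he, hed, hP | hQ⟩ := hadj w hw hyw
    · exact .of_touch hyw hseg he hed.symm left_mem_uIcc hP
        (hseg.notMem_segRelInt (apply_eq_inf_or_sup P Q d))
    · refine .of_touch hyw hseg he hed.symm right_mem_uIcc hQ (hseg.notMem_segRelInt ?_)
      rw [inf_comm, sup_comm]
      exact apply_eq_inf_or_sup Q P d
  · obtain ⟨e, he, j, hjd, hje, hne⟩ := hsep w hw hyw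
    exact .of_apply_ne hyw hseg he hjd hje (by simpa [heq j hjd] using hne)

end IsSegRepOn

/-- Lower endpoints suffice: off its direction, a segment has the coordinates of its lower
endpoint. -/
noncomputable def lowCoords (s : Finset V) (lo : V → ℝ³) : Finset ℝ :=
  s.biUnion fun v => Finset.univ.image (lo v)

lemma apply_mem_lowCoords {s : Finset V} {lo : V → ℝ³} {v : V} (hv : v ∈ s) (j : Fin 3) :
    lo v j ∈ lowCoords s lo :=
  Finset.mem_biUnion.2 ⟨v, hv, Finset.mem_image_of_mem _ (Finset.mem_univ j)⟩

open Filter Topology in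
lemma exists_forall_notMem_Ioc (a : ℝ) (X : Finset ℝ) :
    ∃ g, a < g ∧ ∀ x ∈ X, x ∉ Ioc a g := by
  have : ∀ᶠ g in 𝓝[>] a, ∀ x ∈ X, x ∉ Ioc a g := by
    refine (Finset.eventually_all X).2 fun x _ => ?_
    rcases le_or_gt x a with hx | hx
    · exact .of_forall fun g hg => hg.1.not_ge hx
    · filter_upwards [nhdsWithin_le_nhds (eventually_lt_nhds hx)] with g hg using
        fun h => h.2.not_gt hg
  exact (this.and self_mem_nhdsWithin).exists.imp fun g hg => ⟨hg.2, hg.1⟩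

namespace IsSegRepOn

variable [DecidableEq V] {s : Finset V} {lo hi : V → ℝ³} {v : V}

lemma exists_insert_of_forall_not_adj (hrep : IsSegRepOn G s lo hi) (hv : v ∉ s)
    (hadj : ∀ w ∈ s, ¬ G.Adj v w) : ∃ lo' hi', IsSegRepOn G (insert v s) lo' hi' := by
  obtain ⟨r, hr⟩ := Infinite.exists_notMem_finset (lowCoords s lo)
  refine ⟨_, _, hrep.insert_inf_sup hv (P := fun _ => r) (Q := update (fun _ => r) 0 (r + 1))
    (d := 0) (by simp) (fun j hj => by simp [hj]) (fun w hw h => absurd h (hadj w hw))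
    fun w hw _ => ?_⟩
  obtain ⟨e, he⟩ := hrep.1 w hw
  obtain ⟨j, hj0, hje⟩ := exists_ne_ne 0 e
  exact ⟨e, he, j, hj0, hje, fun h => hr (h ▸ apply_mem_lowCoords hw j)⟩

/-- The new segment starts at a generic point of the segment of `u` and leaves it in direction
`m`; it is so short that it misses every other segment lying in the plane of `u` parallel to
`m`. -/
lemma exists_insert_of_adj_iff_eq (hrep : IsSegRepOn G s lo hi) (hv : v ∉ s) {u : V}
    (hu : u ∈ s) {α m : Fin 3} (hα : IsAxisSeg (lo u) (hi u) α) (hmα : m ≠ α)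
    (hadj : ∀ w ∈ s, G.Adj v w ↔ w = u) (X : Finset ℝ)
    (hX : ∀ w ∈ s, ∀ j, lo w j ∈ X) :
    ∃ t g, t ∉ X ∧ g ∉ X ∧ lo u m < g ∧ IsSegRepOn G (insert v s)
      (update lo v (update (lo u) α t)) (update hi v (update (update (lo u) α t) m g)) := by
  obtain ⟨n, hnα, hnm⟩ := exists_ne_ne α m
  obtain ⟨t, ⟨htl, htr⟩, htX⟩ := (Set.Ioo_infinite hα.1).exists_notMem_finset X
  obtain ⟨g, hg, hgX⟩ := exists_forall_notMem_Ioc (lo u m) X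
  set p := update (lo u) α t
  have hpm : p m = lo u m := update_of_ne hmα _ _
  have hseg : IsAxisSeg p (update p m g) m := .of_update (hpm ▸ hg)
  have hpu : p ∈ Icc (lo u) (hi u) := by
    refine ⟨fun j => ?_, fun j => ?_⟩ <;> by_cases hj : j = α
    · subst hj; simpa [p] using htl.le
    · simp [p, hj]
    · subst hj; simpa [p] using htr.le
    · simpa [p, hj] using hα.le j
  refine ⟨t, g, htX, fun h => hgX g h ⟨hg, le_rfl⟩, hg,
    hrep.insert_of_compatible hv hseg fun w hw => ?_⟩
  by_cases hwu : w = u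
  · subst hwu
    exact .of_touch ((hadj w hw).2 rfl) hseg hα hmα ⟨le_rfl, hseg.le⟩ hpu
      (hseg.notMem_segRelInt (Or.inl rfl))
  have hnadj : ¬ G.Adj v w := fun h => hwu ((hadj w hw).1 h)
  obtain ⟨e, he⟩ := hrep.1 w hw
  by_cases heα : e = α
  swap
  · exact .of_apply_ne hnadj hseg he hmα.symm (Ne.symm heα) (by
      simpa [p] using fun h : t = lo w α => htX (h ▸ hX w hw α))
  rw [heα] at he
  by_cases hn : lo u n = lo w n
  swap
  · exact .of_apply_ne hnadj hseg he hnm hnα (by simpa [p, hnα] using hn)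
  refine .of_disjoint hnadj (Set.disjoint_left.2 fun x hx hxw => ?_)
    (hseg.not_collinear_of_ne he hmα)
  have hxm : x m = lo w m := he.apply_eq hmα hxw
  have hm : lo u m = lo w m := by
    by_contra hne
    exact hgX _ (hX w hw m) ⟨lt_of_le_of_ne (hxm ▸ hpm ▸ hx.1 m) hne,
      hxm ▸ by simpa using hx.2 m⟩
  refine (hrep.2 u hu w hw (Ne.symm hwu)).2.2 (hα.collinear he fun j hj => ?_)
  rcases eq_or_eq_or_eq hmα.symm hnα.symm hnm.symm j with rfl | rfl | rfl
  exacts [absurd rfl hj, hm, hn]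

lemma exists_insert_of_subsingleton (hrep : IsSegRepOn G s lo hi) (hv : v ∉ s)
    (hdeg : {w | w ∈ s ∧ G.Adj v w}.Subsingleton) :
    ∃ lo' hi', IsSegRepOn G (insert v s) lo' hi' := by
  by_cases h : ∃ u ∈ s, G.Adj v u
  · obtain ⟨u, hu, hvu⟩ := h
    obtain ⟨α, hα⟩ := hrep.1 u hu
    obtain ⟨m, hmα, -⟩ := exists_ne_ne α α
    obtain ⟨_, _, _, _, _, hrep'⟩ := hrep.exists_insert_of_adj_iff_eq hv hu hα hmα
      (fun w hw => ⟨fun h => hdeg ⟨hw, h⟩ ⟨hu, hvu⟩, fun h => h ▸ hvu⟩) _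
      fun w hw j => apply_mem_lowCoords hw j
    exact ⟨_, _, hrep'⟩
  · push Not at h
    exact hrep.exists_insert_of_forall_not_adj hv h

/-- The staircase runs from `A` along `n`, then along the third axis, then along `n'` to `D`.
Because `A` and `D` are in general position (`hAs`, `hDs`, `hAD`), each of its segments is
separated by a fixed coordinate from every segment it must not meet. -/
lemma exists_insert_staircase (hrep : IsSegRepOn G s lo hi) {a b y₁ y₂ y₃ : V} (ha : a ∈ s)
    (hb : b ∈ s) (hab : a ≠ b) {m m' n n' : Fin 3} (ham : IsAxisSeg (lo a) (hi a) m)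
    (hbm : IsAxisSeg (lo b) (hi b) m') {A D : ℝ³} (hA : A ∈ Icc (lo a) (hi a))
    (hD : D ∈ Icc (lo b) (hi b)) (hnm : n ≠ m) (hn'm' : n' ≠ m') (hnn' : n ≠ n')
    (hAs : ∀ j, j ≠ n → ∀ w ∈ s, w ≠ a → A j ≠ lo w j)
    (hDs : ∀ j, j ≠ n' → ∀ w ∈ s, w ≠ b → D j ≠ lo w j)
    (hAD : ∀ j, j ≠ n → j ≠ n' → A j ≠ D j)
    (hy₁ : y₁ ∉ s) (hy₂ : y₂ ∉ insert y₁ s) (hy₃ : y₃ ∉ insert y₂ (insert y₁ s))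
    (h₁ : ∀ w ∈ s, G.Adj y₁ w ↔ w = a)
    (h₂ : ∀ w ∈ insert y₁ s, G.Adj y₂ w ↔ w = b)
    (h₃ : ∀ w ∈ insert y₂ (insert y₁ s), G.Adj y₃ w ↔ w = y₁ ∨ w = y₂) :
    ∃ lo' hi', IsSegRepOn G (insert y₃ (insert y₂ (insert y₁ s))) lo' hi' := by
  obtain ⟨c, hcn, hcn'⟩ := exists_ne_ne n n'
  set B := update A n (D n)
  set C := update D n' (A n')
  have hB : ∀ j, j ≠ n → B j = A j := fun j hj => update_of_ne hj _ _
  have hC : ∀ j, j ≠ n' → C j = D j := fun j hj => update_of_ne hj _ _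
  have hBn : B n = D n := update_self _ _ _
  have hCn' : C n' = A n' := update_self _ _ _
  have hBC : ∀ j, j ≠ c → B j = C j := fun j hj => by
    rcases eq_or_eq_or_eq hcn hcn' hnn' j with rfl | rfl | rfl
    · exact absurd rfl hj
    · rw [hC j hnn', hBn]
    · rw [hB j hnn'.symm, hCn']
  have hAB : A n ≠ B n := by
    rw [hBn, ham.apply_eq hnm hA]
    exact (hDs n hnn' a ha hab).symm
  have hDC : D n' ≠ C n' := by
    rw [hCn', hbm.apply_eq hn'm' hD]
    exact (hAs n' hnn'.symm b hb hab.symm).symm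
  have hsepB : ∀ w ∈ s, ∃ e, IsAxisSeg (lo w) (hi w) e ∧ ∃ j, j ≠ c ∧ j ≠ e ∧ B j ≠ lo w j := by
    intro w hw
    obtain ⟨e, he⟩ := hrep.1 w hw
    refine ⟨e, he, ?_⟩
    by_cases hwb : w = b
    · subst hwb
      exact ⟨n', hcn'.symm, hbm.unique he ▸ hn'm', hB n' hnn'.symm ▸ hAs n' hnn'.symm w hw hab.symm⟩
    by_cases hen : e = n
    · refine ⟨n', hcn'.symm, hen ▸ hnn'.symm, hB n' hnn'.symm ▸ hAs n' hnn'.symm w hw ?_⟩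
      rintro rfl
      exact hnm (hen ▸ ham.unique he).symm
    · exact ⟨n, hcn.symm, Ne.symm hen, hBn ▸ hDs n hnn' w hw hwb⟩
  have hne₁ : ∀ w ∈ s, w ≠ y₁ := fun w hw => ne_of_mem_of_not_mem hw hy₁
  have hne₂ : ∀ w ∈ insert y₁ s, w ≠ y₂ := fun w hw => ne_of_mem_of_not_mem hw hy₂
  have hy₁₂ : y₁ ≠ y₂ := hne₂ y₁ (Finset.mem_insert_self _ _)
  have hsegAB := IsAxisSeg.of_inf_sup hAB fun j hj => (hB j hj).symm
  have hsegDC := IsAxisSeg.of_inf_sup hDC fun j hj => (hC j hj).symm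
  have rep₁ := hrep.insert_inf_sup hy₁ hAB (fun j hj => (hB j hj).symm)
    (fun w hw hadj => by obtain rfl := (h₁ w hw).1 hadj; exact ⟨m, ham, hnm.symm, Or.inl hA⟩)
    fun w hw hadj => by
      obtain ⟨e, he⟩ := hrep.1 w hw
      obtain ⟨j, hjn, hje⟩ := exists_ne_ne n e
      exact ⟨e, he, j, hjn, hje, hAs j hjn w hw fun h => hadj ((h₁ w hw).2 h)⟩
  have rep₂ := rep₁.insert_inf_sup hy₂ hDC (fun j hj => (hC j hj).symm)
    (fun w hw hadj => by
      obtain rfl := (h₂ w hw).1 hadj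
      exact ⟨m', by simpa [hne₁ w hb] using hbm, hn'm'.symm,
        Or.inl (by simpa [hne₁ w hb] using hD)⟩)
    fun w hw hadj => by
      rcases Finset.mem_insert.1 hw with rfl | hw
      · refine ⟨n, by simpa using hsegAB, c, hcn', hcn, ?_⟩
        simpa [hB c hcn] using (hAD c hcn hcn').symm
      obtain ⟨e, he⟩ := hrep.1 w hw
      obtain ⟨j, hjn', hje⟩ := exists_ne_ne n' e
      exact ⟨e, by simpa [hne₁ w hw] using he, j, hjn', hje, by
        simpa [hne₁ w hw] using hDs j hjn' w hw fun h => hadj ((h₂ w (by simp [hw])).2 h)⟩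
  refine ⟨_, _, rep₂.insert_inf_sup hy₃ (P := B) (Q := C) (d := c)
    (by rw [hB c hcn, hC c hcn']; exact hAD c hcn hcn') hBC (fun w hw hadj => ?_)
    fun w hw hadj => ?_⟩
  · rcases (h₃ w hw).1 hadj with rfl | rfl
    · exact ⟨n, by simpa [hy₁₂] using hsegAB, hcn.symm, Or.inl (by simp [hy₁₂])⟩
    · exact ⟨n', by simpa using hsegDC, hcn'.symm, Or.inr (by simp)⟩
  · have hws : w ∈ s := by
      simp only [Finset.mem_insert] at hw
      rcases hw with rfl | rfl | hw
      · exact absurd ((h₃ w (by simp)).2 (Or.inr rfl)) hadj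
      · exact absurd ((h₃ w (by simp)).2 (Or.inl rfl)) hadj
      · exact hw
    simpa [hne₁ w hws, hne₂ w (by simp [hws])] using hsepB w hws

lemma update_update_apply_eq_or_eq {P : ℝ³} {α m n : Fin 3} (hαm : α ≠ m) (hαn : α ≠ n)
    (hmn : m ≠ n) (t g : ℝ) {j : Fin 3} (hj : j ≠ n) :
    update (update P α t) m g j = t ∨ update (update P α t) m g j = g := by
  rcases eq_or_eq_or_eq hαm hαn hmn j with rfl | rfl | rfl
  · simp [hαm]
  · simp
  · exact absurd rfl hj

/-- `x₁` and `x₅` get short segments attached to those of `x₀` and `x₆`; their far endpoints are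
in general position, and `x₂, x₃, x₄` form the staircase joining them. -/
lemma exists_insert_path (hrep : IsSegRepOn G s lo hi) {x₀ x₁ x₂ x₃ x₄ x₅ x₆ : V}
    (hx₀ : x₀ ∈ s) (hx₆ : x₆ ∈ s) (hx₁ : x₁ ∉ s) (hx₅ : x₅ ∉ insert x₁ s)
    (hx₂ : x₂ ∉ insert x₅ (insert x₁ s))
    (hx₄ : x₄ ∉ insert x₂ (insert x₅ (insert x₁ s)))
    (hx₃ : x₃ ∉ insert x₄ (insert x₂ (insert x₅ (insert x₁ s))))
    (h₁ : ∀ w ∈ s, G.Adj x₁ w ↔ w = x₀)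
    (h₅ : ∀ w ∈ insert x₁ s, G.Adj x₅ w ↔ w = x₆)
    (h₂ : ∀ w ∈ insert x₅ (insert x₁ s), G.Adj x₂ w ↔ w = x₁)
    (h₄ : ∀ w ∈ insert x₂ (insert x₅ (insert x₁ s)), G.Adj x₄ w ↔ w = x₅)
    (h₃ : ∀ w ∈ insert x₄ (insert x₂ (insert x₅ (insert x₁ s))),
      G.Adj x₃ w ↔ w = x₂ ∨ w = x₄) :
    ∃ lo' hi',
      IsSegRepOn G (insert x₃ (insert x₄ (insert x₂ (insert x₅ (insert x₁ s))))) lo' hi' := by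
  obtain ⟨α, hα⟩ := hrep.1 x₀ hx₀
  obtain ⟨α', hα'⟩ := hrep.1 x₆ hx₆
  obtain ⟨n, hnα, -⟩ := exists_ne_ne α α'
  obtain ⟨n', hn'α', hn'n⟩ := exists_ne_ne α' n
  obtain ⟨m, hmα, hmn⟩ := exists_ne_ne α n
  obtain ⟨m', hm'α', hm'n'⟩ := exists_ne_ne α' n'
  set X₁ := lowCoords s lo
  obtain ⟨t, g, htX, hgX, hg, rep₁⟩ :=
    hrep.exists_insert_of_adj_iff_eq hx₁ hx₀ hα hmα h₁ X₁ fun w hw j => apply_mem_lowCoords hw j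
  set p := update (lo x₀) α t
  set A := update p m g
  set X₂ := lowCoords (insert x₁ s) (update lo x₁ p) ∪ Finset.univ.image A
  have hx₆₁ : x₆ ≠ x₁ := ne_of_mem_of_not_mem hx₆ hx₁
  obtain ⟨t', g', htX', hgX', hg', rep₂⟩ := rep₁.exists_insert_of_adj_iff_eq hx₅
    (Finset.mem_insert_of_mem hx₆) (by simpa [hx₆₁] using hα') hm'α' h₅ X₂
    fun w hw j => Finset.mem_union_left _ (apply_mem_lowCoords hw j)
  rw [update_of_ne hx₆₁] at rep₂ hg'
  set q := update (lo x₆) α' t'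
  set D := update q m' g'
  have hx₁₅ : x₁ ≠ x₅ := fun h => hx₅ (h ▸ Finset.mem_insert_self _ _)
  have hpA : IsAxisSeg p A m := .of_update (by simpa [p, hmα] using hg)
  have hqD : IsAxisSeg q D m' := .of_update (by simpa [q, hm'α'] using hg')
  have hA : ∀ j, j ≠ n → A j ∉ X₁ := fun j hj => by
    obtain h | h : A j = t ∨ A j = g := update_update_apply_eq_or_eq hmα.symm hnα.symm hmn t g hj
    all_goals rw [h]; assumption
  have hD : ∀ j, j ≠ n' → D j ∉ X₂ := fun j hj => by
    obtain h | h : D j = t' ∨ D j = g' :=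
      update_update_apply_eq_or_eq hm'α'.symm hn'α'.symm hm'n' t' g' hj
    all_goals rw [h]; assumption
  have hAX₂ : ∀ j, A j ∈ X₂ := fun j =>
    Finset.mem_union_right _ (Finset.mem_image_of_mem _ (Finset.mem_univ j))
  have hAs : ∀ j, j ≠ n → ∀ w ∈ insert x₅ (insert x₁ s), w ≠ x₁ →
      A j ≠ update (update lo x₁ p) x₅ q w j := by
    intro j hj w hw hwx₁
    rcases Finset.mem_insert.1 hw with rfl | hw
    · rw [update_self]
      by_cases hjα : j = α'
      · subst hjα
        simpa [q] using fun h : A j = t' => htX' (h ▸ hAX₂ j)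
      · simpa [q, hjα] using
          fun h : A j = lo x₆ j => hA j hj (h ▸ apply_mem_lowCoords hx₆ j)
    · rcases Finset.mem_insert.1 hw with rfl | hw
      · exact absurd rfl hwx₁
      have hwx₅ : w ≠ x₅ := fun h => hx₅ (h ▸ Finset.mem_insert_of_mem hw)
      simpa [hwx₁, hwx₅] using fun h : A j = lo w j => hA j hj (h ▸ apply_mem_lowCoords hw j)
  have hDs : ∀ j, j ≠ n' → ∀ w ∈ insert x₅ (insert x₁ s), w ≠ x₅ →
      D j ≠ update (update lo x₁ p) x₅ q w j := by
    intro j hj w hw hwx₅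
    have hw' : w ∈ insert x₁ s := by simpa [hwx₅] using hw
    rw [update_of_ne hwx₅]
    exact fun h => hD j hj (h ▸ Finset.mem_union_left _ (apply_mem_lowCoords hw' j))
  exact rep₂.exists_insert_staircase (by simp) (by simp) hx₁₅ (by simpa [hx₁₅] using hpA)
    (by simpa using hqD) (by simpa [hx₁₅] using right_mem_Icc.2 hpA.le)
    (by simpa using right_mem_Icc.2 hqD.le) hmn.symm hm'n'.symm hn'n.symm hAs hDs
    (fun j _ hjn' (h : A j = D j) => hD j hjn' (h ▸ hAX₂ j)) hx₂ hx₄ hx₃ h₂ h₄ h₃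

end IsSegRepOn

lemma neighborSet_eq_pair {H : G.Subgraph} {v a b : V} (ha : H.Adj v a) (hb : H.Adj v b)
    (hab : a ≠ b) (h2 : (H.neighborSet v).ncard = 2) : H.neighborSet v = {a, b} :=
  (Set.eq_of_subset_of_ncard_le (s := {a, b}) (t := H.neighborSet v) (Set.pair_subset ha hb)
    (by rw [h2, Set.ncard_pair hab]) (Set.finite_of_ncard_ne_zero (by rw [h2]; decide))).symm

lemma exists_isSegRepOn_of_path [DecidableEq V] {s : Finset V}
    (ih : ∀ t ⊂ s, ∃ lo hi, IsSegRepOn G t lo hi) {x : Fin 7 → V} (hx : Injective x)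
    (hxs : ∀ i, x i ∈ s) (N₁ : ∀ w ∈ s, G.Adj (x 1) w ↔ w = x 0 ∨ w = x 2)
    (N₂ : ∀ w ∈ s, G.Adj (x 2) w ↔ w = x 1 ∨ w = x 3)
    (N₃ : ∀ w ∈ s, G.Adj (x 3) w ↔ w = x 2 ∨ w = x 4)
    (N₄ : ∀ w ∈ s, G.Adj (x 4) w ↔ w = x 3 ∨ w = x 5)
    (N₅ : ∀ w ∈ s, G.Adj (x 5) w ↔ w = x 4 ∨ w = x 6) :
    ∃ lo hi, IsSegRepOn G s lo hi := by
  set s' := s \ {x 1, x 2, x 3, x 4, x 5}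
  have hmem :
      ∀ w, w ∈ s' ↔ w ∈ s ∧ w ≠ x 1 ∧ w ≠ x 2 ∧ w ≠ x 3 ∧ w ≠ x 4 ∧ w ≠ x 5 := by
    simp [s']
  have hS : insert (x 3) (insert (x 4) (insert (x 2) (insert (x 5) (insert (x 1) s')))) = s := by
    ext w
    simp only [Finset.mem_insert, hmem]
    constructor
    · rintro (rfl | rfl | rfl | rfl | rfl | h) <;> simp_all
    · tauto
  obtain ⟨lo, hi, hrep⟩ :=
    ih s' (Finset.sdiff_ssubset (by simp [Finset.insert_subset_iff, hxs]) (by simp))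
  obtain ⟨lo', hi', h⟩ := hrep.exists_insert_path (x₀ := x 0) (x₁ := x 1) (x₂ := x 2)
    (x₃ := x 3) (x₄ := x 4) (x₅ := x 5) (x₆ := x 6)
    (by simp [hmem, hxs, hx.eq_iff]) (by simp [hmem, hxs, hx.eq_iff])
    (by simp [hmem, hxs, hx.eq_iff]) (by simp [hmem, hxs, hx.eq_iff])
    (by simp [hmem, hxs, hx.eq_iff]) (by simp [hmem, hxs, hx.eq_iff])
    (by simp [hmem, hxs, hx.eq_iff])
    (fun w hw => by rw [N₁ w ((hmem w).1 hw).1]; simp_all)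
    (fun w hw => by
      simp only [Finset.mem_insert, hmem] at hw
      rw [N₅ w (by rcases hw with rfl | h <;> simp_all)]
      rcases hw with rfl | h <;> simp_all [hx.eq_iff])
    (fun w hw => by
      simp only [Finset.mem_insert, hmem] at hw
      rw [N₂ w (by rcases hw with rfl | rfl | h <;> simp_all)]
      rcases hw with rfl | rfl | h <;> simp_all [hx.eq_iff])
    (fun w hw => by
      simp only [Finset.mem_insert, hmem] at hw
      rw [N₄ w (by rcases hw with rfl | rfl | rfl | h <;> simp_all)]
      rcases hw with rfl | rfl | rfl | h <;> simp_all [hx.eq_iff])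
    (fun w hw => by
      simp only [Finset.mem_insert, hmem] at hw
      rw [N₃ w (by rcases hw with rfl | rfl | rfl | rfl | h <;> simp_all)])
  exact ⟨lo', hi', hS ▸ h⟩

theorem exists_isSegRepOn [DecidableEq V] (hG : PPathDegenerate 5 G) (s : Finset V) :
    ∃ lo hi, IsSegRepOn G s lo hi := by
  induction s using Finset.strongInduction with
  | H s ih =>
  rcases s.eq_empty_or_nonempty with rfl | hs
  · exact ⟨0, 0, isSegRepOn_empty _ _⟩
  set H := (⊤ : G.Subgraph).induce (s : Set V)
  have hH : ∀ v w, H.Adj v w ↔ v ∈ s ∧ w ∈ s ∧ G.Adj v w := by simp [H]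
  rcases hG H (by simpa [H] using hs) with ⟨v, hv, hdeg⟩ | ⟨x, hx, hxs, hpath, hdeg⟩
  · obtain ⟨lo, hi, hrep⟩ := ih _ (Finset.erase_ssubset hv)
    have hfin : (H.neighborSet v).Finite :=
      s.finite_toSet.subset fun w hw => ((hH v w).1 hw).2.1
    have hsub : {w | w ∈ s.erase v ∧ G.Adj v w}.Subsingleton := fun a ha b hb =>
      (Set.ncard_le_one_iff hfin).1 hdeg ((hH v a).2 ⟨hv, Finset.mem_of_mem_erase ha.1, ha.2⟩)
        ((hH v b).2 ⟨hv, Finset.mem_of_mem_erase hb.1, hb.2⟩)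
    obtain ⟨lo', hi', h⟩ := hrep.exists_insert_of_subsingleton (Finset.notMem_erase v s) hsub
    exact ⟨lo', hi', by rwa [Finset.insert_erase hv] at h⟩
  have hxs' : ∀ i, x i ∈ s := fun i => by simpa [H] using hxs i
  have hN : ∀ a b c : Fin 7, H.Adj (x a) (x b) → H.Adj (x b) (x c) → a ≠ c →
      0 < (b : ℕ) → (b : ℕ) < 6 → ∀ w ∈ s, G.Adj (x b) w ↔ w = x a ∨ w = x c := by
    intro a b c hab hbc hac hb0 hb6 w hw
    have h := Set.ext_iff.1 (neighborSet_eq_pair hab.symm hbc (hx.ne hac) (hdeg b hb0 hb6)) w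
    simpa [hH, hw, hxs' b] using h
  exact exists_isSegRepOn_of_path ih hx hxs'
    (hN 0 1 2 (hpath 0) (hpath 1) (by decide) (by decide) (by decide))
    (hN 1 2 3 (hpath 1) (hpath 2) (by decide) (by decide) (by decide))
    (hN 2 3 4 (hpath 2) (hpath 3) (by decide) (by decide) (by decide))
    (hN 3 4 5 (hpath 3) (hpath 4) (by decide) (by decide) (by decide))
    (hN 4 5 6 (hpath 4) (hpath 5) (by decide) (by decide) (by decide))

end SegRep

/-- Every finite `5`-path-degenerate graph has a `3`-segment representation. -/
theorem segRep_of_fivePathDegenerate {V : Type*} [Fintype V] (G : SimpleGraph V)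
    (h : PPathDegenerate 5 G) :
    ∃ lo hi : V → Fin 3 → ℝ, IsSegRep G lo hi := by
  classical
  obtain ⟨lo, hi, hrep⟩ := SegRep.exists_isSegRepOn h Finset.univ
  exact ⟨lo, hi, hrep.isSegRep⟩
end

section
/- Let G be a finite graph and let v be a vertex of degree at most 1 in G. If the graph G − v obtained by deleting v has a 3-segment representation, then G has a 3-segment representation. -/
/-!
Let `u` be the neighbour of `v`, if any. Pick a point `p` lying on none of the finitely many lines
carrying the segments of `G - v`, except that `p` lies on `S_u` when `u` exists: since no two
segments are collinear, every other line meets the line of `S_u` in at most one point, so all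
but finitely many points of `S_u` qualify. From `p` draw a segment in a direction different from
that of `S_u`, so short that it stops before the first hyperplane `x_j = const` containing a
segment transversal to it. It then meets no segment except `S_u`, which it touches only at `p`.
-/

open Set

theorem Set.Finite.exists_Ioc_disjoint {S : Set ℝ} (hS : S.Finite) (x : ℝ) :
    ∃ u, x < u ∧ Disjoint (Ioc x u) S := by
  have hnhds : (S \ {x})ᶜ ∈ nhdsWithin x (Ioi x) :=
    nhdsWithin_le_nhds (hS.sdiff.isClosed.compl_mem_nhds fun h => h.2 rfl)
  obtain ⟨u, hxu, hsub⟩ := mem_nhdsGT_iff_exists_Ioc_subset.mp hnhds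
  exact ⟨u, hxu, disjoint_left.2 fun y hy hyS => hsub hy ⟨hyS, hy.1.ne'⟩⟩

section AxisLine

variable {ι : Type*}

def IsAxisSeg (a b : ι → ℝ) (i : ι) : Prop :=
  a i < b i ∧ ∀ j, j ≠ i → a j = b j

def axisLine (p : ι → ℝ) (i : ι) : AffineSubspace ℝ (ι → ℝ) where
  carrier := {q | ∀ k, k ≠ i → q k = p k}
  smul_vsub_vadd_mem' c q₁ q₂ q₃ h₁ h₂ h₃ k hk := by
    simp [h₁ k hk, h₂ k hk, h₃ k hk]

theorem self_mem_axisLine (p : ι → ℝ) (i : ι) : p ∈ axisLine p i := fun _ _ => rfl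

theorem mem_axisLine_comm {p q : ι → ℝ} {i : ι} : q ∈ axisLine p i ↔ p ∈ axisLine q i :=
  ⟨fun h k hk => (h k hk).symm, fun h k hk => (h k hk).symm⟩

theorem axisLine_eq_of_mem {p q : ι → ℝ} {i : ι} (h : q ∈ axisLine p i) :
    axisLine q i = axisLine p i := by
  ext x
  exact ⟨fun hx k hk => (hx k hk).trans (h k hk), fun hx k hk => (hx k hk).trans (h k hk).symm⟩

theorem collinear_axisLine (p : ι → ℝ) (i : ι) :
    Collinear ℝ (axisLine p i : Set (ι → ℝ)) := by
  classical
  rw [collinear_iff_of_mem (self_mem_axisLine p i)]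
  refine ⟨Pi.single i 1, fun q hq => ⟨q i - p i, funext fun k => ?_⟩⟩
  rcases eq_or_ne k i with rfl | hk
  · simp
  · simp [hk, hq k hk]

theorem Collinear.subset_axisLine {s : Set (ι → ℝ)} (hs : Collinear ℝ s) {a b : ι → ℝ}
    {i : ι} (ha : a ∈ s) (hb : b ∈ s) (hab : a ≠ b) (hb' : b ∈ axisLine a i) :
    s ⊆ axisLine a i := fun _ hx =>
  affineSpan_le.mpr (pair_subset (self_mem_axisLine a i) hb')
    (hs.mem_affineSpan_of_mem_of_ne ha hb hx hab)

namespace IsAxisSeg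

variable {a b c d : ι → ℝ} {i j : ι}

theorem le (h : IsAxisSeg a b i) : a ≤ b := fun k => by
  rcases eq_or_ne k i with rfl | hk
  · exact h.1.le
  · exact (h.2 k hk).le

theorem ne (h : IsAxisSeg a b i) : a ≠ b := fun hab => h.1.ne (congrFun hab i)

theorem Icc_subset_axisLine (h : IsAxisSeg a b i) : Icc a b ⊆ axisLine a i :=
  fun x hx k hk => le_antisymm (by simpa [h.2 k hk] using hx.2 k) (hx.1 k)

theorem collinear_union_Icc_iff (hab : IsAxisSeg a b i) (hcd : IsAxisSeg c d j) :
    Collinear ℝ (Icc a b ∪ Icc c d) ↔ j = i ∧ c ∈ axisLine a i := by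
  constructor
  · intro hcol
    have hsub := hcol.subset_axisLine (Or.inl (left_mem_Icc.2 hab.le))
      (Or.inl (right_mem_Icc.2 hab.le)) hab.ne (hab.Icc_subset_axisLine (right_mem_Icc.2 hab.le))
    have hc := hsub (Or.inr (left_mem_Icc.2 hcd.le))
    have hd := hsub (Or.inr (right_mem_Icc.2 hcd.le))
    refine ⟨by_contra fun hji => hcd.1.ne ((hc j hji).trans (hd j hji).symm), hc⟩
  · rintro ⟨rfl, hc⟩
    refine (collinear_axisLine a j).subset (union_subset hab.Icc_subset_axisLine ?_)
    rw [← axisLine_eq_of_mem hc]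
    exact hcd.Icc_subset_axisLine

theorem update_mem_Icc [DecidableEq ι] {r : ℝ} (h : IsAxisSeg a b i)
    (hr : r ∈ Icc (a i) (b i)) : Function.update a i r ∈ Icc a b := by
  constructor <;> intro k <;> rcases eq_or_ne k i with rfl | hk
  · simpa using hr.1
  · simp [hk]
  · simpa using hr.2
  · simpa [hk] using h.le k

end IsAxisSeg

variable {W : Type*} [Finite W]

theorem exists_forall_notMem_axisLine [Nontrivial ι] (c : W → ι → ℝ) (d : W → ι) :
    ∃ p : ι → ℝ, ∀ w, p ∉ axisLine (c w) (d w) := by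
  choose k hk using fun w => exists_ne (d w)
  obtain ⟨M, -, hM⟩ := infinite_univ.exists_notMem_finite (finite_range fun w => c w (k w))
  exact ⟨fun _ => M, fun w hw => hM ⟨w, (hw (k w) (hk w)).symm⟩⟩

theorem exists_update_notMem_axisLine [DecidableEq ι] (c : W → ι → ℝ) (d : W → ι)
    (a : ι → ℝ) (i : ι) {s t : ℝ} (hst : s < t) :
    ∃ r ∈ Ioo s t, ∀ w, (d w = i → a ∉ axisLine (c w) i) →
      Function.update a i r ∉ axisLine (c w) (d w) := by
  obtain ⟨r, hr, hr'⟩ := (Ioo_infinite hst).exists_notMem_finite (finite_range fun w => c w i)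
  refine ⟨r, hr, fun w hw hmem => ?_⟩
  rcases eq_or_ne (d w) i with hdi | hdi
  · refine hw hdi fun k hk => ?_
    simpa [hk] using hmem k (hdi ▸ hk)
  · exact hr' ⟨w, by simpa using (hmem i hdi.symm).symm⟩

theorem exists_isAxisSeg_disjoint_Icc (lo hi : W → ι → ℝ) (dir : W → ι)
    (hseg : ∀ w, IsAxisSeg (lo w) (hi w) (dir w)) (p : ι → ℝ) (j : ι) :
    ∃ b, IsAxisSeg p b j ∧
      ∀ w, p ∉ axisLine (lo w) (dir w) → Disjoint (Icc p b) (Icc (lo w) (hi w)) := by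
  classical
  obtain ⟨u, hpu, hdisj⟩ := (finite_range fun w => lo w j).exists_Ioc_disjoint (p j)
  have hseg' : IsAxisSeg p (Function.update p j u) j :=
    ⟨by simpa using hpu, fun k hk => by simp [hk]⟩
  refine ⟨_, hseg', fun w hp => disjoint_left.2 fun x hx hxw => hp ?_⟩
  have hxp := hseg'.Icc_subset_axisLine hx
  have hxw' := (hseg w).Icc_subset_axisLine hxw
  rcases eq_or_ne (dir w) j with hdj | hdj
  · exact fun k hk => (hxp k (hdj ▸ hk)).symm.trans (hxw' k hk)
  · have hxj : x j = p j := by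
      refine le_antisymm (not_lt.1 fun hlt => disjoint_left.1 hdisj ⟨hlt, ?_⟩ ⟨w, ?_⟩)
        (hx.1 j)
      · simpa using hx.2 j
      · exact (hxw' j hdj.symm).symm
    have : x = p := funext fun k => by
      rcases eq_or_ne k j with rfl | hk
      · exact hxj
      · exact hxp k hk
    exact (hseg w).Icc_subset_axisLine (this ▸ hxw)

end AxisLine

def SegCompatible (adj : Prop) (a b c d : Fin 3 → ℝ) : Prop :=
  (adj ↔ (Icc a b ∩ Icc c d).Nonempty) ∧ Disjoint (segRelInt a b) (segRelInt c d) ∧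
    ¬ Collinear ℝ (Icc a b ∪ Icc c d)

theorem SegCompatible.symm {adj : Prop} {a b c d : Fin 3 → ℝ} (h : SegCompatible adj a b c d) :
    SegCompatible adj c d a b :=
  ⟨inter_comm (Icc a b) _ ▸ h.1, h.2.1.symm, union_comm (Icc a b) _ ▸ h.2.2⟩

theorem isSegRep_iff {V : Type*} {G : SimpleGraph V} {lo hi : V → Fin 3 → ℝ} :
    IsSegRep G lo hi ↔ (∀ v, ∃ i, IsAxisSeg (lo v) (hi v) i) ∧
      ∀ u v, u ≠ v → SegCompatible (G.Adj u v) (lo u) (hi u) (lo v) (hi v) :=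
  ⟨fun ⟨h₁, h₂, h₃, h₄⟩ =>
      ⟨h₁, fun u v huv => ⟨h₂ u v huv, h₃ u v huv, h₄ u v huv⟩⟩,
    fun ⟨h₁, h⟩ => ⟨h₁, fun u v huv => (h u v huv).1, fun u v huv => (h u v huv).2.1,
      fun u v huv => (h u v huv).2.2⟩⟩

theorem segCompatible_of_disjoint {adj : Prop} {a b c d : Fin 3 → ℝ} {i j : Fin 3}
    (hadj : ¬ adj) (hab : IsAxisSeg a b i) (hcd : IsAxisSeg c d j)
    (hdisj : Disjoint (Icc a b) (Icc c d)) (ha : a ∉ axisLine c j) :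
    SegCompatible adj a b c d :=
  ⟨iff_of_false hadj (disjoint_iff_inter_eq_empty.1 hdisj ▸ not_nonempty_empty),
    hdisj.mono inter_subset_left inter_subset_left,
    fun hcol => by
      obtain ⟨rfl, hc⟩ := (hab.collinear_union_Icc_iff hcd).1 hcol
      exact ha (mem_axisLine_comm.1 hc)⟩

theorem segCompatible_of_mem_Icc {adj : Prop} {p b c d : Fin 3 → ℝ} {i j : Fin 3}
    (hadj : adj) (hpb : IsAxisSeg p b j) (hcd : IsAxisSeg c d i) (hji : j ≠ i)
    (hp : p ∈ Icc c d) : SegCompatible adj p b c d := by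
  refine ⟨iff_of_true hadj ⟨p, left_mem_Icc.2 hpb.le, hp⟩,
    disjoint_left.2 fun x hx hxcd => ?_,
    fun hcol => hji ((hpb.collinear_union_Icc_iff hcd).1 hcol).1.symm⟩
  have hpj : p j < x j := (hx.2 j hpb.1).1
  have hxj : x j = c j := hcd.Icc_subset_axisLine hxcd.1 j hji
  have hpj' : p j = c j := hcd.Icc_subset_axisLine hp j hji
  exact hpj.ne (hpj'.trans hxj.symm)

section Extension

variable {W : Type*} [Finite W] {lo hi : W → Fin 3 → ℝ}

theorem exists_segCompatible_of_forall_not (hseg : ∀ w, ∃ i, IsAxisSeg (lo w) (hi w) i)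
    {adj : W → Prop} (hadj : ∀ w, ¬ adj w) :
    ∃ a b, (∃ i, IsAxisSeg a b i) ∧ ∀ w, SegCompatible (adj w) a b (lo w) (hi w) := by
  choose dir hdir using hseg
  obtain ⟨p, hp⟩ := exists_forall_notMem_axisLine lo dir
  obtain ⟨b, hpb, hdisj⟩ := exists_isAxisSeg_disjoint_Icc lo hi dir hdir p 0
  exact ⟨p, b, ⟨0, hpb⟩, fun w =>
    segCompatible_of_disjoint (hadj w) hpb (hdir w) (hdisj w (hp w)) (hp w)⟩

theorem IsSegRep.exists_segCompatible_of_forall_iff_eq {H : SimpleGraph W}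
    (hrep : IsSegRep H lo hi) (u : W) {adj : W → Prop} (hadj : ∀ w, adj w ↔ w = u) :
    ∃ a b, (∃ i, IsAxisSeg a b i) ∧ ∀ w, SegCompatible (adj w) a b (lo w) (hi w) := by
  obtain ⟨hseg, hcompat⟩ := isSegRep_iff.1 hrep
  choose dir hdir using hseg
  obtain ⟨r, hr, hp⟩ := exists_update_notMem_axisLine lo dir (lo u) (dir u) (hdir u).1
  set p := Function.update (lo u) (dir u) r
  have hpoff : ∀ w, w ≠ u → p ∉ axisLine (lo w) (dir w) := fun w hw => hp w fun hdi hmem =>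
    (hcompat u w (Ne.symm hw)).2.2
      (((hdir u).collinear_union_Icc_iff (hdir w)).2 ⟨hdi, mem_axisLine_comm.1 hmem⟩)
  obtain ⟨j, hj⟩ := exists_ne (dir u)
  obtain ⟨b, hpb, hdisj⟩ := exists_isAxisSeg_disjoint_Icc lo hi dir hdir p j
  refine ⟨p, b, ⟨j, hpb⟩, fun w => ?_⟩
  rcases eq_or_ne w u with rfl | hw
  · exact segCompatible_of_mem_Icc ((hadj w).2 rfl) hpb (hdir w) hj
      ((hdir w).update_mem_Icc (Ioo_subset_Icc_self hr))
  · exact segCompatible_of_disjoint (fun h => hw ((hadj w).1 h)) hpb (hdir w)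
      (hdisj w (hpoff w hw)) (hpoff w hw)

end Extension

theorem forall_ne_of_compl_singleton {V : Type*} {v : V} {P : V → V → Prop}
    (hsymm : ∀ x y, P x y → P y x) (hv : ∀ w : ({v}ᶜ : Set V), P v w)
    (hcompl : ∀ x y : ({v}ᶜ : Set V), x ≠ y → P x y) : ∀ x y, x ≠ y → P x y := by
  intro x y hxy
  by_cases hx : x = v
  · subst hx
    exact hv ⟨y, Ne.symm hxy⟩
  by_cases hy : y = v
  · subst hy
    exact hsymm _ _ (hv ⟨x, hx⟩)
  exact hcompl ⟨x, hx⟩ ⟨y, hy⟩ (Subtype.coe_ne_coe.1 hxy)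

theorem IsSegRep.exists_of_induce_compl_singleton {V : Type*} {G : SimpleGraph V} {v : V}
    {lo hi : ({v}ᶜ : Set V) → Fin 3 → ℝ} (hrep : IsSegRep (G.induce {v}ᶜ) lo hi)
    {a b : Fin 3 → ℝ} (hab : ∃ i, IsAxisSeg a b i)
    (hcompat : ∀ w : ({v}ᶜ : Set V), SegCompatible (G.Adj v w) a b (lo w) (hi w)) :
    ∃ lo hi : V → Fin 3 → ℝ, IsSegRep G lo hi := by
  classical
  rw [isSegRep_iff] at hrep
  let lo' : V → Fin 3 → ℝ := fun w => if h : w = v then a else lo ⟨w, h⟩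
  let hi' : V → Fin 3 → ℝ := fun w => if h : w = v then b else hi ⟨w, h⟩
  have hv : lo' v = a ∧ hi' v = b := ⟨dif_pos rfl, dif_pos rfl⟩
  have hcompl : ∀ w : ({v}ᶜ : Set V), lo' w = lo w ∧ hi' w = hi w :=
    fun w => ⟨dif_neg w.2, dif_neg w.2⟩
  refine ⟨lo', hi', isSegRep_iff.2 ⟨fun w => ?_, forall_ne_of_compl_singleton (v := v)
    (fun x y h => by rw [G.adj_comm] at h; exact h.symm) (fun w => ?_) fun x y hxy => ?_⟩⟩
  · by_cases hw : w = v
    · subst hw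
      simpa only [hv] using hab
    · simpa only [hcompl ⟨w, hw⟩] using hrep.1 ⟨w, hw⟩
  · simpa only [hv, hcompl] using hcompat w
  · simpa only [hcompl, SimpleGraph.comap_adj, Function.Embedding.subtype_apply] using
      hrep.2 x y hxy

/-- If `v` has degree at most `1` in the finite graph `G` and `G - v` has a `3`-segment
representation, then so does `G`. -/
theorem segRep_of_deleteLowDegreeVertex {V : Type*} [Fintype V] (G : SimpleGraph V)
    (v : V) (hdeg : (G.neighborSet v).ncard ≤ 1)
    (h : ∃ lo hi : ({v}ᶜ : Set V) → Fin 3 → ℝ,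
      IsSegRep (G.induce ({v}ᶜ : Set V)) lo hi) :
    ∃ lo hi : V → Fin 3 → ℝ, IsSegRep G lo hi := by
  obtain ⟨lo, hi, hrep⟩ := h
  rcases Nat.le_one_iff_eq_zero_or_eq_one.mp hdeg with hd0 | hd1
  · have hnadj : ∀ w, ¬ G.Adj v w := fun w hw => by
      simpa [(Set.ncard_eq_zero (Set.toFinite _)).1 hd0] using (G.mem_neighborSet v w).2 hw
    obtain ⟨a, b, hab, hcompat⟩ := exists_segCompatible_of_forall_not hrep.1 fun w => hnadj w
    exact hrep.exists_of_induce_compl_singleton hab hcompat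
  · obtain ⟨u, hu⟩ := Set.ncard_eq_one.mp hd1
    have hadj : ∀ w, G.Adj v w ↔ w = u := fun w => by
      rw [← SimpleGraph.mem_neighborSet, hu, Set.mem_singleton_iff]
    obtain ⟨a, b, hab, hcompat⟩ := hrep.exists_segCompatible_of_forall_iff_eq
      ⟨u, (G.ne_of_adj ((hadj u).2 rfl)).symm⟩ (adj := fun w => G.Adj v w)
      fun w => by rw [hadj, Subtype.ext_iff]
    exact hrep.exists_of_induce_compl_singleton hab hcompat
end

section
/- Let G be a finite graph containing a path P = v₀v₁v₂v₃v₄v₅v₆ such that for every 1 ≤ i ≤ 5, the only neighbors of v_i in G are v_{i−1} and v_{i+1}. If the graph obtained from G by deleting the vertices v₁, v₂, v₃, v₄, v₅ has a 3-segment representation, then G has a 3-segment representation. -/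
namespace SegAux

open Set Function

/-- axis-parallel segment with base `c`, direction `d`, range `[r,s]`. -/
def aseg (c : Fin 3 → ℝ) (d : Fin 3) (r s : ℝ) : Set (Fin 3 → ℝ) :=
  Set.Icc (Function.update c d r) (Function.update c d s)

theorem mem_aseg {c : Fin 3 → ℝ} {d : Fin 3} {r s : ℝ} {x : Fin 3 → ℝ} :
    x ∈ aseg c d r s ↔ (∀ m, m ≠ d → x m = c m) ∧ r ≤ x d ∧ x d ≤ s := by
  simp only [aseg, Set.mem_Icc, Pi.le_def]
  constructor
  · rintro ⟨h1, h2⟩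
    refine ⟨fun m hm => le_antisymm ?_ ?_, ?_, ?_⟩
    · have := h2 m; rwa [Function.update_of_ne hm] at this
    · have := h1 m; rwa [Function.update_of_ne hm] at this
    · have := h1 d; rwa [Function.update_self] at this
    · have := h2 d; rwa [Function.update_self] at this
  · rintro ⟨h1, h2, h3⟩
    constructor <;> intro m <;> by_cases hm : m = d
    · subst hm; rwa [Function.update_self]
    · rw [Function.update_of_ne hm, h1 m hm]
    · subst hm; rwa [Function.update_self]
    · rw [Function.update_of_ne hm, h1 m hm]

theorem relint_aseg {c : Fin 3 → ℝ} {d : Fin 3} {r s : ℝ} (hrs : r < s) :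
    segRelInt (Function.update c d r) (Function.update c d s) =
      {x | (∀ m, m ≠ d → x m = c m) ∧ r < x d ∧ x d < s} := by
  ext x
  simp only [segRelInt, Set.mem_inter_iff, Set.mem_setOf_eq]
  constructor
  · rintro ⟨h1, h2⟩
    have hx := mem_aseg.1 h1
    refine ⟨hx.1, ?_⟩
    have := h2 d (by rwa [Function.update_self, Function.update_self])
    rwa [Function.update_self, Function.update_self] at this
  · rintro ⟨h1, h2⟩
    refine ⟨mem_aseg.2 ⟨h1, le_of_lt h2.1, le_of_lt h2.2⟩, ?_⟩
    intro i hi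
    by_cases him : i = d
    · subst him; rwa [Function.update_self, Function.update_self]
    · exfalso; rw [Function.update_of_ne him, Function.update_of_ne him] at hi
      exact lt_irrefl _ hi

theorem segRelInt_subset (a b : Fin 3 → ℝ) : segRelInt a b ⊆ Set.Icc a b :=
  Set.inter_subset_left

theorem aseg_disj_ne {c c' : Fin 3 → ℝ} {d d' : Fin 3} {r s r' s' : ℝ} (m : Fin 3)
    (hmd : m ≠ d) (hmd' : m ≠ d') (h : c m ≠ c' m) :
    Disjoint (aseg c d r s) (aseg c' d' r' s') := by
  rw [Set.disjoint_left]
  intro x hx hx'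
  exact h (((mem_aseg.1 hx).1 m hmd).symm.trans ((mem_aseg.1 hx').1 m hmd'))

theorem aseg_disj_out {c c' : Fin 3 → ℝ} {d d' : Fin 3} {r s r' s' : ℝ}
    (hdd' : d ≠ d') (h : c' d < r ∨ s < c' d) :
    Disjoint (aseg c d r s) (aseg c' d' r' s') := by
  rw [Set.disjoint_left]
  intro x hx hx'
  have h1 := (mem_aseg.1 hx).2
  have h2 := (mem_aseg.1 hx').1 d hdd'
  rw [h2] at h1
  rcases h with h | h
  · exact absurd h1.1 (not_le.2 h)
  · exact absurd h1.2 (not_le.2 h)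

theorem aseg_disj_range {c c' : Fin 3 → ℝ} {d : Fin 3} {r s r' s' : ℝ}
    (h : s < r' ∨ s' < r) :
    Disjoint (aseg c d r s) (aseg c' d r' s') := by
  rw [Set.disjoint_left]
  intro x hx hx'
  have h1 := (mem_aseg.1 hx).2
  have h2 := (mem_aseg.1 hx').2
  rcases h with h | h
  · linarith [h1.2, h2.1]
  · linarith [h1.1, h2.2]

theorem aseg_inter_subset {c c' : Fin 3 → ℝ} {d d' : Fin 3} {r s r' s' : ℝ}
    (hdd' : d ≠ d') :
    aseg c d r s ∩ aseg c' d' r' s' ⊆ {fun m => if m = d then c' d else c m} := by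
  rintro x ⟨hx, hx'⟩
  have h1 := (mem_aseg.1 hx).1
  have h2 := (mem_aseg.1 hx').1
  simp only [Set.mem_singleton_iff]
  funext m
  by_cases hm : m = d
  · subst hm; simp only [if_pos rfl]; exact h2 m hdd'
  · simp only [if_neg hm]; exact h1 m hm

theorem collinear_pair_line {c c' : Fin 3 → ℝ} {d : Fin 3} {r s r' s' : ℝ}
    (h : ∀ m, m ≠ d → c m = c' m) :
    Collinear ℝ (aseg c d r s ∪ aseg c' d r' s') := by
  classical
  set e : Fin 3 → ℝ := Pi.single d (1:ℝ) with he
  have hmem : ∀ x ∈ aseg c d r s ∪ aseg c' d r' s',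
      ∃ t : ℝ, x = t • e + (Function.update c d 0) := by
    intro x hx
    refine ⟨x d, ?_⟩
    funext m
    by_cases hm : m = d
    · subst hm
      simp [he, Pi.single_eq_same, Function.update_self]
    · have hxm : x m = c m := by
        rcases hx with hx | hx
        · exact (mem_aseg.1 hx).1 m hm
        · exact ((mem_aseg.1 hx).1 m hm).trans (h m hm).symm
      simp [he, Pi.single_eq_of_ne hm, Function.update_of_ne hm, hxm]
  rcases Set.eq_empty_or_nonempty (aseg c d r s ∪ aseg c' d r' s') with hemp | ⟨x₀, hx₀⟩
  · rw [hemp]; exact collinear_empty _ _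
  · rw [collinear_iff_of_mem hx₀]
    obtain ⟨t₀, ht₀⟩ := hmem x₀ hx₀
    refine ⟨e, fun p hp => ?_⟩
    obtain ⟨t, ht⟩ := hmem p hp
    refine ⟨t - t₀, ?_⟩
    have : p = (t - t₀) • e + x₀ := by
      rw [ht, ht₀, sub_smul]; abel
    simpa [vadd_eq_add] using this

/-- key linear-algebra step: if a collinear set contains two points differing
exactly at coordinate `d`, every two of its points agree off `d`. -/
theorem collinear_aux {S : Set (Fin 3 → ℝ)} (hS : Collinear ℝ S)
    {x y : Fin 3 → ℝ} (hx : x ∈ S) (hy : y ∈ S) (hxyd : x d ≠ y d)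
    (hxy : ∀ m, m ≠ d → x m = y m) :
    ∀ z ∈ S, ∀ m, m ≠ d → z m = x m := by
  rw [collinear_iff_of_mem hx] at hS
  obtain ⟨w, hw⟩ := hS
  obtain ⟨ty, hty⟩ := hw y hy
  have hty0 : ty ≠ 0 := by
    intro h0; rw [h0, zero_smul] at hty
    simp only [vadd_eq_add, zero_add] at hty
    exact hxyd (by rw [hty])
  have hwm : ∀ m, m ≠ d → w m = 0 := by
    intro m hm
    have : y m = ty * w m + x m := by rw [hty]; simp [vadd_eq_add]
    have h2 : y m = x m := (hxy m hm).symm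
    have : ty * w m = 0 := by linarith [this, h2]
    exact (mul_eq_zero.1 this).resolve_left hty0
  intro z hz m hm
  obtain ⟨tz, htz⟩ := hw z hz
  have : z m = tz * w m + x m := by rw [htz]; simp [vadd_eq_add]
  rw [this, hwm m hm]; ring

theorem aseg_nc_dir (hrs : r < s) (hrs' : r' < s') (hdd' : d ≠ d') :
    ¬ Collinear ℝ (aseg c d r s ∪ aseg c' d' r' s') := by
  intro hcol
  have hx : Function.update c d r ∈ aseg c d r s ∪ aseg c' d' r' s' := by
    left; exact mem_aseg.2 ⟨fun m hm => Function.update_of_ne hm _ _, by simp, by simp [le_of_lt hrs]⟩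
  have hy : Function.update c d s ∈ aseg c d r s ∪ aseg c' d' r' s' := by
    left; exact mem_aseg.2 ⟨fun m hm => Function.update_of_ne hm _ _, by simp [le_of_lt hrs], by simp⟩
  have hxyd : Function.update c d r d ≠ Function.update c d s d := by
    simp [ne_of_lt hrs]
  have hxy : ∀ m, m ≠ d → Function.update c d r m = Function.update c d s m := by
    intro m hm; rw [Function.update_of_ne hm, Function.update_of_ne hm]
  have key := collinear_aux hcol hx hy hxyd hxy
  have hz1 : Function.update c' d' r' ∈ aseg c d r s ∪ aseg c' d' r' s' := by
    right; exact mem_aseg.2 ⟨fun m hm => Function.update_of_ne hm _ _, by simp, by simp [le_of_lt hrs']⟩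
  have hz2 : Function.update c' d' s' ∈ aseg c d r s ∪ aseg c' d' r' s' := by
    right; exact mem_aseg.2 ⟨fun m hm => Function.update_of_ne hm _ _, by simp [le_of_lt hrs'], by simp⟩
  have e1 := key _ hz1 d' (Ne.symm hdd')
  have e2 := key _ hz2 d' (Ne.symm hdd')
  rw [Function.update_self] at e1 e2
  exact (ne_of_lt hrs') (e1.trans e2.symm)

theorem aseg_nc_sep (hrs : r < s) (hrs' : r' ≤ s') (m : Fin 3)
    (hmd : m ≠ d) (hmd' : m ≠ d') (h : c m ≠ c' m) :
    ¬ Collinear ℝ (aseg c d r s ∪ aseg c' d' r' s') := by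
  intro hcol
  have hx : Function.update c d r ∈ aseg c d r s ∪ aseg c' d' r' s' := by
    left; exact mem_aseg.2 ⟨fun m hm => Function.update_of_ne hm _ _, by simp, by simp [le_of_lt hrs]⟩
  have hy : Function.update c d s ∈ aseg c d r s ∪ aseg c' d' r' s' := by
    left; exact mem_aseg.2 ⟨fun m hm => Function.update_of_ne hm _ _, by simp [le_of_lt hrs], by simp⟩
  have hxyd : Function.update c d r d ≠ Function.update c d s d := by
    simp [ne_of_lt hrs]
  have hxy : ∀ m, m ≠ d → Function.update c d r m = Function.update c d s m := by
    intro m hm; rw [Function.update_of_ne hm, Function.update_of_ne hm]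
  have key := collinear_aux hcol hx hy hxyd hxy
  have hz1 : Function.update c' d' r' ∈ aseg c d r s ∪ aseg c' d' r' s' := by
    right; exact mem_aseg.2 ⟨fun m hm => Function.update_of_ne hm _ _, by simp, by simp [hrs']⟩
  have := key _ hz1 m hmd
  rw [Function.update_of_ne hmd', Function.update_of_ne hmd] at this
  exact h this.symm

def GoodPair {V : Type*} (G : SimpleGraph V) (lo hi : V → Fin 3 → ℝ) (x y : V) : Prop :=
  (G.Adj x y ↔ (Set.Icc (lo x) (hi x) ∩ Set.Icc (lo y) (hi y)).Nonempty) ∧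
  Disjoint (segRelInt (lo x) (hi x)) (segRelInt (lo y) (hi y)) ∧
  ¬ Collinear ℝ (Set.Icc (lo x) (hi x) ∪ Set.Icc (lo y) (hi y))

theorem GoodPair.symm {V : Type*} {G : SimpleGraph V} {lo hi : V → Fin 3 → ℝ} {x y : V}
    (h : GoodPair G lo hi x y) : GoodPair G lo hi y x := by
  obtain ⟨h1, h2, h3⟩ := h
  refine ⟨?_, h2.symm, ?_⟩
  · rw [G.adj_comm, Set.inter_comm]; exact h1
  · rw [Set.union_comm]; exact h3

theorem goodPair_of_disjoint {V : Type*} {G : SimpleGraph V} {lo hi : V → Fin 3 → ℝ} {x y : V}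
    (hna : ¬ G.Adj x y)
    (hd : Disjoint (Set.Icc (lo x) (hi x)) (Set.Icc (lo y) (hi y)))
    (hnc : ¬ Collinear ℝ (Set.Icc (lo x) (hi x) ∪ Set.Icc (lo y) (hi y))) :
    GoodPair G lo hi x y := by
  refine ⟨⟨fun h => absurd h hna, fun h => ?_⟩,
    hd.mono (segRelInt_subset _ _) (segRelInt_subset _ _), hnc⟩
  exfalso
  obtain ⟨z, hz1, hz2⟩ := h
  exact Set.disjoint_left.1 hd hz1 hz2

theorem goodPair_of_touch {V : Type*} {G : SimpleGraph V} {lo hi : V → Fin 3 → ℝ} {x y : V}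
    (ha : G.Adj x y) (z : Fin 3 → ℝ)
    (h1 : z ∈ Set.Icc (lo x) (hi x)) (h2 : z ∈ Set.Icc (lo y) (hi y))
    (hsub : Set.Icc (lo x) (hi x) ∩ Set.Icc (lo y) (hi y) ⊆ {z})
    (hz : z ∉ segRelInt (lo x) (hi x) ∨ z ∉ segRelInt (lo y) (hi y))
    (hnc : ¬ Collinear ℝ (Set.Icc (lo x) (hi x) ∪ Set.Icc (lo y) (hi y))) :
    GoodPair G lo hi x y := by
  refine ⟨⟨fun _ => ⟨z, h1, h2⟩, fun _ => ha⟩, ?_, hnc⟩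
  rw [Set.disjoint_left]
  intro w hw1 hw2
  have hwz : w = z := hsub ⟨segRelInt_subset _ _ hw1, segRelInt_subset _ _ hw2⟩
  subst hwz
  rcases hz with hz | hz
  · exact hz hw1
  · exact hz hw2

/-- pick the third coordinate -/
def third (x y : Fin 3) : Fin 3 :=
  if 0 ≠ x ∧ 0 ≠ y then 0 else if 1 ≠ x ∧ 1 ≠ y then 1 else 2

theorem third_ne (x y : Fin 3) (h : x ≠ y) : third x y ≠ x ∧ third x y ≠ y := by
  revert x y; decide

theorem eq_third (x y z : Fin 3) (h : x ≠ y) (h1 : z ≠ x) (h2 : z ≠ y) : z = third x y := by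
  revert x y z; decide

theorem exists_eps {t : Set ℝ} (ht : t.Finite) :
    ∃ ε : ℝ, 0 < ε ∧ ε ∉ t ∧ ∀ x ∈ t, 0 < x → ε < x := by
  classical
  obtain ⟨δ, hδ0, hδ⟩ : ∃ δ : ℝ, 0 < δ ∧ ∀ x ∈ t, 0 < x → δ ≤ x := by
    set T : Finset ℝ := insert 1 (ht.toFinset.filter (fun x => 0 < x)) with hT
    have hTne : T.Nonempty := ⟨1, Finset.mem_insert_self _ _⟩
    refine ⟨T.min' hTne, ?_, ?_⟩
    · have hmm := T.min'_mem hTne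
      have : T.min' hTne ∈ insert 1 (ht.toFinset.filter (fun x => 0 < x)) := hT ▸ hmm
      rcases Finset.mem_insert.1 this with h | h
      · rw [h]; norm_num
      · exact (Finset.mem_filter.1 h).2
    · intro x hx hx0
      apply Finset.min'_le
      have : x ∈ insert 1 (ht.toFinset.filter (fun x => 0 < x)) :=
        Finset.mem_insert_of_mem (Finset.mem_filter.2 ⟨ht.mem_toFinset.2 hx, hx0⟩)
      exact hT ▸ this
  have hinf : (Set.Ioo (0:ℝ) δ).Infinite := Set.Ioo_infinite hδ0
  obtain ⟨ε, hε⟩ := (hinf.diff ht).nonempty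
  exact ⟨ε, hε.1.1, hε.2, fun x hx hx0 => lt_of_lt_of_le hε.1.2 (hδ x hx hx0)⟩

theorem exists_Ioo_avoid {t : Set ℝ} (ht : t.Finite) {a b : ℝ} (hab : a < b) :
    ∃ x : ℝ, a < x ∧ x < b ∧ x ∉ t := by
  obtain ⟨x, hx⟩ := ((Set.Ioo_infinite hab).diff ht).nonempty
  exact ⟨x, hx.1.1, hx.1.2, hx.2⟩

theorem notMem_Ioo_right (x y : ℝ) : y ∉ Set.Ioo (min x y) (max x y) := by
  intro h
  rcases le_total x y with h' | h'
  · rw [max_eq_right h'] at h; exact lt_irrefl _ h.2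
  · rw [min_eq_right h'] at h; exact lt_irrefl _ h.1

theorem notMem_Ioo_left (x y : ℝ) : x ∉ Set.Ioo (min x y) (max x y) := by
  rw [min_comm, max_comm]; exact notMem_Ioo_right y x

theorem bullet1_aseg {c : Fin 3 → ℝ} {d : Fin 3} {r s : ℝ} (h : r < s) :
    ∃ i, Function.update c d r i < Function.update c d s i ∧
      ∀ m, m ≠ i → Function.update c d r m = Function.update c d s m :=
  ⟨d, by simp [h], fun m hm => by
    rw [Function.update_of_ne hm, Function.update_of_ne hm]⟩

theorem pick_ne : ∀ z : Fin 3, (if z = 0 then (1 : Fin 3) else 0) ≠ z := by decide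

theorem induce_adj' {V : Type*} (G : SimpleGraph V) (s : Set V) (u w : s) :
    (G.induce s).Adj u w ↔ G.Adj u w := by simp

end SegAux
open SegAux Set Function in
/-- Let `G` contain a path `v₀v₁⋯v₆` such that for `1 ≤ i ≤ 5` the only neighbors of
`vᵢ` in `G` are `v_{i-1}` and `v_{i+1}`. If the graph obtained from `G` by deleting
`v₁, …, v₅` has a `3`-segment representation, then so does `G`. -/
theorem segRep_of_deleteInnerPath {V : Type*} [Fintype V] (G : SimpleGraph V)
    (v : Fin 7 → V) (hinj : Function.Injective v)
    (hadj : ∀ i : Fin 6, G.Adj (v i.castSucc) (v i.succ))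
    (hnbr : ∀ i : Fin 7, 1 ≤ (i : ℕ) → (i : ℕ) ≤ 5 →
      G.neighborSet (v i) = {v (i - 1), v (i + 1)})
    (h : ∃ lo hi : (({v 1, v 2, v 3, v 4, v 5} : Set V)ᶜ : Set V) → Fin 3 → ℝ,
      IsSegRep (G.induce (({v 1, v 2, v 3, v 4, v 5} : Set V)ᶜ)) lo hi) :
    ∃ lo hi : V → Fin 3 → ℝ, IsSegRep G lo hi := by
  classical
  set A : Set V := ({v 1, v 2, v 3, v 4, v 5} : Set V)ᶜ with hA
  obtain ⟨ol, oh, hlen, hiff, hrel, hcol⟩ := h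
  -- basic injectivity facts
  have hvne : ∀ k l : Fin 7, k ≠ l → v k ≠ v l := fun k l hkl => hinj.ne hkl
  have hmemA : ∀ x : V, x ∈ A ↔ (x ≠ v 1 ∧ x ≠ v 2 ∧ x ≠ v 3 ∧ x ≠ v 4 ∧ x ≠ v 5) := by
    intro x
    simp only [hA, Set.mem_compl_iff, Set.mem_insert_iff, Set.mem_singleton_iff]
    tauto
  have hv0A : v 0 ∈ A := (hmemA _).2
    ⟨hvne 0 1 (by decide), hvne 0 2 (by decide), hvne 0 3 (by decide),
     hvne 0 4 (by decide), hvne 0 5 (by decide)⟩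
  have hv6A : v 6 ∈ A := (hmemA _).2
    ⟨hvne 6 1 (by decide), hvne 6 2 (by decide), hvne 6 3 (by decide),
     hvne 6 4 (by decide), hvne 6 5 (by decide)⟩
  have hv1A : v 1 ∉ A := fun hc => ((hmemA _).1 hc).1 rfl
  have hv2A : v 2 ∉ A := fun hc => ((hmemA _).1 hc).2.1 rfl
  have hv3A : v 3 ∉ A := fun hc => ((hmemA _).1 hc).2.2.1 rfl
  have hv4A : v 4 ∉ A := fun hc => ((hmemA _).1 hc).2.2.2.1 rfl
  have hv5A : v 5 ∉ A := fun hc => ((hmemA _).1 hc).2.2.2.2 rfl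
  set w0 : A := ⟨v 0, hv0A⟩ with hw0
  set w6 : A := ⟨v 6, hv6A⟩ with hw6
  have hw06 : w0 ≠ w6 := fun hc => hvne 0 6 (by decide) (congrArg Subtype.val hc)
  -- direction of each old segment
  choose du hdu1 hdu2 using hlen
  -- aseg normal form of the old segments
  have hasegA : ∀ u : A, Set.Icc (ol u) (oh u) =
      aseg (ol u) (du u) (ol u (du u)) (oh u (du u)) := by
    intro u
    have h1 : Function.update (ol u) (du u) (ol u (du u)) = ol u :=
      Function.update_eq_self _ _
    have h2 : Function.update (ol u) (du u) (oh u (du u)) = oh u := by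
      funext m
      by_cases hm : m = du u
      · subst hm; rw [Function.update_self]
      · rw [Function.update_of_ne hm]; exact hdu2 u m hm
    rw [aseg, h1, h2]
  -- adjacency in the induced graph
  have hadjA : ∀ (x y : V) (hx : x ∈ A) (hy : y ∈ A), x ≠ y →
      (G.Adj x y ↔ (Set.Icc (ol ⟨x, hx⟩) (oh ⟨x, hx⟩) ∩
        Set.Icc (ol ⟨y, hy⟩) (oh ⟨y, hy⟩)).Nonempty) := by
    intro x y hx hy hxy
    have := hiff ⟨x, hx⟩ ⟨y, hy⟩ (fun hc => hxy (congrArg Subtype.val hc))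
    rw [← this]
    exact (induce_adj' G A ⟨x, hx⟩ ⟨y, hy⟩).symm
  -- concrete path adjacencies
  have adj01 : G.Adj (v 0) (v 1) := by
    have h := hadj 0
    rwa [show (0 : Fin 6).castSucc = (0 : Fin 7) from rfl,
      show (0 : Fin 6).succ = (1 : Fin 7) from rfl] at h
  have adj12 : G.Adj (v 1) (v 2) := by
    have h := hadj 1
    rwa [show (1 : Fin 6).castSucc = (1 : Fin 7) from rfl,
      show (1 : Fin 6).succ = (2 : Fin 7) from rfl] at h
  have adj23 : G.Adj (v 2) (v 3) := by
    have h := hadj 2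
    rwa [show (2 : Fin 6).castSucc = (2 : Fin 7) from rfl,
      show (2 : Fin 6).succ = (3 : Fin 7) from rfl] at h
  have adj34 : G.Adj (v 3) (v 4) := by
    have h := hadj 3
    rwa [show (3 : Fin 6).castSucc = (3 : Fin 7) from rfl,
      show (3 : Fin 6).succ = (4 : Fin 7) from rfl] at h
  have adj45 : G.Adj (v 4) (v 5) := by
    have h := hadj 4
    rwa [show (4 : Fin 6).castSucc = (4 : Fin 7) from rfl,
      show (4 : Fin 6).succ = (5 : Fin 7) from rfl] at h
  have adj56 : G.Adj (v 5) (v 6) := by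
    have h := hadj 5
    rwa [show (5 : Fin 6).castSucc = (5 : Fin 7) from rfl,
      show (5 : Fin 6).succ = (6 : Fin 7) from rfl] at h
  -- neighborhoods of the interior path vertices
  have hnb : ∀ k : Fin 7, 1 ≤ (k : ℕ) → (k : ℕ) ≤ 5 →
      ∀ x : V, G.Adj (v k) x ↔ (x = v (k - 1) ∨ x = v (k + 1)) := by
    intro k h1 h5 x
    rw [← SimpleGraph.mem_neighborSet, hnbr k h1 h5]
    simp [Set.mem_insert_iff]
  have hnb1 : ∀ x : V, G.Adj (v 1) x ↔ (x = v 0 ∨ x = v 2) := by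
    intro x
    rw [hnb 1 (by decide) (by decide) x, show (1 - 1 : Fin 7) = 0 from rfl,
      show (1 + 1 : Fin 7) = 2 from rfl]
  have hnb2 : ∀ x : V, G.Adj (v 2) x ↔ (x = v 1 ∨ x = v 3) := by
    intro x
    rw [hnb 2 (by decide) (by decide) x, show (2 - 1 : Fin 7) = 1 from rfl,
      show (2 + 1 : Fin 7) = 3 from rfl]
  have hnb3 : ∀ x : V, G.Adj (v 3) x ↔ (x = v 2 ∨ x = v 4) := by
    intro x
    rw [hnb 3 (by decide) (by decide) x, show (3 - 1 : Fin 7) = 2 from rfl,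
      show (3 + 1 : Fin 7) = 4 from rfl]
  have hnb4 : ∀ x : V, G.Adj (v 4) x ↔ (x = v 3 ∨ x = v 5) := by
    intro x
    rw [hnb 4 (by decide) (by decide) x, show (4 - 1 : Fin 7) = 3 from rfl,
      show (4 + 1 : Fin 7) = 5 from rfl]
  have hnb5 : ∀ x : V, G.Adj (v 5) x ↔ (x = v 4 ∨ x = v 6) := by
    intro x
    rw [hnb 5 (by decide) (by decide) x, show (5 - 1 : Fin 7) = 4 from rfl,
      show (5 + 1 : Fin 7) = 6 from rfl]
    -- directions
  set i0 : Fin 3 := du w0 with hi0def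
  set i6 : Fin 3 := du w6 with hi6def
  set c0 : Fin 3 → ℝ := ol w0 with hc0def
  set c6 : Fin 3 → ℝ := ol w6 with hc6def
  set d2 : Fin 3 := if i0 = 0 then 1 else 0 with hd2def
  have hd2i0 : d2 ≠ i0 := by
    rw [hd2def]; exact pick_ne i0
  set j : Fin 3 := third i0 d2 with hjdef
  have hji0 : j ≠ i0 := (third_ne i0 d2 (Ne.symm hd2i0)).1
  have hjd2 : j ≠ d2 := (third_ne i0 d2 (Ne.symm hd2i0)).2
  set d4 : Fin 3 := if d2 = i6 then (if d2 = 0 then 1 else 0) else third d2 i6 with hd4def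
  have hd4d2 : d4 ≠ d2 := by
    rw [hd4def]
    by_cases hh : d2 = i6
    · rw [if_pos hh]; exact pick_ne d2
    · rw [if_neg hh]; exact (third_ne d2 i6 hh).1
  have hd4i6 : d4 ≠ i6 := by
    rw [hd4def]
    by_cases hh : d2 = i6
    · rw [if_pos hh, ← hh]; exact pick_ne d2
    · rw [if_neg hh]; exact (third_ne d2 i6 hh).2
  set j' : Fin 3 := third i6 d4 with hj'def
  have hj'i6 : j' ≠ i6 := (third_ne i6 d4 (Ne.symm hd4i6)).1
  have hj'd4 : j' ≠ d4 := (third_ne i6 d4 (Ne.symm hd4i6)).2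
  set d3 : Fin 3 := third d2 d4 with hd3def
  have hd3d2 : d3 ≠ d2 := (third_ne d2 d4 (Ne.symm hd4d2)).1
  have hd3d4 : d3 ≠ d4 := (third_ne d2 d4 (Ne.symm hd4d2)).2
  -- coverings
  have cover0 : ∀ m : Fin 3, m = i0 ∨ m = d2 ∨ m = j := by
    intro m
    by_cases h1 : m = i0
    · exact Or.inl h1
    by_cases h2 : m = d2
    · exact Or.inr (Or.inl h2)
    · exact Or.inr (Or.inr (eq_third i0 d2 m (Ne.symm hd2i0) h1 h2))
  have cover6 : ∀ m : Fin 3, m = i6 ∨ m = d4 ∨ m = j' := by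
    intro m
    by_cases h1 : m = i6
    · exact Or.inl h1
    by_cases h2 : m = d4
    · exact Or.inr (Or.inl h2)
    · exact Or.inr (Or.inr (eq_third i6 d4 m (Ne.symm hd4i6) h1 h2))
  have coverm : ∀ m : Fin 3, m = d2 ∨ m = d4 ∨ m = d3 := by
    intro m
    by_cases h1 : m = d2
    · exact Or.inl h1
    by_cases h2 : m = d4
    · exact Or.inr (Or.inl h2)
    · exact Or.inr (Or.inr (eq_third d2 d4 m (Ne.symm hd4d2) h1 h2))
  have hd2mem : d2 = i6 ∨ d2 = j' := by
    rcases cover6 d2 with h | h | h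
    · exact Or.inl h
    · exact absurd h.symm hd4d2
    · exact Or.inr h
  have hd3mem0 : d3 = i0 ∨ d3 = j := by
    rcases cover0 d3 with h | h | h
    · exact Or.inl h
    · exact absurd h hd3d2
    · exact Or.inr h
  have hd3mem6 : d3 = i6 ∨ d3 = j' := by
    rcases cover6 d3 with h | h | h
    · exact Or.inl h
    · exact absurd h hd3d4
    · exact Or.inr h
  -- the finite set of all coordinates of old segments
  set B0 : Set ℝ := Set.range (fun z : A × Fin 3 => ol z.1 z.2) ∪
      Set.range (fun z : A × Fin 3 => oh z.1 z.2) with hB0def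
  have hB0fin : B0.Finite := (Set.finite_range _).union (Set.finite_range _)
  have hB0lo : ∀ (u : A) (m : Fin 3), ol u m ∈ B0 := fun u m => Or.inl ⟨(u, m), rfl⟩
  have hB0hi : ∀ (u : A) (m : Fin 3), oh u m ∈ B0 := fun u m => Or.inr ⟨(u, m), rfl⟩
  -- choose the generic parameters
  obtain ⟨P, hP1, hP2, hPB⟩ := exists_Ioo_avoid hB0fin (hdu1 w0)
  obtain ⟨Q, hQ1, hQ2, hQB'⟩ :=
    exists_Ioo_avoid (hB0fin.union (Set.finite_singleton P)) (hdu1 w6)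
  have hQB : Q ∉ B0 := fun hc => hQB' (Or.inl hc)
  have hQP : Q ≠ P := fun hc => hQB' (Or.inr hc)
  set p : Fin 3 → ℝ := Function.update c0 i0 P with hpdef
  set q : Fin 3 → ℝ := Function.update c6 i6 Q with hqdef
  obtain ⟨eps, heps0, hepsne, hepslt⟩ :=
    exists_eps (((hB0fin.union (Set.finite_singleton P)).union
      (Set.finite_singleton Q)).image (fun x => x - c0 j))
  have hepsB : ∀ x ∈ B0, c0 j + eps ≠ x := by
    intro x hx hc
    exact hepsne ⟨x, Or.inl (Or.inl hx), by dsimp only; linarith⟩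
  have hepsP : c0 j + eps ≠ P := fun hc => hepsne ⟨P, Or.inl (Or.inr rfl), by dsimp only; linarith⟩
  have hepsQ : c0 j + eps ≠ Q := fun hc => hepsne ⟨Q, Or.inr rfl, by dsimp only; linarith⟩
  have hepssmall : ∀ x ∈ B0, c0 j < x → c0 j + eps < x := by
    intro x hx hlt
    have := hepslt (x - c0 j) ⟨x, Or.inl (Or.inl hx), rfl⟩ (by linarith)
    linarith
  set a : Fin 3 → ℝ := Function.update p j (c0 j + eps) with hadef
  obtain ⟨eps', heps'0, heps'ne, heps'lt⟩ :=
    exists_eps ((((hB0fin.union (Set.finite_singleton P)).union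
      (Set.finite_singleton Q)).union
      (Set.finite_singleton (c0 j + eps))).image (fun x => x - c6 j'))
  have heps'B : ∀ x ∈ B0, c6 j' + eps' ≠ x := by
    intro x hx hc
    exact heps'ne ⟨x, Or.inl (Or.inl (Or.inl hx)), by dsimp only; linarith⟩
  have heps'P : c6 j' + eps' ≠ P := fun hc =>
    heps'ne ⟨P, Or.inl (Or.inl (Or.inr rfl)), by dsimp only; linarith⟩
  have heps'Q : c6 j' + eps' ≠ Q := fun hc => heps'ne ⟨Q, Or.inl (Or.inr rfl), by dsimp only; linarith⟩
  have heps'eps : c6 j' + eps' ≠ c0 j + eps := fun hc =>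
    heps'ne ⟨c0 j + eps, Or.inr rfl, by dsimp only; linarith⟩
  have heps'small : ∀ x ∈ B0, c6 j' < x → c6 j' + eps' < x := by
    intro x hx hlt
    have := heps'lt (x - c6 j') ⟨x, Or.inl (Or.inl (Or.inl hx)), rfl⟩ (by linarith)
    linarith
  set b : Fin 3 → ℝ := Function.update q j' (c6 j' + eps') with hbdef
  -- coordinates of p, a, q, b
  have hp_i0 : p i0 = P := Function.update_self _ _ _
  have hp_o : ∀ m, m ≠ i0 → p m = c0 m := fun m hm => Function.update_of_ne hm _ _
  have ha_j : a j = c0 j + eps := Function.update_self _ _ _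
  have ha_i0 : a i0 = P := by
    rw [hadef, Function.update_of_ne (Ne.symm hji0)]
    exact hp_i0
  have ha_o : ∀ m, m ≠ j → m ≠ i0 → a m = c0 m := by
    intro m h1 h2
    rw [hadef, Function.update_of_ne h1]
    exact hp_o m h2
  have hq_i6 : q i6 = Q := Function.update_self _ _ _
  have hq_o : ∀ m, m ≠ i6 → q m = c6 m := fun m hm => Function.update_of_ne hm _ _
  have hb_j' : b j' = c6 j' + eps' := Function.update_self _ _ _
  have hb_i6 : b i6 = Q := by
    rw [hbdef, Function.update_of_ne (Ne.symm hj'i6)]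
    exact hq_i6
  have hb_o : ∀ m, m ≠ j' → m ≠ i6 → b m = c6 m := by
    intro m h1 h2
    rw [hbdef, Function.update_of_ne h1]
    exact hq_o m h2
  -- genericity of the free coordinates of a and b
  have hagen : ∀ m, m ≠ d2 → (a m ∉ B0 ∧ a m ≠ Q) := by
    intro m hm
    rcases cover0 m with h | h | h
    · subst h; rw [ha_i0]; exact ⟨hPB, Ne.symm hQP⟩
    · exact absurd h hm
    · subst h; rw [ha_j]
      exact ⟨fun hc => hepsB _ hc rfl, hepsQ⟩
  have hbgen : ∀ m, m ≠ d4 → (b m ∉ B0 ∧ b m ≠ P ∧ b m ≠ c0 j + eps) := by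
    intro m hm
    rcases cover6 m with h | h | h
    · subst h; rw [hb_i6]
      exact ⟨hQB, hQP, fun hc => hepsQ hc.symm⟩
    · exact absurd h hm
    · subst h; rw [hb_j']
      exact ⟨fun hc => heps'B _ hc rfl, heps'P, heps'eps⟩
  have ha_d2 : a d2 = c0 d2 := ha_o d2 (Ne.symm hjd2) hd2i0
  have hb_d4 : b d4 = c6 d4 := hb_o d4 (Ne.symm hj'd4) hd4i6
  have hab2 : a d2 ≠ b d2 := by
    rw [ha_d2]
    exact fun hc => (hbgen d2 (Ne.symm hd4d2)).1 (hc ▸ hB0lo w0 d2)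
  have hab3 : a d3 ≠ b d3 := by
    have hb3 := hbgen d3 hd3d4
    rcases hd3mem0 with h | h
    · rw [show a d3 = P by rw [h]; exact ha_i0]
      exact fun hc => hb3.2.1 hc.symm
    · rw [show a d3 = c0 j + eps by rw [h]; exact ha_j]
      exact fun hc => hb3.2.2 hc.symm
  have hab4 : a d4 ≠ b d4 := by
    rw [hb_d4]
    exact fun hc => (hagen d4 hd4d2).1 (hc ▸ hB0lo w6 d4)
    -- p and q avoid all other old segments
  have hpavoid : ∀ u : A, u ≠ w0 → p ∉ Set.Icc (ol u) (oh u) := by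
    intro u hu hmem
    rw [hasegA u, mem_aseg] at hmem
    obtain ⟨hco, -, -⟩ := hmem
    by_cases hdu : du u = i0
    · apply hcol u w0 hu
      rw [hasegA u, hasegA w0, hdu]
      apply collinear_pair_line
      intro m hm
      rw [← hco m (by rw [hdu]; exact hm)]
      exact hp_o m hm
    · have h1 := hco i0 (fun hc => hdu hc.symm)
      rw [hp_i0] at h1
      exact hPB (h1 ▸ hB0lo u i0)
  have hqavoid : ∀ u : A, u ≠ w6 → q ∉ Set.Icc (ol u) (oh u) := by
    intro u hu hmem
    rw [hasegA u, mem_aseg] at hmem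
    obtain ⟨hco, -, -⟩ := hmem
    by_cases hdu : du u = i6
    · apply hcol u w6 hu
      rw [hasegA u, hasegA w6, hdu]
      apply collinear_pair_line
      intro m hm
      rw [← hco m (by rw [hdu]; exact hm)]
      exact hq_o m hm
    · have h1 := hco i6 (fun hc => hdu hc.symm)
      rw [hq_i6] at h1
      exact hQB (h1 ▸ hB0lo u i6)
  have hp_j : p j = c0 j := hp_o j hji0
  have hq_j' : q j' = c6 j' := hq_o j' hj'i6
  -- the tiny segments avoid all other old segments
  have hS1disj : ∀ u : A, u ≠ w0 →
      Disjoint (aseg p j (c0 j) (c0 j + eps)) (Set.Icc (ol u) (oh u)) := by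
    intro u hu
    rw [hasegA u]
    rcases Classical.em (∀ m, m ≠ du u → p m = ol u m) with hall | hnall
    · have hrange : p (du u) < ol u (du u) ∨ oh u (du u) < p (du u) := by
        by_contra hcon
        push_neg at hcon
        exact hpavoid u hu (by
          rw [hasegA u, mem_aseg]
          exact ⟨hall, hcon.1, hcon.2⟩)
      by_cases hduj : du u = j
      · rw [hduj] at hrange ⊢
        apply aseg_disj_range (c' := ol u)
        rcases hrange with h | h
        · left
          rw [hp_j] at h
          exact hepssmall _ (hB0lo u j) h
        · right
          rw [hp_j] at h
          exact h
      · exact (aseg_disj_out (c := ol u) (d := du u) (r := ol u (du u))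
          (s := oh u (du u)) (c' := p) (d' := j) (r' := c0 j) (s' := c0 j + eps)
          hduj hrange).symm
    · push_neg at hnall
      obtain ⟨m, hm1, hm2⟩ := hnall
      by_cases hmj : m = j
      · subst hmj
        apply aseg_disj_out hm1
        rw [hp_j] at hm2
        rcases lt_or_gt_of_ne hm2 with h | h
        · right
          exact hepssmall _ (hB0lo u j) h
        · left; exact h
      · exact aseg_disj_ne m hmj hm1 hm2
  have hS5disj : ∀ u : A, u ≠ w6 →
      Disjoint (aseg q j' (c6 j') (c6 j' + eps')) (Set.Icc (ol u) (oh u)) := by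
    intro u hu
    rw [hasegA u]
    rcases Classical.em (∀ m, m ≠ du u → q m = ol u m) with hall | hnall
    · have hrange : q (du u) < ol u (du u) ∨ oh u (du u) < q (du u) := by
        by_contra hcon
        push_neg at hcon
        exact hqavoid u hu (by
          rw [hasegA u, mem_aseg]
          exact ⟨hall, hcon.1, hcon.2⟩)
      by_cases hduj : du u = j'
      · rw [hduj] at hrange ⊢
        apply aseg_disj_range (c' := ol u)
        rcases hrange with h | h
        · left
          rw [hq_j'] at h
          exact heps'small _ (hB0lo u j') h
        · right
          rw [hq_j'] at h
          exact h
      · exact (aseg_disj_out (c := ol u) (d := du u) (r := ol u (du u))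
          (s := oh u (du u)) (c' := q) (d' := j') (r' := c6 j') (s' := c6 j' + eps')
          hduj hrange).symm
    · push_neg at hnall
      obtain ⟨m, hm1, hm2⟩ := hnall
      by_cases hmj : m = j'
      · subst hmj
        apply aseg_disj_out hm1
        rw [hq_j'] at hm2
        rcases lt_or_gt_of_ne hm2 with h | h
        · right
          exact heps'small _ (hB0lo u j') h
        · left; exact h
      · exact aseg_disj_ne m hmj hm1 hm2
  -- the middle segments
  set m2 : Fin 3 → ℝ := Function.update a d2 (b d2) with hm2def
  set m4 : Fin 3 → ℝ := Function.update b d4 (a d4) with hm4def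
  set r2 : ℝ := min (a d2) (b d2) with hr2def
  set s2 : ℝ := max (a d2) (b d2) with hs2def
  set r3 : ℝ := min (a d3) (b d3) with hr3def
  set s3 : ℝ := max (a d3) (b d3) with hs3def
  set r4 : ℝ := min (a d4) (b d4) with hr4def
  set s4 : ℝ := max (a d4) (b d4) with hs4def
  have hr2s2 : r2 < s2 := min_lt_max.2 hab2
  have hr3s3 : r3 < s3 := min_lt_max.2 hab3
  have hr4s4 : r4 < s4 := min_lt_max.2 hab4
  have hm2_d2 : m2 d2 = b d2 := Function.update_self _ _ _
  have hm2_o : ∀ m, m ≠ d2 → m2 m = a m := fun m hm => Function.update_of_ne hm _ _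
  have hm4_d4 : m4 d4 = a d4 := Function.update_self _ _ _
  have hm4_o : ∀ m, m ≠ d4 → m4 m = b m := fun m hm => Function.update_of_ne hm _ _
  -- the new segment assignment
  set lo : V → Fin 3 → ℝ := fun x =>
    if x = v 1 then Function.update p j (c0 j)
    else if x = v 2 then Function.update a d2 r2
    else if x = v 3 then Function.update m2 d3 r3
    else if x = v 4 then Function.update b d4 r4
    else if x = v 5 then Function.update q j' (c6 j')
    else if hx : x ∈ A then ol ⟨x, hx⟩ else 0 with hlodef
  set hi : V → Fin 3 → ℝ := fun x =>
    if x = v 1 then Function.update p j (c0 j + eps)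
    else if x = v 2 then Function.update a d2 s2
    else if x = v 3 then Function.update m2 d3 s3
    else if x = v 4 then Function.update b d4 s4
    else if x = v 5 then Function.update q j' (c6 j' + eps')
    else if hx : x ∈ A then oh ⟨x, hx⟩ else 0 with hhidef
  -- evaluation
  have hlo1 : lo (v 1) = Function.update p j (c0 j) := by
    rw [hlodef]; simp
  have hhi1 : hi (v 1) = Function.update p j (c0 j + eps) := by
    rw [hhidef]; simp
  have hlo2 : lo (v 2) = Function.update a d2 r2 := by
    rw [hlodef]
    simp [hvne 2 1 (by decide)]
  have hhi2 : hi (v 2) = Function.update a d2 s2 := by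
    rw [hhidef]
    simp [hvne 2 1 (by decide)]
  have hlo3 : lo (v 3) = Function.update m2 d3 r3 := by
    rw [hlodef]
    simp [hvne 3 1 (by decide), hvne 3 2 (by decide)]
  have hhi3 : hi (v 3) = Function.update m2 d3 s3 := by
    rw [hhidef]
    simp [hvne 3 1 (by decide), hvne 3 2 (by decide)]
  have hlo4 : lo (v 4) = Function.update b d4 r4 := by
    rw [hlodef]
    simp [hvne 4 1 (by decide), hvne 4 2 (by decide), hvne 4 3 (by decide)]
  have hhi4 : hi (v 4) = Function.update b d4 s4 := by
    rw [hhidef]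
    simp [hvne 4 1 (by decide), hvne 4 2 (by decide), hvne 4 3 (by decide)]
  have hlo5 : lo (v 5) = Function.update q j' (c6 j') := by
    rw [hlodef]
    simp [hvne 5 1 (by decide), hvne 5 2 (by decide), hvne 5 3 (by decide),
      hvne 5 4 (by decide)]
  have hhi5 : hi (v 5) = Function.update q j' (c6 j' + eps') := by
    rw [hhidef]
    simp [hvne 5 1 (by decide), hvne 5 2 (by decide), hvne 5 3 (by decide),
      hvne 5 4 (by decide)]
  have hloA : ∀ (x : V) (hx : x ∈ A), lo x = ol ⟨x, hx⟩ := by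
    intro x hx
    obtain ⟨h1, h2, h3, h4, h5⟩ := (hmemA x).1 hx
    rw [hlodef]
    simp [h1, h2, h3, h4, h5, hx]
  have hhiA : ∀ (x : V) (hx : x ∈ A), hi x = oh ⟨x, hx⟩ := by
    intro x hx
    obtain ⟨h1, h2, h3, h4, h5⟩ := (hmemA x).1 hx
    rw [hhidef]
    simp [h1, h2, h3, h4, h5, hx]
  have heps1' : c0 j < c0 j + eps := by linarith
  have heps5' : c6 j' < c6 j' + eps' := by linarith
  -- segment identifications
  have hIcc1 : Set.Icc (lo (v 1)) (hi (v 1)) = aseg p j (c0 j) (c0 j + eps) := by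
    rw [hlo1, hhi1]; rfl
  have hIcc2 : Set.Icc (lo (v 2)) (hi (v 2)) = aseg a d2 r2 s2 := by
    rw [hlo2, hhi2]; rfl
  have hIcc3 : Set.Icc (lo (v 3)) (hi (v 3)) = aseg m2 d3 r3 s3 := by
    rw [hlo3, hhi3]; rfl
  have hIcc4 : Set.Icc (lo (v 4)) (hi (v 4)) = aseg b d4 r4 s4 := by
    rw [hlo4, hhi4]; rfl
  have hIcc5 : Set.Icc (lo (v 5)) (hi (v 5)) = aseg q j' (c6 j') (c6 j' + eps') := by
    rw [hlo5, hhi5]; rfl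
  have hIccA' : ∀ (x : V) (hx : x ∈ A),
      Set.Icc (lo x) (hi x) = Set.Icc (ol ⟨x, hx⟩) (oh ⟨x, hx⟩) := by
    intro x hx; rw [hloA x hx, hhiA x hx]
  -- ## pair (v 0, v 1) and general (A, v 1)
  have goodA1 : ∀ (x : V) (hx : x ∈ A), GoodPair G lo hi x (v 1) := by
    intro x hx
    by_cases hx0 : x = v 0
    · subst hx0
      have hxw : (⟨v 0, hx⟩ : A) = w0 := rfl
      have hIcc0 : Set.Icc (lo (v 0)) (hi (v 0)) =
          aseg c0 i0 (c0 i0) (oh w0 i0) := by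
        rw [hIccA' (v 0) hx, hxw]; exact hasegA w0
      refine goodPair_of_touch adj01 p ?_ ?_ ?_ ?_ ?_
      · rw [hIcc0, mem_aseg]
        exact ⟨fun m hm => hp_o m hm, by rw [hp_i0]; exact hP1.le, by rw [hp_i0]; exact hP2.le⟩
      · rw [hIcc1, mem_aseg]
        refine ⟨fun m hm => rfl, ?_, ?_⟩
        · rw [hp_j]
        · rw [hp_j]; linarith
      · rw [hIcc0, hIcc1]
        have hsub := aseg_inter_subset (c := c0) (d := i0) (r := c0 i0) (s := oh w0 i0)
          (c' := p) (d' := j) (r' := c0 j) (s' := c0 j + eps) (Ne.symm hji0)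
        have hzeq : (fun m => if m = i0 then p i0 else c0 m) = p := by
          funext m
          by_cases hm : m = i0
          · subst hm; simp
          · simp only [if_neg hm]; exact (hp_o m hm).symm
        rwa [hzeq] at hsub
      · right
        rw [hlo1, hhi1, relint_aseg heps1']
        rintro ⟨-, h2, -⟩
        rw [hp_j] at h2
        exact lt_irrefl _ h2
      · rw [hIcc0, hIcc1]
        exact aseg_nc_dir (hdu1 w0) heps1' (Ne.symm hji0)
    · set u : A := ⟨x, hx⟩ with hudef
      have hu : u ≠ w0 := fun hc => hx0 (congrArg Subtype.val hc)
      refine goodPair_of_disjoint ?_ ?_ ?_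
      · intro hc
        rcases (hnb1 x).1 hc.symm with h | h
        · exact hx0 h
        · exact hv2A (h ▸ hx)
      · rw [hIccA' x hx, hIcc1]
        exact (hS1disj u hu).symm
      · rw [hIccA' x hx, hIcc1, hasegA u]
        by_cases hcase : du u = j
        · refine aseg_nc_sep (hdu1 u) heps1'.le i0 ?_ (Ne.symm hji0) ?_
          · rw [hcase]; exact Ne.symm hji0
          · rw [hp_i0]; exact fun hc => hPB (hc ▸ hB0lo u i0)
        · exact aseg_nc_dir (hdu1 u) heps1' hcase
  -- ## general (A, v 2)
  have goodA2 : ∀ (x : V) (hx : x ∈ A), GoodPair G lo hi x (v 2) := by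
    intro x hx
    set u : A := ⟨x, hx⟩ with hudef
    have hgen2 : ol u i0 ≠ a i0 := by
      rw [ha_i0]; exact fun hc => hPB (hc ▸ hB0lo u i0)
    refine goodPair_of_disjoint ?_ ?_ ?_
    · intro hc
      rcases (hnb2 x).1 hc.symm with h | h
      · exact hv1A (h ▸ hx)
      · exact hv3A (h ▸ hx)
    · rw [hIccA' x hx, hIcc2, hasegA u]
      by_cases hcase : du u = i0
      · refine aseg_disj_ne j ?_ hjd2 ?_
        · rw [hcase]; exact hji0
        · rw [ha_j]; exact fun hc => hepsB _ (hB0lo u j) hc.symm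
      · exact aseg_disj_ne i0 (fun hc => hcase hc.symm) (Ne.symm hd2i0) hgen2
    · rw [hIccA' x hx, hIcc2, hasegA u]
      by_cases hcase : du u = d2
      · refine aseg_nc_sep (hdu1 u) hr2s2.le i0 ?_ (Ne.symm hd2i0) hgen2
        rw [hcase]; exact Ne.symm hd2i0
      · exact aseg_nc_dir (hdu1 u) hr2s2 hcase
  -- ## general (A, v 3)
  have goodA3 : ∀ (x : V) (hx : x ∈ A), GoodPair G lo hi x (v 3) := by
    intro x hx
    set u : A := ⟨x, hx⟩ with hudef
    have hgen3 : ol u d2 ≠ m2 d2 := by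
      rw [hm2_d2]; exact fun hc => (hbgen d2 (Ne.symm hd4d2)).1 (hc ▸ hB0lo u d2)
    have hgen3' : ol u d4 ≠ m2 d4 := by
      rw [hm2_o d4 hd4d2]; exact fun hc => (hagen d4 hd4d2).1 (hc ▸ hB0lo u d4)
    refine goodPair_of_disjoint ?_ ?_ ?_
    · intro hc
      rcases (hnb3 x).1 hc.symm with h | h
      · exact hv2A (h ▸ hx)
      · exact hv4A (h ▸ hx)
    · rw [hIccA' x hx, hIcc3, hasegA u]
      by_cases hcase : du u = d2
      · refine aseg_disj_ne d4 ?_ (Ne.symm hd3d4) hgen3'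
        rw [hcase]; exact hd4d2
      · exact aseg_disj_ne d2 (fun hc => hcase hc.symm) (Ne.symm hd3d2) hgen3
    · rw [hIccA' x hx, hIcc3, hasegA u]
      by_cases hcase : du u = d3
      · refine aseg_nc_sep (hdu1 u) hr3s3.le d2 ?_ (Ne.symm hd3d2) hgen3
        rw [hcase]; exact Ne.symm hd3d2
      · exact aseg_nc_dir (hdu1 u) hr3s3 hcase
  -- ## general (A, v 4)
  have goodA4 : ∀ (x : V) (hx : x ∈ A), GoodPair G lo hi x (v 4) := by
    intro x hx
    set u : A := ⟨x, hx⟩ with hudef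
    have hgen4 : ol u i6 ≠ b i6 := by
      rw [hb_i6]; exact fun hc => hQB (hc ▸ hB0lo u i6)
    refine goodPair_of_disjoint ?_ ?_ ?_
    · intro hc
      rcases (hnb4 x).1 hc.symm with h | h
      · exact hv3A (h ▸ hx)
      · exact hv5A (h ▸ hx)
    · rw [hIccA' x hx, hIcc4, hasegA u]
      by_cases hcase : du u = i6
      · refine aseg_disj_ne j' ?_ hj'd4 ?_
        · rw [hcase]; exact hj'i6
        · rw [hb_j']; exact fun hc => heps'B _ (hB0lo u j') hc.symm
      · exact aseg_disj_ne i6 (fun hc => hcase hc.symm) (Ne.symm hd4i6) hgen4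
    · rw [hIccA' x hx, hIcc4, hasegA u]
      by_cases hcase : du u = d4
      · refine aseg_nc_sep (hdu1 u) hr4s4.le i6 ?_ (Ne.symm hd4i6) hgen4
        rw [hcase]; exact Ne.symm hd4i6
      · exact aseg_nc_dir (hdu1 u) hr4s4 hcase
  -- ## pair (v 6, v 5) and general (A, v 5)
  have goodA5 : ∀ (x : V) (hx : x ∈ A), GoodPair G lo hi x (v 5) := by
    intro x hx
    by_cases hx6 : x = v 6
    · subst hx6
      have hxw : (⟨v 6, hx⟩ : A) = w6 := rfl
      have hIcc6 : Set.Icc (lo (v 6)) (hi (v 6)) =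
          aseg c6 i6 (c6 i6) (oh w6 i6) := by
        rw [hIccA' (v 6) hx, hxw]; exact hasegA w6
      refine goodPair_of_touch adj56.symm q ?_ ?_ ?_ ?_ ?_
      · rw [hIcc6, mem_aseg]
        exact ⟨fun m hm => hq_o m hm, by rw [hq_i6]; exact hQ1.le, by rw [hq_i6]; exact hQ2.le⟩
      · rw [hIcc5, mem_aseg]
        refine ⟨fun m hm => rfl, ?_, ?_⟩
        · rw [hq_j']
        · rw [hq_j']; linarith
      · rw [hIcc6, hIcc5]
        have hsub := aseg_inter_subset (c := c6) (d := i6) (r := c6 i6) (s := oh w6 i6)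
          (c' := q) (d' := j') (r' := c6 j') (s' := c6 j' + eps') (Ne.symm hj'i6)
        have hzeq : (fun m => if m = i6 then q i6 else c6 m) = q := by
          funext m
          by_cases hm : m = i6
          · subst hm; simp
          · simp only [if_neg hm]; exact (hq_o m hm).symm
        rwa [hzeq] at hsub
      · right
        rw [hlo5, hhi5, relint_aseg heps5']
        rintro ⟨-, h2, -⟩
        rw [hq_j'] at h2
        exact lt_irrefl _ h2
      · rw [hIcc6, hIcc5]
        exact aseg_nc_dir (hdu1 w6) heps5' (Ne.symm hj'i6)
    · set u : A := ⟨x, hx⟩ with hudef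
      have hu : u ≠ w6 := fun hc => hx6 (congrArg Subtype.val hc)
      refine goodPair_of_disjoint ?_ ?_ ?_
      · intro hc
        rcases (hnb5 x).1 hc.symm with h | h
        · exact hv4A (h ▸ hx)
        · exact hx6 h
      · rw [hIccA' x hx, hIcc5]
        exact (hS5disj u hu).symm
      · rw [hIccA' x hx, hIcc5, hasegA u]
        by_cases hcase : du u = j'
        · refine aseg_nc_sep (hdu1 u) heps5'.le i6 ?_ (Ne.symm hj'i6) ?_
          · rw [hcase]; exact Ne.symm hj'i6
          · rw [hq_i6]; exact fun hc => hQB (hc ▸ hB0lo u i6)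
        · exact aseg_nc_dir (hdu1 u) heps5' hcase

  -- ## pair (v 1, v 2) : touch at a
  have good12 : GoodPair G lo hi (v 1) (v 2) := by
    refine goodPair_of_touch adj12 a ?_ ?_ ?_ ?_ ?_
    · rw [hIcc1, mem_aseg]
      refine ⟨fun m hm => Function.update_of_ne hm _ _, ?_, ?_⟩
      · rw [ha_j]; linarith
      · rw [ha_j]
    · rw [hIcc2, mem_aseg]
      exact ⟨fun m hm => rfl, min_le_left _ _, le_max_left _ _⟩
    · rw [hIcc1, hIcc2]
      have hsub := aseg_inter_subset (c := p) (d := j) (r := c0 j) (s := c0 j + eps)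
        (c' := a) (d' := d2) (r' := r2) (s' := s2) hjd2
      have hzeq : (fun m => if m = j then a j else p m) = a := by
        funext m
        by_cases hm : m = j
        · subst hm; simp
        · simp only [if_neg hm]; exact (Function.update_of_ne hm _ _).symm
      rwa [hzeq] at hsub
    · left
      rw [hlo1, hhi1, relint_aseg heps1']
      rintro ⟨-, -, h3⟩
      rw [ha_j] at h3
      exact lt_irrefl _ h3
    · rw [hIcc1, hIcc2]
      exact aseg_nc_dir heps1' hr2s2 hjd2
  -- ## pair (v 1, v 3)
  have hgen13 : p d2 ≠ m2 d2 := by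
    rw [hp_o d2 hd2i0, hm2_d2]
    exact fun hc => (hbgen d2 (Ne.symm hd4d2)).1 (hc ▸ hB0lo w0 d2)
  have good13 : GoodPair G lo hi (v 1) (v 3) := by
    refine goodPair_of_disjoint ?_ ?_ ?_
    · intro hc
      rcases (hnb1 (v 3)).1 hc with h | h
      · exact hvne 3 0 (by decide) h
      · exact hvne 3 2 (by decide) h
    · rw [hIcc1, hIcc3]
      exact aseg_disj_ne d2 (Ne.symm hjd2) (Ne.symm hd3d2) hgen13
    · rw [hIcc1, hIcc3]
      exact aseg_nc_sep heps1' hr3s3.le d2 (Ne.symm hjd2) (Ne.symm hd3d2) hgen13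
  -- ## pair (v 1, v 4)
  have hgen14 : p d2 ≠ b d2 := by
    rw [hp_o d2 hd2i0]
    exact fun hc => (hbgen d2 (Ne.symm hd4d2)).1 (hc ▸ hB0lo w0 d2)
  have good14 : GoodPair G lo hi (v 1) (v 4) := by
    refine goodPair_of_disjoint ?_ ?_ ?_
    · intro hc
      rcases (hnb1 (v 4)).1 hc with h | h
      · exact hvne 4 0 (by decide) h
      · exact hvne 4 2 (by decide) h
    · rw [hIcc1, hIcc4]
      exact aseg_disj_ne d2 (Ne.symm hjd2) (Ne.symm hd4d2) hgen14
    · rw [hIcc1, hIcc4]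
      exact aseg_nc_sep heps1' hr4s4.le d2 (Ne.symm hjd2) (Ne.symm hd4d2) hgen14
  -- ## pair (v 1, v 5)
  have hpq_i0 : p i0 ≠ q i0 := by
    rw [hp_i0]
    by_cases hi06 : i0 = i6
    · rw [show q i0 = Q by rw [hi06]; exact hq_i6]
      exact Ne.symm hQP
    · rw [hq_o i0 hi06]
      exact fun hc => hPB (hc ▸ hB0lo w6 i0)
  have good15 : GoodPair G lo hi (v 1) (v 5) := by
    refine goodPair_of_disjoint ?_ ?_ ?_
    · intro hc
      rcases (hnb1 (v 5)).1 hc with h | h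
      · exact hvne 5 0 (by decide) h
      · exact hvne 5 2 (by decide) h
    · rw [hIcc1, hIcc5]
      by_cases hj'i0 : j' = i0
      · have hd2i6 : d2 = i6 := by
          refine hd2mem.resolve_right ?_
          rw [hj'i0]; exact hd2i0
        refine aseg_disj_ne d2 (Ne.symm hjd2) ?_ ?_
        · rw [hj'i0]; exact hd2i0
        · rw [hp_o d2 hd2i0, show q d2 = Q by rw [hd2i6]; exact hq_i6]
          exact fun hc => hQB (hc ▸ hB0lo w0 d2)
      · exact aseg_disj_ne i0 (Ne.symm hji0) (fun hc => hj'i0 hc.symm) hpq_i0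
    · rw [hIcc1, hIcc5]
      by_cases hjj' : j = j'
      · refine aseg_nc_sep heps1' heps5'.le i0 (Ne.symm hji0) ?_ hpq_i0
        rw [← hjj']; exact Ne.symm hji0
      · exact aseg_nc_dir heps1' heps5' hjj'
  -- ## pair (v 2, v 3) : touch at m2
  have good23 : GoodPair G lo hi (v 2) (v 3) := by
    refine goodPair_of_touch adj23 m2 ?_ ?_ ?_ ?_ ?_
    · rw [hIcc2, mem_aseg]
      refine ⟨fun m hm => hm2_o m hm, ?_, ?_⟩
      · rw [hm2_d2]; exact min_le_right _ _
      · rw [hm2_d2]; exact le_max_right _ _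
    · rw [hIcc3, mem_aseg]
      refine ⟨fun m hm => rfl, ?_, ?_⟩
      · rw [hm2_o d3 hd3d2]; exact min_le_left _ _
      · rw [hm2_o d3 hd3d2]; exact le_max_left _ _
    · rw [hIcc2, hIcc3]
      have hsub := aseg_inter_subset (c := a) (d := d2) (r := r2) (s := s2)
        (c' := m2) (d' := d3) (r' := r3) (s' := s3) (Ne.symm hd3d2)
      have hzeq : (fun m => if m = d2 then m2 d2 else a m) = m2 := by
        funext m
        by_cases hm : m = d2
        · subst hm; simp
        · simp only [if_neg hm]; exact (hm2_o m hm).symm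
      rwa [hzeq] at hsub
    · left
      rw [hlo2, hhi2, relint_aseg hr2s2]
      rintro ⟨-, h2, h3⟩
      rw [hm2_d2] at h2 h3
      exact notMem_Ioo_right (a d2) (b d2) ⟨h2, h3⟩
    · rw [hIcc2, hIcc3]
      exact aseg_nc_dir hr2s2 hr3s3 (Ne.symm hd3d2)
  -- ## pair (v 2, v 4)
  have good24 : GoodPair G lo hi (v 2) (v 4) := by
    refine goodPair_of_disjoint ?_ ?_ ?_
    · intro hc
      rcases (hnb2 (v 4)).1 hc with h | h
      · exact hvne 4 1 (by decide) h
      · exact hvne 4 3 (by decide) h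
    · rw [hIcc2, hIcc4]
      exact aseg_disj_ne d3 hd3d2 hd3d4 hab3
    · rw [hIcc2, hIcc4]
      exact aseg_nc_sep hr2s2 hr4s4.le d3 hd3d2 hd3d4 hab3
  -- ## pair (v 2, v 5)
  have haq_i0 : a i0 ≠ q i0 := by rw [ha_i0, ← hp_i0]; exact hpq_i0
  have good25 : GoodPair G lo hi (v 2) (v 5) := by
    refine goodPair_of_disjoint ?_ ?_ ?_
    · intro hc
      rcases (hnb2 (v 5)).1 hc with h | h
      · exact hvne 5 1 (by decide) h
      · exact hvne 5 3 (by decide) h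
    · rw [hIcc2, hIcc5]
      by_cases hj'i0 : j' = i0
      · refine aseg_disj_ne j hjd2 ?_ ?_
        · rw [hj'i0]; exact hji0
        · rw [ha_j]
          by_cases hji6 : j = i6
          · rw [show q j = Q by rw [hji6]; exact hq_i6]
            exact hepsQ
          · rw [hq_o j hji6]
            exact hepsB _ (hB0lo w6 j)
      · exact aseg_disj_ne i0 (Ne.symm hd2i0) (fun hc => hj'i0 hc.symm) haq_i0
    · rw [hIcc2, hIcc5]
      by_cases hd2j' : d2 = j'
      · refine aseg_nc_sep hr2s2 heps5'.le i0 (Ne.symm hd2i0) ?_ haq_i0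
        rw [← hd2j']; exact Ne.symm hd2i0
      · exact aseg_nc_dir hr2s2 heps5' hd2j'
  -- ## pair (v 3, v 4) : touch at m4
  have good34 : GoodPair G lo hi (v 3) (v 4) := by
    have hm4m2 : ∀ m, m ≠ d3 → m4 m = m2 m := by
      intro m hm
      rcases coverm m with h | h | h
      · subst h; rw [hm4_o d2 (Ne.symm hd4d2), hm2_d2]
      · subst h; rw [hm4_d4, hm2_o d4 hd4d2]
      · exact absurd h hm
    refine goodPair_of_touch adj34 m4 ?_ ?_ ?_ ?_ ?_
    · rw [hIcc3, mem_aseg]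
      refine ⟨hm4m2, ?_, ?_⟩
      · rw [hm4_o d3 hd3d4]; exact min_le_right _ _
      · rw [hm4_o d3 hd3d4]; exact le_max_right _ _
    · rw [hIcc4, mem_aseg]
      refine ⟨fun m hm => hm4_o m hm, ?_, ?_⟩
      · rw [hm4_d4]; exact min_le_left _ _
      · rw [hm4_d4]; exact le_max_left _ _
    · rw [hIcc3, hIcc4]
      have hsub := aseg_inter_subset (c := m2) (d := d3) (r := r3) (s := s3)
        (c' := b) (d' := d4) (r' := r4) (s' := s4) hd3d4
      have hzeq : (fun m => if m = d3 then b d3 else m2 m) = m4 := by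
        funext m
        by_cases hm : m = d3
        · subst hm; simp only [if_pos rfl]
          exact (hm4_o d3 hd3d4).symm
        · simp only [if_neg hm]; exact (hm4m2 m hm).symm
      rwa [hzeq] at hsub
    · left
      rw [hlo3, hhi3, relint_aseg hr3s3]
      rintro ⟨-, h2, h3⟩
      rw [hm4_o d3 hd3d4] at h2 h3
      exact notMem_Ioo_right (a d3) (b d3) ⟨h2, h3⟩
    · rw [hIcc3, hIcc4]
      exact aseg_nc_dir hr3s3 hr4s4 hd3d4
  -- ## pair (v 3, v 5)
  have hgen35 : m2 d4 ≠ q d4 := by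
    rw [hm2_o d4 hd4d2, hq_o d4 hd4i6]
    exact fun hc => (hagen d4 hd4d2).1 (hc ▸ hB0lo w6 d4)
  have good35 : GoodPair G lo hi (v 3) (v 5) := by
    refine goodPair_of_disjoint ?_ ?_ ?_
    · intro hc
      rcases (hnb3 (v 5)).1 hc with h | h
      · exact hvne 5 2 (by decide) h
      · exact hvne 5 4 (by decide) h
    · rw [hIcc3, hIcc5]
      exact aseg_disj_ne d4 (Ne.symm hd3d4) (Ne.symm hj'd4) hgen35
    · rw [hIcc3, hIcc5]
      exact aseg_nc_sep hr3s3 heps5'.le d4 (Ne.symm hd3d4) (Ne.symm hj'd4) hgen35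
  -- ## pair (v 4, v 5) : touch at b
  have good45 : GoodPair G lo hi (v 4) (v 5) := by
    refine goodPair_of_touch adj45 b ?_ ?_ ?_ ?_ ?_
    · rw [hIcc4, mem_aseg]
      exact ⟨fun m hm => rfl, min_le_right _ _, le_max_right _ _⟩
    · rw [hIcc5, mem_aseg]
      refine ⟨fun m hm => Function.update_of_ne hm _ _, ?_, ?_⟩
      · rw [hb_j']; linarith
      · rw [hb_j']
    · rw [hIcc4, hIcc5]
      have hsub := aseg_inter_subset (c := b) (d := d4) (r := r4) (s := s4)
        (c' := q) (d' := j') (r' := c6 j') (s' := c6 j' + eps') (Ne.symm hj'd4)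
      have hzeq : (fun m => if m = d4 then q d4 else b m) = b := by
        funext m
        by_cases hm : m = d4
        · subst hm; simp [hq_o d4 hd4i6, hb_d4]
        · simp only [if_neg hm]
      rwa [hzeq] at hsub
    · right
      rw [hlo5, hhi5, relint_aseg heps5']
      rintro ⟨-, -, h3⟩
      rw [hb_j'] at h3
      exact lt_irrefl _ h3
    · rw [hIcc4, hIcc5]
      exact aseg_nc_dir hr4s4 heps5' (Ne.symm hj'd4)
  -- ## old pairs
  have goodAA : ∀ (x y : V) (hx : x ∈ A) (hy : y ∈ A), x ≠ y → GoodPair G lo hi x y := by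
    intro x y hx hy hxy
    have hne : (⟨x, hx⟩ : A) ≠ ⟨y, hy⟩ := fun hc => hxy (congrArg Subtype.val hc)
    refine ⟨?_, ?_, ?_⟩
    · rw [hIccA' x hx, hIccA' y hy]
      exact hadjA x y hx hy hxy
    · rw [hloA x hx, hhiA x hx, hloA y hy, hhiA y hy]
      exact hrel _ _ hne
    · rw [hIccA' x hx, hIccA' y hy]
      exact hcol _ _ hne

  -- classification of vertices
  have hclass : ∀ x : V, x = v 1 ∨ x = v 2 ∨ x = v 3 ∨ x = v 4 ∨ x = v 5 ∨ x ∈ A := by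
    intro x
    by_cases h1 : x = v 1
    · exact Or.inl h1
    by_cases h2 : x = v 2
    · exact Or.inr (Or.inl h2)
    by_cases h3 : x = v 3
    · exact Or.inr (Or.inr (Or.inl h3))
    by_cases h4 : x = v 4
    · exact Or.inr (Or.inr (Or.inr (Or.inl h4)))
    by_cases h5 : x = v 5
    · exact Or.inr (Or.inr (Or.inr (Or.inr (Or.inl h5))))
    · exact Or.inr (Or.inr (Or.inr (Or.inr (Or.inr ((hmemA x).2 ⟨h1, h2, h3, h4, h5⟩)))))
  -- all pairs are good
  have good : ∀ x y : V, x ≠ y → GoodPair G lo hi x y := by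
    intro x y hxy
    rcases hclass x with hx|hx|hx|hx|hx|hx <;> rcases hclass y with hy|hy|hy|hy|hy|hy
    · subst hx; subst hy; exact absurd rfl hxy
    · subst hx; subst hy; exact good12
    · subst hx; subst hy; exact good13
    · subst hx; subst hy; exact good14
    · subst hx; subst hy; exact good15
    · subst hx; exact (goodA1 _ hy).symm
    · subst hx; subst hy; exact good12.symm
    · subst hx; subst hy; exact absurd rfl hxy
    · subst hx; subst hy; exact good23
    · subst hx; subst hy; exact good24
    · subst hx; subst hy; exact good25
    · subst hx; exact (goodA2 _ hy).symm
    · subst hx; subst hy; exact good13.symm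
    · subst hx; subst hy; exact good23.symm
    · subst hx; subst hy; exact absurd rfl hxy
    · subst hx; subst hy; exact good34
    · subst hx; subst hy; exact good35
    · subst hx; exact (goodA3 _ hy).symm
    · subst hx; subst hy; exact good14.symm
    · subst hx; subst hy; exact good24.symm
    · subst hx; subst hy; exact good34.symm
    · subst hx; subst hy; exact absurd rfl hxy
    · subst hx; subst hy; exact good45
    · subst hx; exact (goodA4 _ hy).symm
    · subst hx; subst hy; exact good15.symm
    · subst hx; subst hy; exact good25.symm
    · subst hx; subst hy; exact good35.symm
    · subst hx; subst hy; exact good45.symm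
    · subst hx; subst hy; exact absurd rfl hxy
    · subst hx; exact (goodA5 _ hy).symm
    · subst hy; exact goodA1 _ hx
    · subst hy; exact goodA2 _ hx
    · subst hy; exact goodA3 _ hx
    · subst hy; exact goodA4 _ hx
    · subst hy; exact goodA5 _ hx
    · exact goodAA _ _ hx hy hxy
  -- the first property
  have hbul : ∀ x : V, ∃ i, lo x i < hi x i ∧ ∀ m, m ≠ i → lo x m = hi x m := by
    intro x
    rcases hclass x with hx|hx|hx|hx|hx|hx
    · subst hx; rw [hlo1, hhi1]; exact bullet1_aseg heps1'
    · subst hx; rw [hlo2, hhi2]; exact bullet1_aseg hr2s2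
    · subst hx; rw [hlo3, hhi3]; exact bullet1_aseg hr3s3
    · subst hx; rw [hlo4, hhi4]; exact bullet1_aseg hr4s4
    · subst hx; rw [hlo5, hhi5]; exact bullet1_aseg heps5'
    · rw [hloA x hx, hhiA x hx]
      exact ⟨du ⟨x, hx⟩, hdu1 _, fun m hm => hdu2 _ m hm⟩
  exact ⟨lo, hi, hbul, fun u w hne => (good u w hne).1,
    fun u w hne => (good u w hne).2.1, fun u w hne => (good u w hne).2.2⟩
end

section
/- Let G be a finite graph whose vertex set is partitioned into two sets K and P, such that K induces a complete graph in G, P induces a path v₀v₁⋯v_p in G, and for every vertex u of K, all the neighbors of u in P lie in a subpath of P with at most 3 vertices (equivalently, any two neighbors of u in P are at distance at most two along P). Then for any real number t, G has a 3-box representation (ℐ₁, ℐ₂, ℐ₃) (given by three families of intervals, one per coordinate) such that in ℐ₃ every interval of a vertex of K has right endpoint exactly t, while every interval of a vertex of P has right endpoint strictly less than t. -/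
namespace BoxAux

lemma forall_fin3 {P : Fin 3 → Prop} : (∀ k, P k) ↔ P 0 ∧ P 1 ∧ P 2 :=
  ⟨fun h => ⟨h 0, h 1, h 2⟩, fun ⟨a, b, c⟩ k => by fin_cases k <;> assumption⟩

lemma nat_le_of_cast_le {a b : ℕ} {c : ℝ} (h : (a:ℝ) ≤ (b:ℝ) + c) (hc : c < 1) : a ≤ b := by
  by_contra hcon
  have h2 : (b:ℝ) + 1 ≤ (a:ℝ) := by exact_mod_cast Nat.succ_le_of_lt (not_le.mp hcon)
  linarith

lemma half_le_iff {a b : ℕ} : (a:ℝ) + 1/2 ≤ (b:ℝ) + 1 ↔ a ≤ b := by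
  constructor
  · intro h
    exact nat_le_of_cast_le (c := 1/2) (by linarith) (by norm_num)
  · intro h
    have : (a:ℝ) ≤ (b:ℝ) := by exact_mod_cast h
    linarith

lemma keyIneq (i B : ℕ) (sk : Prop) [Decidable sk] :
    (i : ℝ) + (if Even i ↔ Even B then 0 else 3/2) ≤ (B : ℝ) + (if sk then 0 else 1/2) ↔
      (i ≤ B ∧ (sk → i + 1 ≠ B)) := by
  by_cases hs : sk <;> by_cases hp : (Even i ↔ Even B) <;>
      have hp' := hp <;> rw [Nat.even_iff, Nat.even_iff] at hp'
  · rw [if_pos hp, if_pos hs]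
    constructor
    · intro h
      have h1 : i ≤ B := by exact_mod_cast (by linarith : (i:ℝ) ≤ (B:ℝ))
      exact ⟨h1, fun _ => by omega⟩
    · rintro ⟨h1, _⟩
      have : (i:ℝ) ≤ (B:ℝ) := by exact_mod_cast h1
      linarith
  · rw [if_neg hp, if_pos hs]
    constructor
    · intro h
      have h1 : i ≤ B := nat_le_of_cast_le (c := 0) (by linarith) (by norm_num)
      refine ⟨h1, fun _ hiB => ?_⟩
      have : ((i:ℝ) + 1) = (B:ℝ) := by exact_mod_cast congrArg (Nat.cast : ℕ → ℝ) hiB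
      linarith
    · rintro ⟨h1, h2⟩
      have h2' := h2 hs
      have h3 : i + 2 ≤ B := by omega
      have : (i:ℝ) + 2 ≤ (B:ℝ) := by exact_mod_cast h3
      linarith
  · rw [if_pos hp, if_neg hs]
    simp only [hs, false_implies, and_true]
    constructor
    · intro h
      exact nat_le_of_cast_le (c := 1/2) (by linarith) (by norm_num)
    · intro h
      have : (i:ℝ) ≤ (B:ℝ) := by exact_mod_cast h
      linarith
  · rw [if_neg hp, if_neg hs]
    simp only [hs, false_implies, and_true]
    constructor
    · intro h
      have h1 : i + 1 ≤ B := by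
        exact_mod_cast (by push_cast; linarith : ((i+1:ℕ):ℝ) ≤ (B:ℝ))
      omega
    · intro h
      have h3 : i + 1 ≤ B := by omega
      have : (i:ℝ) + 1 ≤ (B:ℝ) := by exact_mod_cast h3
      linarith

lemma fle_iff {t a b : ℝ} : t - Real.exp (-a) ≤ t - Real.exp (-b) ↔ a ≤ b := by
  rw [sub_le_sub_iff_left, Real.exp_le_exp, neg_le_neg_iff]

variable {V : Type*} (G : SimpleGraph V) {p : ℕ} (vp : Fin (p + 1) → V) (t : ℝ)

noncomputable def nbrs (u : V) : Finset (Fin (p + 1)) :=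
  @Finset.filter _ (fun i => G.Adj u (vp i)) (Classical.decPred _) Finset.univ

lemma mem_nbrs {u : V} {i : Fin (p + 1)} : i ∈ nbrs G vp u ↔ G.Adj u (vp i) := by
  simp [nbrs]

noncomputable def mn (u : V) : ℕ :=
  if h : (nbrs G vp u).Nonempty then (((nbrs G vp u).min' h : Fin (p+1)) : ℕ) else 0

noncomputable def Mx (u : V) : ℕ :=
  if h : (nbrs G vp u).Nonempty then (((nbrs G vp u).max' h : Fin (p+1)) : ℕ) else 0

def skip (u : V) : Prop :=
  Mx G vp u = mn G vp u + 2 ∧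
    ∀ j : Fin (p + 1), (j : ℕ) = mn G vp u + 1 → ¬ G.Adj u (vp j)

noncomputable def B0 (u : V) : ℕ := if Odd (Mx G vp u) then Mx G vp u else Mx G vp u + 1
noncomputable def B1 (u : V) : ℕ := if Even (Mx G vp u) then Mx G vp u else Mx G vp u + 1
def sk0 (u : V) : Prop := skip G vp u ∧ Odd (Mx G vp u)
def sk1 (u : V) : Prop := skip G vp u ∧ Even (Mx G vp u)

lemma odd_B0 (u : V) : Odd (B0 G vp u) := by
  unfold B0; by_cases h : Odd (Mx G vp u)
  · rwa [if_pos h]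
  · rw [if_neg h]; rw [Nat.odd_iff] at *; omega

lemma even_B1 (u : V) : Even (B1 G vp u) := by
  unfold B1; by_cases h : Even (Mx G vp u)
  · rwa [if_pos h]
  · rw [if_neg h]; rw [Nat.even_iff] at *; omega

lemma Mx_le_B0 (u : V) : Mx G vp u ≤ B0 G vp u := by
  unfold B0; split <;> omega

lemma Mx_le_B1 (u : V) : Mx G vp u ≤ B1 G vp u := by
  unfold B1; split <;> omega

lemma mn_le_of_adj {u : V} {i : Fin (p+1)} (h : G.Adj u (vp i)) : mn G vp u ≤ (i : ℕ) := by
  have hne : (nbrs G vp u).Nonempty := ⟨i, (mem_nbrs G vp).mpr h⟩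
  rw [mn, dif_pos hne]
  exact Fin.le_def.mp (Finset.min'_le _ _ ((mem_nbrs G vp).mpr h))

lemma le_Mx_of_adj {u : V} {i : Fin (p+1)} (h : G.Adj u (vp i)) : (i : ℕ) ≤ Mx G vp u := by
  have hne : (nbrs G vp u).Nonempty := ⟨i, (mem_nbrs G vp).mpr h⟩
  rw [Mx, dif_pos hne]
  exact Fin.le_def.mp (Finset.le_max' _ _ ((mem_nbrs G vp).mpr h))

lemma adj_mn {u : V} (hne : (nbrs G vp u).Nonempty) :
    G.Adj u (vp ((nbrs G vp u).min' hne)) ∧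
      mn G vp u = (((nbrs G vp u).min' hne : Fin (p+1)) : ℕ) :=
  ⟨(mem_nbrs G vp).mp (Finset.min'_mem _ hne), by rw [mn, dif_pos hne]⟩

lemma adj_Mx {u : V} (hne : (nbrs G vp u).Nonempty) :
    G.Adj u (vp ((nbrs G vp u).max' hne)) ∧
      Mx G vp u = (((nbrs G vp u).max' hne : Fin (p+1)) : ℕ) :=
  ⟨(mem_nbrs G vp).mp (Finset.max'_mem _ hne), by rw [Mx, dif_pos hne]⟩

lemma adj_iff_nat {u : V}
    (hU : ∀ i j : Fin (p+1), G.Adj u (vp i) → G.Adj u (vp j) → (i : ℕ) ≤ (j : ℕ) + 2)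
    (i : Fin (p+1)) :
    G.Adj u (vp i) ↔
      ((nbrs G vp u).Nonempty ∧ mn G vp u ≤ (i : ℕ) ∧
        (i : ℕ) ≤ B0 G vp u ∧ (sk0 G vp u → (i : ℕ) + 1 ≠ B0 G vp u) ∧
        (i : ℕ) ≤ B1 G vp u ∧ (sk1 G vp u → (i : ℕ) + 1 ≠ B1 G vp u)) := by
  constructor
  · intro hadj
    have hne : (nbrs G vp u).Nonempty := ⟨i, (mem_nbrs G vp).mpr hadj⟩
    have h1 := mn_le_of_adj G vp hadj
    have h2 := le_Mx_of_adj G vp hadj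
    refine ⟨hne, h1, le_trans h2 (Mx_le_B0 G vp u), ?_, le_trans h2 (Mx_le_B1 G vp u), ?_⟩
    · rintro ⟨hskip, hodd⟩ heq
      rw [B0, if_pos hodd] at heq
      have hs1 := hskip.1
      exact hskip.2 i (by omega) hadj
    · rintro ⟨hskip, heven⟩ heq
      rw [B1, if_pos heven] at heq
      have hs1 := hskip.1
      exact hskip.2 i (by omega) hadj
  · rintro ⟨hne, h1, h2, h3, h4, h5⟩
    obtain ⟨adjmin, hmn⟩ := adj_mn G vp hne
    obtain ⟨adjmax, hMx⟩ := adj_Mx G vp hne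
    have hM2 : Mx G vp u ≤ mn G vp u + 2 := by
      rw [hmn, hMx]; exact hU _ _ adjmax adjmin
    have hmM : mn G vp u ≤ Mx G vp u := by
      rw [hmn, hMx]
      exact Fin.le_def.mp (Finset.min'_le _ _ (Finset.max'_mem _ hne))
    have hiM : (i : ℕ) ≤ Mx G vp u := by
      by_cases ho : Odd (Mx G vp u)
      · rw [B0, if_pos ho] at h2; exact h2
      · rw [B1, if_pos (Nat.not_odd_iff_even.mp ho)] at h4; exact h4
    by_cases him : (i : ℕ) = mn G vp u
    · have : i = (nbrs G vp u).min' hne := Fin.ext (by omega)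
      rw [this]; exact adjmin
    by_cases hiMx : (i : ℕ) = Mx G vp u
    · have : i = (nbrs G vp u).max' hne := Fin.ext (by omega)
      rw [this]; exact adjmax
    have hmid : Mx G vp u = mn G vp u + 2 ∧ (i : ℕ) = mn G vp u + 1 := by omega
    by_contra hadj
    have hskip : skip G vp u := by
      refine ⟨hmid.1, fun j hj => ?_⟩
      have : j = i := Fin.ext (by omega)
      rw [this]; exact hadj
    rcases Nat.even_or_odd (Mx G vp u) with he | ho
    · have := h5 ⟨hskip, he⟩
      rw [B1, if_pos he] at this; omega
    · have := h3 ⟨hskip, ho⟩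
      rw [B0, if_pos ho] at this; omega

noncomputable def A (u : V) : ℝ :=
  if (nbrs G vp u).Nonempty then (mn G vp u : ℝ) + 1/2 else (p : ℝ) + 5

open Classical in
noncomputable def lo (v : V) : Fin 3 → ℝ :=
  if h : ∃ i, vp i = v then
    ![ (((Classical.choose h : Fin (p+1)) : ℕ) : ℝ)
         + (if Even ((Classical.choose h : Fin (p+1)) : ℕ) then 3/2 else 0),
       -((p : ℝ) + 10),
       t - Real.exp (-(((Classical.choose h : Fin (p+1)) : ℕ) : ℝ)) ]
  else
    ![ -((p : ℝ) + 10),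
       -((B1 G vp v : ℝ) + (if sk1 G vp v then 0 else 1/2)),
       t - Real.exp (-(A G vp v)) ]

open Classical in
noncomputable def hi (v : V) : Fin 3 → ℝ :=
  if h : ∃ i, vp i = v then
    ![ (p : ℝ) + 10,
       -((((Classical.choose h : Fin (p+1)) : ℕ) : ℝ)
           + (if Odd ((Classical.choose h : Fin (p+1)) : ℕ) then 3/2 else 0)),
       t - Real.exp (-((((Classical.choose h : Fin (p+1)) : ℕ) : ℝ) + 1)) ]
  else
    ![ (B0 G vp v : ℝ) + (if sk0 G vp v then 0 else 1/2),
       1,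
       t ]

lemma shift0_eq (u : V) (j : ℕ) :
    (if Even j then (3/2 : ℝ) else 0) =
      (if (Even j ↔ Even (B0 G vp u)) then 0 else 3/2) := by
  have hB : ¬ Even (B0 G vp u) := Nat.not_even_iff_odd.mpr (odd_B0 G vp u)
  by_cases hj : Even j <;> simp [hj, hB]

lemma shift1_eq (u : V) (j : ℕ) :
    (if Odd j then (3/2 : ℝ) else 0) =
      (if (Even j ↔ Even (B1 G vp u)) then 0 else 3/2) := by
  have hB : Even (B1 G vp u) := even_B1 G vp u
  by_cases hj : Even j
  · rw [if_neg (by simp [Nat.not_odd_iff_even, hj]), if_pos (by simp [hj, hB])]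
  · rw [if_pos (Nat.not_even_iff_odd.mp hj), if_neg (by simp [hj, hB])]

end BoxAux

namespace BoxAux

variable {V : Type*} (G : SimpleGraph V) {p : ℕ} (vp : Fin (p + 1) → V) (t : ℝ)

lemma mixed (hinj : Function.Injective vp) {u : V} (j : Fin (p + 1))
    (hU : ∀ i j : Fin (p+1), G.Adj u (vp i) → G.Adj u (vp j) → (i : ℕ) ≤ (j : ℕ) + 2)
    (hu : ¬ ∃ i, vp i = u) :
    (G.Adj u (vp j) ↔ (Set.Icc (lo G vp t u) (hi G vp t u) ∩
      Set.Icc (lo G vp t (vp j)) (hi G vp t (vp j))).Nonempty) := by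
  have hv : ∃ i, vp i = vp j := ⟨j, rfl⟩
  rw [Set.Icc_inter_Icc, Set.nonempty_Icc, Pi.le_def, forall_fin3]
  simp only [lo, hi]
  rw [dif_neg hu, dif_pos hv, dif_neg hu, dif_pos hv]
  rw [hinj (Classical.choose_spec hv)]
  rw [adj_iff_nat G vp hU j]
  simp only [Pi.sup_apply, Pi.inf_apply, sup_le_iff, le_inf_iff, Matrix.cons_val_zero,
    Matrix.cons_val_one, Matrix.head_cons, Matrix.cons_val_two, Matrix.tail_cons]
  have hjp : ((j : ℕ) : ℝ) ≤ (p : ℝ) := by exact_mod_cast Nat.lt_succ_iff.mp j.isLt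
  have hB0 : (0:ℝ) ≤ (B0 G vp u : ℝ) := Nat.cast_nonneg _
  have hB1 : (0:ℝ) ≤ (B1 G vp u : ℝ) := Nat.cast_nonneg _
  have hp0 : (0:ℝ) ≤ (p : ℝ) := Nat.cast_nonneg _
  constructor
  · rintro ⟨hne, h1, h2, h3, h4, h5⟩
    refine ⟨⟨⟨?_, ?_⟩, ?_, ?_⟩, ⟨⟨?_, ?_⟩, ?_, ?_⟩, ⟨?_, ?_⟩, ?_, ?_⟩
    · split_ifs <;> linarith
    · rw [shift0_eq G vp u (j : ℕ)]
      exact (@keyIneq (j:ℕ) (B0 G vp u) (sk0 G vp u) (Classical.propDecidable _)).mpr ⟨h2, h3⟩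
    · linarith
    · split_ifs <;> linarith
    · split_ifs <;> linarith
    · linarith
    · apply neg_le_neg
      rw [shift1_eq G vp u (j : ℕ)]
      exact (@keyIneq (j:ℕ) (B1 G vp u) (sk1 G vp u) (Classical.propDecidable _)).mpr ⟨h4, h5⟩
    · split_ifs <;> linarith
    · linarith [Real.exp_pos (-(A G vp u))]
    · linarith [Real.exp_pos (-((j : ℕ) : ℝ))]
    · refine fle_iff.mpr ?_
      simp only [A, if_pos hne]
      exact half_le_iff.mpr h1
    · exact fle_iff.mpr (by linarith)
  · rintro ⟨⟨⟨-, hc03⟩, -, -⟩, ⟨⟨-, -⟩, hc12, -⟩, ⟨-, -⟩, hc22, -⟩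
    have hne : (nbrs G vp u).Nonempty := by
      by_contra hne
      simp only [A, if_neg hne] at hc22
      have := fle_iff.mp hc22
      linarith
    simp only [A, if_pos hne] at hc22
    have h1 : mn G vp u ≤ (j : ℕ) := half_le_iff.mp (fle_iff.mp hc22)
    rw [shift0_eq G vp u (j : ℕ)] at hc03
    obtain ⟨h2, h3⟩ := (@keyIneq (j:ℕ) (B0 G vp u) (sk0 G vp u) (Classical.propDecidable _)).mp hc03
    have hc12' := neg_le_neg_iff.mp hc12
    rw [shift1_eq G vp u (j : ℕ)] at hc12'
    obtain ⟨h4, h5⟩ := (@keyIneq (j:ℕ) (B1 G vp u) (sk1 G vp u) (Classical.propDecidable _)).mp hc12'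
    exact ⟨hne, h1, h2, h3, h4, h5⟩

lemma pathpath (hinj : Function.Injective vp)
    (hpath : ∀ i j : Fin (p + 1),
      G.Adj (vp i) (vp j) ↔ ((i : ℕ) + 1 = (j : ℕ) ∨ (j : ℕ) + 1 = (i : ℕ)))
    (i j : Fin (p + 1)) (hij : i ≠ j) :
    (G.Adj (vp i) (vp j) ↔ (Set.Icc (lo G vp t (vp i)) (hi G vp t (vp i)) ∩
      Set.Icc (lo G vp t (vp j)) (hi G vp t (vp j))).Nonempty) := by
  have hvi : ∃ k, vp k = vp i := ⟨i, rfl⟩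
  have hvj : ∃ k, vp k = vp j := ⟨j, rfl⟩
  rw [Set.Icc_inter_Icc, Set.nonempty_Icc, Pi.le_def, forall_fin3]
  simp only [lo, hi]
  rw [dif_pos hvi, dif_pos hvj, dif_pos hvi, dif_pos hvj]
  rw [hinj (Classical.choose_spec hvi), hinj (Classical.choose_spec hvj)]
  rw [hpath i j]
  simp only [Pi.sup_apply, Pi.inf_apply, sup_le_iff, le_inf_iff, Matrix.cons_val_zero,
    Matrix.cons_val_one, Matrix.head_cons, Matrix.cons_val_two, Matrix.tail_cons]
  have hip : ((i : ℕ) : ℝ) ≤ (p : ℝ) := by exact_mod_cast Nat.lt_succ_iff.mp i.isLt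
  have hjp : ((j : ℕ) : ℝ) ≤ (p : ℝ) := by exact_mod_cast Nat.lt_succ_iff.mp j.isLt
  have hijn : (i : ℕ) ≠ (j : ℕ) := fun e => hij (Fin.ext e)
  constructor
  · intro hc
    have hab : ((i : ℕ) : ℝ) ≤ ((j : ℕ) : ℝ) + 1 := by
      have : (i : ℕ) ≤ (j : ℕ) + 1 := by omega
      exact_mod_cast this
    have hba : ((j : ℕ) : ℝ) ≤ ((i : ℕ) : ℝ) + 1 := by
      have : (j : ℕ) ≤ (i : ℕ) + 1 := by omega
      exact_mod_cast this
    refine ⟨⟨⟨?_, ?_⟩, ?_, ?_⟩, ⟨⟨?_, ?_⟩, ?_, ?_⟩, ⟨?_, ?_⟩, ?_, ?_⟩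
    · split_ifs <;> linarith
    · split_ifs <;> linarith
    · split_ifs <;> linarith
    · split_ifs <;> linarith
    · split_ifs <;> linarith
    · split_ifs <;> linarith
    · split_ifs <;> linarith
    · split_ifs <;> linarith
    · exact fle_iff.mpr (by linarith)
    · exact fle_iff.mpr hba
    · exact fle_iff.mpr hab
    · exact fle_iff.mpr (by linarith)
  · rintro ⟨-, -, ⟨-, hc22⟩, hc23, -⟩
    have h1 : (j : ℕ) ≤ (i : ℕ) + 1 := by
      have := fle_iff.mp hc22
      exact_mod_cast this
    have h2 : (i : ℕ) ≤ (j : ℕ) + 1 := by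
      have := fle_iff.mp hc23
      exact_mod_cast this
    omega

lemma cliqueclique {u w : V} (hadj : G.Adj u w)
    (hu : ¬ ∃ i, vp i = u) (hw : ¬ ∃ i, vp i = w) :
    (G.Adj u w ↔ (Set.Icc (lo G vp t u) (hi G vp t u) ∩
      Set.Icc (lo G vp t w) (hi G vp t w)).Nonempty) := by
  rw [Set.Icc_inter_Icc, Set.nonempty_Icc, Pi.le_def, forall_fin3]
  simp only [lo, hi]
  rw [dif_neg hu, dif_neg hw, dif_neg hu, dif_neg hw]
  simp only [Pi.sup_apply, Pi.inf_apply, sup_le_iff, le_inf_iff, Matrix.cons_val_zero,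
    Matrix.cons_val_one, Matrix.head_cons, Matrix.cons_val_two, Matrix.tail_cons]
  have hB0u : (0:ℝ) ≤ (B0 G vp u : ℝ) := Nat.cast_nonneg _
  have hB0w : (0:ℝ) ≤ (B0 G vp w : ℝ) := Nat.cast_nonneg _
  have hB1u : (0:ℝ) ≤ (B1 G vp u : ℝ) := Nat.cast_nonneg _
  have hB1w : (0:ℝ) ≤ (B1 G vp w : ℝ) := Nat.cast_nonneg _
  have hp0 : (0:ℝ) ≤ (p : ℝ) := Nat.cast_nonneg _
  refine iff_of_true hadj ⟨⟨⟨?_, ?_⟩, ?_, ?_⟩, ⟨⟨?_, ?_⟩, ?_, ?_⟩, ⟨?_, ?_⟩, ?_, ?_⟩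
  · split_ifs <;> linarith
  · split_ifs <;> linarith
  · split_ifs <;> linarith
  · split_ifs <;> linarith
  · split_ifs <;> linarith
  · split_ifs <;> linarith
  · split_ifs <;> linarith
  · split_ifs <;> linarith
  · linarith [Real.exp_pos (-(A G vp u))]
  · linarith [Real.exp_pos (-(A G vp w))]
  · linarith [Real.exp_pos (-(A G vp u))]
  · linarith [Real.exp_pos (-(A G vp w))]

end BoxAux

/-- Let the vertex set of `G` be partitioned into a clique `K = (Set.range vp)ᶜ` and a
set `P` inducing a path `vp 0, vp 1, …, vp p`, such that any two neighbors in `P` of a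
vertex of `K` are at distance at most two along the path. Then for any real `t`, `G` has
a `3`-box representation whose third intervals end exactly at `t` for the vertices of
`K`, and strictly before `t` for the vertices of `P`. -/
theorem boxRep_clique_path {V : Type*} [Fintype V] (G : SimpleGraph V)
    (p : ℕ) (vp : Fin (p + 1) → V) (hinj : Function.Injective vp)
    (hpath : ∀ i j : Fin (p + 1),
      G.Adj (vp i) (vp j) ↔ ((i : ℕ) + 1 = (j : ℕ) ∨ (j : ℕ) + 1 = (i : ℕ)))
    (hclique : ∀ u w : V, u ∉ Set.range vp → w ∉ Set.range vp → u ≠ w → G.Adj u w)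
    (hnbrs : ∀ u : V, u ∉ Set.range vp → ∀ i j : Fin (p + 1),
      G.Adj u (vp i) → G.Adj u (vp j) → (i : ℕ) ≤ (j : ℕ) + 2)
    (t : ℝ) :
    ∃ lo hi : V → Fin 3 → ℝ, IsBoxRep G lo hi ∧
      (∀ u : V, u ∉ Set.range vp → hi u 2 = t) ∧
      (∀ i : Fin (p + 1), hi (vp i) 2 < t) := by
  classical
  refine ⟨BoxAux.lo G vp t, BoxAux.hi G vp t, ⟨?_, ?_⟩, ?_, ?_⟩
  · -- lo ≤ hi
    intro v
    rw [Pi.le_def, BoxAux.forall_fin3]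
    by_cases h : ∃ i, vp i = v
    · simp only [BoxAux.lo, BoxAux.hi]
      rw [dif_pos h, dif_pos h]
      simp only [Matrix.cons_val_zero, Matrix.cons_val_one, Matrix.head_cons,
        Matrix.cons_val_two, Matrix.tail_cons]
      have hip : (((Classical.choose h : Fin (p+1)) : ℕ) : ℝ) ≤ (p : ℝ) := by
        exact_mod_cast Nat.lt_succ_iff.mp (Classical.choose h).isLt
      refine ⟨?_, ?_, ?_⟩
      · split_ifs <;> linarith
      · split_ifs <;> linarith
      · have := Real.exp_le_exp.mpr
          (show -((((Classical.choose h : Fin (p+1)) : ℕ) : ℝ) + 1) ≤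
            -(((Classical.choose h : Fin (p+1)) : ℕ) : ℝ) by linarith)
        linarith
    · simp only [BoxAux.lo, BoxAux.hi]
      rw [dif_neg h, dif_neg h]
      simp only [Matrix.cons_val_zero, Matrix.cons_val_one, Matrix.head_cons,
        Matrix.cons_val_two, Matrix.tail_cons]
      have h0 : (0:ℝ) ≤ (BoxAux.B0 G vp v : ℝ) := Nat.cast_nonneg _
      have h1 : (0:ℝ) ≤ (BoxAux.B1 G vp v : ℝ) := Nat.cast_nonneg _
      have hp0 : (0:ℝ) ≤ (p : ℝ) := Nat.cast_nonneg _
      refine ⟨?_, ?_, ?_⟩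
      · split_ifs <;> linarith
      · split_ifs <;> linarith
      · linarith [Real.exp_pos (-(BoxAux.A G vp v))]
  · -- adjacency
    intro u v huv
    by_cases hu : ∃ i, vp i = u <;> by_cases hv : ∃ j, vp j = v
    · obtain ⟨i, rfl⟩ := hu
      obtain ⟨j, rfl⟩ := hv
      exact BoxAux.pathpath G vp t hinj hpath i j (fun e => huv (congrArg vp e))
    · -- u path, v clique
      obtain ⟨i, rfl⟩ := hu
      have hv' : v ∉ Set.range vp := fun hr => hv (Set.mem_range.mp hr)
      rw [G.adj_comm, Set.inter_comm]
      exact BoxAux.mixed G vp t hinj i (hnbrs v hv') hv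
    · obtain ⟨j, rfl⟩ := hv
      have hu' : u ∉ Set.range vp := fun hr => hu (Set.mem_range.mp hr)
      exact BoxAux.mixed G vp t hinj j (hnbrs u hu') hu
    · have hu' : u ∉ Set.range vp := fun hr => hu (Set.mem_range.mp hr)
      have hv' : v ∉ Set.range vp := fun hr => hv (Set.mem_range.mp hr)
      exact BoxAux.cliqueclique G vp t (hclique u v hu' hv' huv) hu hv
  · intro u hu
    have h : ¬ ∃ i, vp i = u := fun ⟨i, hi⟩ => hu ⟨i, hi⟩
    simp only [BoxAux.hi]
    rw [dif_neg h]
    simp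
  · intro i
    have h : ∃ j, vp j = vp i := ⟨i, rfl⟩
    simp only [BoxAux.hi]
    rw [dif_pos h]
    simp only [Matrix.cons_val_two, Matrix.tail_cons, Matrix.head_cons]
    linarith [Real.exp_pos (-((((Classical.choose h : Fin (p+1)) : ℕ) : ℝ) + 1))]
end
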